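/- arXiv:1811.02559 — 13 statements merged into one kernel-verified Lean document; each statement's English description precedes it below -/
import Mathlib

section
/- Let φ : (0,∞) → (0,∞) be a smooth positive function satisfying the steady-soliton ODE φ(r)·φ''(r) − (1/2)·φ'(r)² + r⁻²·(1−φ(r))·(r·φ'(r) + 2φ(r)) = 0 for all r > 0, and suppose there is a constant C₀ such that for all r ≥ 1: |φ(r) − r⁻² − 2r⁻⁴| ≤ C₀·r⁻⁶, |φ'(r) + 2r⁻³ + 8r⁻⁵| ≤ C₀·r⁻⁷, and |φ''(r) − 6r⁻⁴ − 40r⁻⁶| ≤ C₀·r⁻⁸. Let ζ be a smooth function on (0, 9/8] such that s ↦ (s⁻²−1)⁻¹·ζ(s) has derivative (s⁻²−1)⁻²·(2s⁻³ − 5s⁻⁶ − (1/2)·s²⁷) at every s ∈ (0,1)∪(1,9/8), and such that |ζ(s)| ≤ C₀·s⁻³, |ζ'(s)| ≤ C₀·s⁻⁴, |ζ''(s)| ≤ C₀·s⁻⁵ for all s ∈ (0,9/8]. Then there exists a constant N ≥ 1 such that for every a ≥ N, the function ψ_a(s) := φ(a·s) − a⁻² + a⁻⁴·ζ(s) satisfies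 the strict differential inequality ψ_a(s)·ψ_a''(s) − (1/2)·ψ_a'(s)² + s⁻²·(1 − ψ_a(s))·(s·ψ_a'(s) + 2ψ_a(s)) − s·ψ_a'(s) < 0 for all s ∈ [N·a⁻¹, 9/8]. -/
set_option maxHeartbeats 6000000

private lemma mb1 {c P X u D : ℝ} (hc : 0 ≤ c) (hP : 0 ≤ P) (hPX : P ≤ X)
    (hu : |u| ≤ D) (hX : 0 ≤ X) : c*P*u ≤ c*D*X := by
  have hD : 0 ≤ D := (abs_nonneg u).trans hu
  calc c*P*u ≤ c*P*D := by
        have := le_trans (le_abs_self u) hu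
        nlinarith [mul_nonneg hc hP]
    _ = c*D*P := by ring
    _ ≤ c*D*X := mul_le_mul_of_nonneg_left hPX (mul_nonneg hc hD)

private lemma ab2 {x y C : ℝ} (hx : |x| ≤ C) (hy : |y| ≤ C) : |x*y| ≤ C^2 := by
  have hC : 0 ≤ C := (abs_nonneg x).trans hx
  rw [abs_mul]; nlinarith [abs_nonneg x, abs_nonneg y]

private lemma mb2 {P Q N t : ℝ} (hP : 0 ≤ P) (hn : N ≤ t) (he : P*t = Q) : P*N ≤ Q :=
  he ▸ mul_le_mul_of_nonneg_left hn hP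

private lemma powN {N a s : ℝ} (hN1 : 1 ≤ N) (ha : N ≤ a) (has : N ≤ a*s) (hs : 0 < s) :
    N ≤ a^2 ∧ N ≤ a^2*s ∧ N ≤ a^2*s^2 ∧ N ≤ a^4*s^3 ∧ N ≤ a^4*s^4 ∧ N ≤ a^6*s^6 := by
  have ha1 : (1:ℝ) ≤ a := le_trans hN1 ha
  have ha0 : (0:ℝ) < a := by linarith
  have hr1 : (1:ℝ) ≤ a*s := le_trans hN1 has
  have hr0 : (0:ℝ) < a*s := by linarith
  have h3 : N ≤ (a*s)^3 := le_trans has (le_self_pow₀ hr1 (by norm_num))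
  refine ⟨?_, ?_, ?_, ?_, ?_, ?_⟩
  · nlinarith
  · nlinarith [mul_le_mul has ha1 (by norm_num : (0:ℝ) ≤ 1) hr0.le]
  · nlinarith [le_trans has (le_self_pow₀ hr1 two_ne_zero)]
  · nlinarith [mul_le_mul h3 ha1 (by norm_num : (0:ℝ) ≤ 1) (by positivity : (0:ℝ) ≤ (a*s)^3)]
  · nlinarith [le_trans has (le_self_pow₀ hr1 (by norm_num : (4:ℕ) ≠ 0))]
  · nlinarith [le_trans has (le_self_pow₀ hr1 (by norm_num : (6:ℕ) ≠ 0))]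

private lemma key (C N a s u0 u1 u2 w w1 w2 : ℝ) (hC : 0 ≤ C) (hN1 : 1 ≤ N)
    (hNK : 2*(40 + 67*C + 14*C^2) ≤ N)
    (ha : N ≤ a) (has : N ≤ a*s) (hs : 0 < s) (hs9 : s ≤ 9/8)
    (hb0 : |u0| ≤ C) (hb1 : |u1| ≤ C) (hb2 : |u2| ≤ C)
    (hc0 : |w| ≤ C) (hc1 : |w1| ≤ C) (hc2 : |w2| ≤ C)
    (hODE : 2*a^6*s^6*u0 + a^6*s^6*u1 + 40*a^6*s^6 + 4*a^4*s^4*u0 + a^4*s^4*u1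
        + a^4*s^4*u2 + 56*a^4*s^4 + 40*a^2*s^2*u0 + 6*a^2*s^2*u1 + 2*a^2*s^2*u2
        - 2*u0^2 - u0*u1 + u0*u2 - (1/2)*u1^2 = 0)
    (hzid : (1 - s^2)*w1 + 2*w = 2*s^3 - 5 - (1/2)*s^33) :
    (-2)*a^8*s^12 + (-1)*a^8*s^11*w1 + (4)*a^8*s^10 + (2)*a^8*s^9*w + (1)*a^8*s^9*w1
      + (4)*a^6*s^9*w + (1)*a^6*s^9*w1 + (-1)*a^6*s^9*w2 + (-1)*a^6*s^8*u1 + (-40)*a^6*s^8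
      + (4)*a^6*s^7*w + (1)*a^6*s^7*w1 + (1)*a^6*s^7*w2 + (2)*a^6*s^6*u0 + (1)*a^6*s^6*u1
      + (40)*a^6*s^6 + (4)*a^4*s^6*u0 + (1)*a^4*s^6*u1 + (-1)*a^4*s^6*u2 + (-2)*a^4*s^6*w^2
      + (-1)*a^4*s^6*w*w1 + (1)*a^4*s^6*w*w2 + (-1/2)*a^4*s^6*w1^2 + (40)*a^4*s^5*w
      + (6)*a^4*s^5*w1 + (2)*a^4*s^5*w2 + (4)*a^4*s^4*u0 + (1)*a^4*s^4*u1 + (1)*a^4*s^4*u2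
      + (56)*a^4*s^4 + (-4)*a^2*s^3*u0*w + (-1)*a^2*s^3*u0*w1 + (1)*a^2*s^3*u0*w2
      + (-1)*a^2*s^3*u1*w + (-1)*a^2*s^3*u1*w1 + (1)*a^2*s^3*u2*w + (40)*a^2*s^2*u0
      + (6)*a^2*s^2*u1 + (2)*a^2*s^2*u2 + (-2)*u0^2 + (-1)*u0*u1 + (1)*u0*u2
      + (-1/2)*u1^2 < 0 := by
  have hN0 : (0:ℝ) < N := by linarith
  have ha1 : (1:ℝ) ≤ a := le_trans hN1 ha
  have ha0 : (0:ℝ) < a := by linarith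
  obtain ⟨n69, n68, n67, n46, n45, n23⟩ := powN hN1 ha has hs
  have ap : ∀ k : ℕ, (0:ℝ) ≤ a^k := fun k => pow_nonneg ha0.le k
  have sp : ∀ k : ℕ, (0:ℝ) ≤ s^k := fun k => pow_nonneg hs.le k
  set X := a^8*s^9/N with hX
  have hX0 : (0:ℝ) < X := by rw [hX]; positivity
  have hB69 : a^6*s^9 ≤ X := by rw [hX, le_div_iff₀ hN0]; exact mb2 (mul_nonneg (ap 6) (sp 9)) n69 (by ring)
  have hB68 : a^6*s^8 ≤ X := by rw [hX, le_div_iff₀ hN0]; exact mb2 (mul_nonneg (ap 6) (sp 8)) n68 (by ring)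
  have hB67 : a^6*s^7 ≤ X := by rw [hX, le_div_iff₀ hN0]; exact mb2 (mul_nonneg (ap 6) (sp 7)) n67 (by ring)
  have hB46 : a^4*s^6 ≤ X := by rw [hX, le_div_iff₀ hN0]; exact mb2 (mul_nonneg (ap 4) (sp 6)) n46 (by ring)
  have hB45 : a^4*s^5 ≤ X := by rw [hX, le_div_iff₀ hN0]; exact mb2 (mul_nonneg (ap 4) (sp 5)) n45 (by ring)
  have hB23 : a^2*s^3 ≤ X := by rw [hX, le_div_iff₀ hN0]; exact mb2 (mul_nonneg (ap 2) (sp 3)) n23 (by ring)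
  have hm01 : (4:ℝ)*(a^6*s^9)*w ≤ (4)*C*X := mb1 (by norm_num) (mul_nonneg (ap 6) (sp 9)) hB69 hc0 hX0.le
  have hm02 : (1:ℝ)*(a^6*s^9)*w1 ≤ (1)*C*X := mb1 (by norm_num) (mul_nonneg (ap 6) (sp 9)) hB69 hc1 hX0.le
  have hm03 : (1:ℝ)*(a^6*s^9)*(-w2) ≤ (1)*C*X := mb1 (by norm_num) (mul_nonneg (ap 6) (sp 9)) hB69 (by rw [abs_neg]; exact hc2) hX0.le
  have hm04 : (1:ℝ)*(a^6*s^8)*(-u1) ≤ (1)*C*X := mb1 (by norm_num) (mul_nonneg (ap 6) (sp 8)) hB68 (by rw [abs_neg]; exact hb1) hX0.le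
  have hm05 : (-40:ℝ)*(a^6*s^8) ≤ 0 := by linarith [mul_nonneg (ap 6) (sp 8)]
  have hm06 : (4:ℝ)*(a^6*s^7)*w ≤ (4)*C*X := mb1 (by norm_num) (mul_nonneg (ap 6) (sp 7)) hB67 hc0 hX0.le
  have hm07 : (1:ℝ)*(a^6*s^7)*w1 ≤ (1)*C*X := mb1 (by norm_num) (mul_nonneg (ap 6) (sp 7)) hB67 hc1 hX0.le
  have hm08 : (1:ℝ)*(a^6*s^7)*w2 ≤ (1)*C*X := mb1 (by norm_num) (mul_nonneg (ap 6) (sp 7)) hB67 hc2 hX0.le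
  have hm09 : (4:ℝ)*(a^4*s^6)*u0 ≤ (4)*C*X := mb1 (by norm_num) (mul_nonneg (ap 4) (sp 6)) hB46 hb0 hX0.le
  have hm10 : (1:ℝ)*(a^4*s^6)*u1 ≤ (1)*C*X := mb1 (by norm_num) (mul_nonneg (ap 4) (sp 6)) hB46 hb1 hX0.le
  have hm11 : (1:ℝ)*(a^4*s^6)*(-u2) ≤ (1)*C*X := mb1 (by norm_num) (mul_nonneg (ap 4) (sp 6)) hB46 (by rw [abs_neg]; exact hb2) hX0.le
  have hm12 : (2:ℝ)*(a^4*s^6)*(-(w*w)) ≤ (2)*C^2*X := mb1 (by norm_num) (mul_nonneg (ap 4) (sp 6)) hB46 (by rw [abs_neg]; exact ab2 hc0 hc0) hX0.le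
  have hm13 : (1:ℝ)*(a^4*s^6)*(-(w*w1)) ≤ (1)*C^2*X := mb1 (by norm_num) (mul_nonneg (ap 4) (sp 6)) hB46 (by rw [abs_neg]; exact ab2 hc0 hc1) hX0.le
  have hm14 : (1:ℝ)*(a^4*s^6)*(w*w2) ≤ (1)*C^2*X := mb1 (by norm_num) (mul_nonneg (ap 4) (sp 6)) hB46 (ab2 hc0 hc2) hX0.le
  have hm15 : (1/2:ℝ)*(a^4*s^6)*(-(w1*w1)) ≤ (1/2)*C^2*X := mb1 (by norm_num) (mul_nonneg (ap 4) (sp 6)) hB46 (by rw [abs_neg]; exact ab2 hc1 hc1) hX0.le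
  have hm16 : (40:ℝ)*(a^4*s^5)*w ≤ (40)*C*X := mb1 (by norm_num) (mul_nonneg (ap 4) (sp 5)) hB45 hc0 hX0.le
  have hm17 : (6:ℝ)*(a^4*s^5)*w1 ≤ (6)*C*X := mb1 (by norm_num) (mul_nonneg (ap 4) (sp 5)) hB45 hc1 hX0.le
  have hm18 : (2:ℝ)*(a^4*s^5)*w2 ≤ (2)*C*X := mb1 (by norm_num) (mul_nonneg (ap 4) (sp 5)) hB45 hc2 hX0.le
  have hm19 : (4:ℝ)*(a^2*s^3)*(-(u0*w)) ≤ (4)*C^2*X := mb1 (by norm_num) (mul_nonneg (ap 2) (sp 3)) hB23 (by rw [abs_neg]; exact ab2 hb0 hc0) hX0.le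
  have hm20 : (1:ℝ)*(a^2*s^3)*(-(u0*w1)) ≤ (1)*C^2*X := mb1 (by norm_num) (mul_nonneg (ap 2) (sp 3)) hB23 (by rw [abs_neg]; exact ab2 hb0 hc1) hX0.le
  have hm21 : (1:ℝ)*(a^2*s^3)*(u0*w2) ≤ (1)*C^2*X := mb1 (by norm_num) (mul_nonneg (ap 2) (sp 3)) hB23 (ab2 hb0 hc2) hX0.le
  have hm22 : (1:ℝ)*(a^2*s^3)*(-(u1*w)) ≤ (1)*C^2*X := mb1 (by norm_num) (mul_nonneg (ap 2) (sp 3)) hB23 (by rw [abs_neg]; exact ab2 hb1 hc0) hX0.le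
  have hm23 : (1:ℝ)*(a^2*s^3)*(-(u1*w1)) ≤ (1)*C^2*X := mb1 (by norm_num) (mul_nonneg (ap 2) (sp 3)) hB23 (by rw [abs_neg]; exact ab2 hb1 hc1) hX0.le
  have hm24 : (1:ℝ)*(a^2*s^3)*(u2*w) ≤ (1)*C^2*X := mb1 (by norm_num) (mul_nonneg (ap 2) (sp 3)) hB23 (ab2 hb2 hc0) hX0.le
  have hRes : (4:ℝ)*a^6*s^9*w + a^6*s^9*w1 - a^6*s^9*w2 - a^6*s^8*u1 - 40*a^6*s^8
      + 4*a^6*s^7*w + a^6*s^7*w1 + a^6*s^7*w2 + 4*a^4*s^6*u0 + a^4*s^6*u1 - a^4*s^6*u2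
      - 2*a^4*s^6*w^2 - a^4*s^6*w*w1 + a^4*s^6*w*w2 - (1/2)*a^4*s^6*w1^2 + 40*a^4*s^5*w
      + 6*a^4*s^5*w1 + 2*a^4*s^5*w2 - 4*a^2*s^3*u0*w - a^2*s^3*u0*w1 + a^2*s^3*u0*w2
      - a^2*s^3*u1*w - a^2*s^3*u1*w1 + a^2*s^3*u2*w
      ≤ (67*C + (27/2)*C^2)*X := by
    linarith [hm01, hm02, hm03, hm04, hm05, hm06, hm07, hm08, hm09, hm10, hm11, hm12,
      hm13, hm14, hm15, hm16, hm17, hm18, hm19, hm20, hm21, hm22, hm23, hm24]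
  have hM : 4*a^8*s^10 - 5*a^8*s^9 - (1/2)*a^8*s^42 < -(1/2)*(a^8*s^9) := by
    linarith [mul_nonneg (mul_nonneg (ap 8) (sp 9)) (sub_nonneg.2 hs9),
      mul_pos (pow_pos ha0 8) (pow_pos hs 42)]
  have h1 : 67*C + (27/2)*C^2 ≤ N/2 := by linarith [sq_nonneg C]
  have hKX : (67*C + (27/2)*C^2)*X ≤ (1/2)*(a^8*s^9) := by
    calc (67*C + (27/2)*C^2)*X ≤ (N/2)*X := mul_le_mul_of_nonneg_right h1 hX0.le
      _ = (1/2)*(a^8*s^9) := by rw [hX]; field_simp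
  calc (-2)*a^8*s^12 + (-1)*a^8*s^11*w1 + (4)*a^8*s^10 + (2)*a^8*s^9*w + (1)*a^8*s^9*w1
      + (4)*a^6*s^9*w + (1)*a^6*s^9*w1 + (-1)*a^6*s^9*w2 + (-1)*a^6*s^8*u1 + (-40)*a^6*s^8
      + (4)*a^6*s^7*w + (1)*a^6*s^7*w1 + (1)*a^6*s^7*w2 + (2)*a^6*s^6*u0 + (1)*a^6*s^6*u1
      + (40)*a^6*s^6 + (4)*a^4*s^6*u0 + (1)*a^4*s^6*u1 + (-1)*a^4*s^6*u2 + (-2)*a^4*s^6*w^2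
      + (-1)*a^4*s^6*w*w1 + (1)*a^4*s^6*w*w2 + (-1/2)*a^4*s^6*w1^2 + (40)*a^4*s^5*w
      + (6)*a^4*s^5*w1 + (2)*a^4*s^5*w2 + (4)*a^4*s^4*u0 + (1)*a^4*s^4*u1 + (1)*a^4*s^4*u2
      + (56)*a^4*s^4 + (-4)*a^2*s^3*u0*w + (-1)*a^2*s^3*u0*w1 + (1)*a^2*s^3*u0*w2
      + (-1)*a^2*s^3*u1*w + (-1)*a^2*s^3*u1*w1 + (1)*a^2*s^3*u2*w + (40)*a^2*s^2*u0
      + (6)*a^2*s^2*u1 + (2)*a^2*s^2*u2 + (-2)*u0^2 + (-1)*u0*u1 + (1)*u0*u2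
      + (-1/2)*u1^2
      = (4*a^8*s^10 - 5*a^8*s^9 - (1/2)*a^8*s^42)
        + ((4:ℝ)*a^6*s^9*w + a^6*s^9*w1 - a^6*s^9*w2 - a^6*s^8*u1 - 40*a^6*s^8
      + 4*a^6*s^7*w + a^6*s^7*w1 + a^6*s^7*w2 + 4*a^4*s^6*u0 + a^4*s^6*u1 - a^4*s^6*u2
      - 2*a^4*s^6*w^2 - a^4*s^6*w*w1 + a^4*s^6*w*w2 - (1/2)*a^4*s^6*w1^2 + 40*a^4*s^5*w
      + 6*a^4*s^5*w1 + 2*a^4*s^5*w2 - 4*a^2*s^3*u0*w - a^2*s^3*u0*w1 + a^2*s^3*u0*w2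
      - a^2*s^3*u1*w - a^2*s^3*u1*w1 + a^2*s^3*u2*w) := by linear_combination hODE + (a^8*s^9)*hzid
    _ < -(1/2)*(a^8*s^9) + (1/2)*(a^8*s^9) := by
        have h2 : ((4:ℝ)*a^6*s^9*w + a^6*s^9*w1 - a^6*s^9*w2 - a^6*s^8*u1 - 40*a^6*s^8
      + 4*a^6*s^7*w + a^6*s^7*w1 + a^6*s^7*w2 + 4*a^4*s^6*u0 + a^4*s^6*u1 - a^4*s^6*u2
      - 2*a^4*s^6*w^2 - a^4*s^6*w*w1 + a^4*s^6*w*w2 - (1/2)*a^4*s^6*w1^2 + 40*a^4*s^5*w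
      + 6*a^4*s^5*w1 + 2*a^4*s^5*w2 - 4*a^2*s^3*u0*w - a^2*s^3*u0*w1 + a^2*s^3*u0*w2
      - a^2*s^3*u1*w - a^2*s^3*u1*w1 + a^2*s^3*u2*w) ≤ (1/2)*(a^8*s^9) := le_trans hRes hKX
        linarith [hM, h2]
    _ = 0 := by ring

set_option maxHeartbeats 6000000

/-- Lemma 2.2 (outer barrier construction): if `φ` is the profile of Bryant's
singular steady soliton (with the stated asymptotics) and `ζ` is the correction
term solving the indicated ODE, then for a sufficiently large constant `N`, the
function `ψ_a(s) = φ(a·s) − a⁻² + a⁻⁴·ζ(s)` is a strict supersolution of the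
self-similar barrier inequality on `[N·a⁻¹, 9/8]` for every `a ≥ N`. -/
theorem stmt_0
    (φ : ℝ → ℝ)
    (hφpos : ∀ r > (0:ℝ), 0 < φ r)
    (hφsmooth : ContDiffOn ℝ (⊤ : ℕ∞) φ (Set.Ioi 0))
    (hφode : ∀ r > (0:ℝ),
      φ r * deriv (deriv φ) r - (1/2) * (deriv φ r)^2
        + (r^2)⁻¹ * (1 - φ r) * (r * deriv φ r + 2 * φ r) = 0)
    (C₀ : ℝ)
    (hφasym : ∀ r ≥ (1:ℝ), |φ r - (r^2)⁻¹ - 2 * (r^4)⁻¹| ≤ C₀ * (r^6)⁻¹)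
    (hφ'asym : ∀ r ≥ (1:ℝ), |deriv φ r + 2 * (r^3)⁻¹ + 8 * (r^5)⁻¹| ≤ C₀ * (r^7)⁻¹)
    (hφ''asym : ∀ r ≥ (1:ℝ), |deriv (deriv φ) r - 6 * (r^4)⁻¹ - 40 * (r^6)⁻¹| ≤ C₀ * (r^8)⁻¹)
    (ζ : ℝ → ℝ)
    (hζsmooth : ContDiffOn ℝ (⊤ : ℕ∞) ζ (Set.Ioc 0 (9/8)))
    (hζode : ∀ s ∈ Set.Ioo (0:ℝ) 1 ∪ Set.Ioo (1:ℝ) (9/8),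
      HasDerivAt (fun s : ℝ => ((s^2)⁻¹ - 1)⁻¹ * ζ s)
        ((((s^2)⁻¹ - 1)^2)⁻¹ * (2 * (s^3)⁻¹ - 5 * (s^6)⁻¹ - (1/2) * s^27)) s)
    (hζbound : ∀ s ∈ Set.Ioc (0:ℝ) (9/8),
      |ζ s| ≤ C₀ * (s^3)⁻¹
        ∧ |derivWithin ζ (Set.Ioc 0 (9/8)) s| ≤ C₀ * (s^4)⁻¹
        ∧ |derivWithin (derivWithin ζ (Set.Ioc 0 (9/8))) (Set.Ioc 0 (9/8)) s| ≤ C₀ * (s^5)⁻¹) :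
    ∃ N : ℝ, 1 ≤ N ∧ ∀ a : ℝ, N ≤ a → ∀ ψ : ℝ → ℝ,
      (∀ s, ψ s = φ (a * s) - (a^2)⁻¹ + (a^4)⁻¹ * ζ s) →
      ∀ s ∈ Set.Icc (N * a⁻¹) (9/8 : ℝ),
        ψ s * derivWithin (derivWithin ψ (Set.Ioc 0 (9/8))) (Set.Ioc 0 (9/8)) s
          - (1/2) * (derivWithin ψ (Set.Ioc 0 (9/8)) s)^2
          + (s^2)⁻¹ * (1 - ψ s) * (s * derivWithin ψ (Set.Ioc 0 (9/8)) s + 2 * ψ s)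
          - s * derivWithin ψ (Set.Ioc 0 (9/8)) s < 0 := by
  have hC : 0 ≤ C₀ := by
    have h := hφasym 1 le_rfl
    have := abs_nonneg (φ 1 - ((1:ℝ)^2)⁻¹ - 2 * ((1:ℝ)^4)⁻¹)
    norm_num at h
    linarith
  set S : Set ℝ := Set.Ioc (0:ℝ) (9/8) with hS
  have hUD : UniqueDiffOn ℝ S := uniqueDiffOn_Ioc 0 (9/8)
  have hφdOn : DifferentiableOn ℝ φ (Set.Ioi 0) := hφsmooth.differentiableOn (by simp)
  have hφ'cd : ContDiffOn ℝ (⊤ : ℕ∞) (deriv φ) (Set.Ioi 0) :=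
    hφsmooth.deriv_of_isOpen isOpen_Ioi (by simp)
  have hφ'dOn : DifferentiableOn ℝ (deriv φ) (Set.Ioi 0) := hφ'cd.differentiableOn (by simp)
  have hφat : ∀ r : ℝ, 0 < r → HasDerivAt φ (deriv φ r) r := fun r hr =>
    ((hφdOn r hr).differentiableAt (isOpen_Ioi.mem_nhds hr)).hasDerivAt
  have hφ'at : ∀ r : ℝ, 0 < r → HasDerivAt (deriv φ) (deriv (deriv φ) r) r := fun r hr =>
    ((hφ'dOn r hr).differentiableAt (isOpen_Ioi.mem_nhds hr)).hasDerivAt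
  have hζdOn : DifferentiableOn ℝ ζ S := hζsmooth.differentiableOn (by simp)
  have hζ1cd : ContDiffOn ℝ (⊤ : ℕ∞) (derivWithin ζ S) S := hζsmooth.derivWithin hUD (by simp)
  have hζ1dOn : DifferentiableOn ℝ (derivWithin ζ S) S := hζ1cd.differentiableOn (by simp)
  have hζD : ∀ x ∈ S, HasDerivWithinAt ζ (derivWithin ζ S x) S x := fun x hx =>
    (hζdOn x hx).hasDerivWithinAt
  have hζ1D : ∀ x ∈ S, HasDerivWithinAt (derivWithin ζ S)
      (derivWithin (derivWithin ζ S) S x) S x := fun x hx => (hζ1dOn x hx).hasDerivWithinAt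
  have hstep : ∀ x ∈ Set.Ioo (0:ℝ) 1 ∪ Set.Ioo (1:ℝ) (9/8),
      (x^4 - x^6) * derivWithin ζ S x + 2*x^3*(ζ x) = 2*x^3 - 5 - (1/2)*x^33 := by
    intro x hx
    have hx0 : 0 < x := by
      rcases hx with h|h
      · exact h.1
      · linarith [h.1]
    have hx9 : x ≤ 9/8 := by
      rcases hx with h|h
      · linarith [h.2]
      · linarith [h.2]
    have hx1 : x ≠ 1 := by
      rcases hx with h|h
      · exact ne_of_lt h.2
      · exact ne_of_gt h.1
    have hxS : x ∈ S := ⟨hx0, hx9⟩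
    have hxne : x ≠ 0 := hx0.ne'
    have hx2ne : (x:ℝ)^2 ≠ 0 := by positivity
    have hx2 : x^2 ≠ 1 := by
      intro h
      apply hx1
      have h' : (x-1)*(x+1) = 0 := by linear_combination h
      rcases mul_eq_zero.1 h' with h''|h''
      · linarith
      · linarith
    have hune : ((x^2)⁻¹ - 1) ≠ 0 := by
      intro h
      apply hx2
      have h' : (x^2)⁻¹ = 1 := by linarith
      exact inv_eq_one.1 h'
    have h1mx2 : 1 - x^2 ≠ 0 := by
      intro h
      exact hx2 (by linarith)
    have hder := (((hasDerivAt_pow 2 x).inv hx2ne).sub_const 1).inv hune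
    have hprod := hder.hasDerivWithinAt.mul (hζD x hxS)
    have eqv := (hprod.derivWithin (hUD x hxS)).symm.trans
      (((hζode x hx).hasDerivWithinAt).derivWithin (hUD x hxS))
    simp only [Pi.inv_apply] at eqv
    field_simp at eqv
    have hE : ((x^4-x^6)*(derivWithin ζ S x) + 2*x^3*(ζ x) - (2*x^3 - 5 - (1/2)*x^33))
        * (2*x^7*(1-x^2)^3) = 0 := by
      linear_combination (x^7*(1-x^2)^3) * eqv
    rcases mul_eq_zero.1 hE with h | h
    · linarith
    · exact absurd h (by positivity)
  have hzfun : ∀ x ∈ S, (x^4 - x^6) * derivWithin ζ S x + 2*x^3*(ζ x)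
      = 2*x^3 - 5 - (1/2)*x^33 := by
    intro x hxS
    by_cases hxT : x ∈ Set.Ioo (0:ℝ) 1 ∪ Set.Ioo (1:ℝ) (9/8)
    · exact hstep x hxT
    have hPc : ContinuousWithinAt
        (fun y => (y^4 - y^6) * derivWithin ζ S y + 2*y^3*ζ y
          - (2*y^3 - 5 - (1/2)*y^33)) S x := by
      apply ContinuousWithinAt.sub
      · apply ContinuousWithinAt.add
        · exact (Continuous.continuousWithinAt (by continuity)).mul
            ((hζ1cd.continuousOn).continuousWithinAt hxS)
        · exact (Continuous.continuousWithinAt (by continuity)).mul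
            ((hζsmooth.continuousOn).continuousWithinAt hxS)
      · exact Continuous.continuousWithinAt (by continuity)
    have hsub : Set.Ioo (0:ℝ) 1 ∪ Set.Ioo (1:ℝ) (9/8) ⊆ S := by
      intro y hy
      rcases hy with h|h
      · exact ⟨h.1, by linarith [h.2]⟩
      · exact ⟨by linarith [h.1], h.2.le⟩
    have hclo : x ∈ closure (Set.Ioo (0:ℝ) 1 ∪ Set.Ioo (1:ℝ) (9/8)) := by
      rw [closure_union, closure_Ioo (by norm_num : (0:ℝ) ≠ 1),
        closure_Ioo (by norm_num : (1:ℝ) ≠ 9/8)]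
      rcases le_or_gt x 1 with h|h
      · exact Or.inl ⟨hxS.1.le, h⟩
      · exact Or.inr ⟨h.le, hxS.2⟩
    haveI hnb : (nhdsWithin x (Set.Ioo (0:ℝ) 1 ∪ Set.Ioo (1:ℝ) (9/8))).NeBot :=
      mem_closure_iff_nhdsWithin_neBot.1 hclo
    have h1 : Filter.Tendsto
        (fun y => (y^4 - y^6) * derivWithin ζ S y + 2*y^3*ζ y
          - (2*y^3 - 5 - (1/2)*y^33))
        (nhdsWithin x (Set.Ioo (0:ℝ) 1 ∪ Set.Ioo (1:ℝ) (9/8)))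
        (nhds ((x^4 - x^6) * derivWithin ζ S x + 2*x^3*ζ x
          - (2*x^3 - 5 - (1/2)*x^33))) := (hPc.mono hsub).tendsto
    have hev : (fun _ : ℝ => (0:ℝ)) =ᶠ[nhdsWithin x (Set.Ioo (0:ℝ) 1 ∪ Set.Ioo (1:ℝ) (9/8))]
        (fun y => (y^4 - y^6) * derivWithin ζ S y + 2*y^3*ζ y
          - (2*y^3 - 5 - (1/2)*y^33)) := by
      filter_upwards [self_mem_nhdsWithin] with y hy
      have := hstep y hy
      linarith
    have h2 : Filter.Tendsto
        (fun y => (y^4 - y^6) * derivWithin ζ S y + 2*y^3*ζ y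
          - (2*y^3 - 5 - (1/2)*y^33))
        (nhdsWithin x (Set.Ioo (0:ℝ) 1 ∪ Set.Ioo (1:ℝ) (9/8))) (nhds 0) :=
      Filter.Tendsto.congr' hev tendsto_const_nhds
    have hPx := tendsto_nhds_unique h1 h2
    linarith
  refine ⟨2*(40 + 67*C₀ + 14*C₀^2) + 1, by nlinarith [sq_nonneg C₀, hC], ?_⟩
  set N : ℝ := 2*(40 + 67*C₀ + 14*C₀^2) + 1 with hN
  have hN1 : (1:ℝ) ≤ N := by rw [hN]; nlinarith [sq_nonneg C₀, hC]
  have hNK : 2*(40 + 67*C₀ + 14*C₀^2) ≤ N := by rw [hN]; linarith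
  intro a haN ψ hψ s hsmem
  have hN0 : (0:ℝ) < N := by linarith
  have ha1 : (1:ℝ) ≤ a := le_trans hN1 haN
  have ha0 : (0:ℝ) < a := by linarith
  obtain ⟨hsl, hs9⟩ := hsmem
  have hs0 : (0:ℝ) < s := lt_of_lt_of_le (by positivity) hsl
  have has : N ≤ a*s := by
    have h' := mul_le_mul_of_nonneg_right hsl ha0.le
    rw [mul_assoc, inv_mul_cancel₀ ha0.ne', mul_one] at h'
    exact le_of_le_of_eq h' (mul_comm s a)
  have hr0 : (0:ℝ) < a*s := by positivity
  have hr1 : (1:ℝ) ≤ a*s := le_trans hN1 has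
  have hsS : s ∈ S := ⟨hs0, hs9⟩
  -- first derivative of ψ on S
  have hψD : ∀ x ∈ S, HasDerivWithinAt ψ
      (a * deriv φ (a*x) + (a^4)⁻¹ * derivWithin ζ S x) S x := by
    intro x hx
    have hax : 0 < a*x := by have := hx.1; positivity
    have h1 : HasDerivAt (fun y : ℝ => φ (a*y)) (a * deriv φ (a*x)) x := by
      have hi : HasDerivAt (fun y : ℝ => a*y) a x := by
        simpa using (hasDerivAt_id x).const_mul a
      have := (hφat (a*x) hax).comp x hi
      simpa [mul_comm, Function.comp_def] using this
    have h2 : HasDerivWithinAt (fun y => φ (a*y) - (a^2)⁻¹ + (a^4)⁻¹ * ζ y)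
        (a * deriv φ (a*x) + (a^4)⁻¹ * derivWithin ζ S x) S x :=
      (h1.hasDerivWithinAt.sub_const _).add ((hζD x hx).const_mul _)
    have hfe : ψ = fun y => φ (a*y) - (a^2)⁻¹ + (a^4)⁻¹ * ζ y := funext hψ
    rw [hfe]
    exact h2
  have hD1 : ∀ x ∈ S, derivWithin ψ S x
      = a * deriv φ (a*x) + (a^4)⁻¹ * derivWithin ζ S x := fun x hx =>
    (hψD x hx).derivWithin (hUD x hx)
  have hD2 : derivWithin (derivWithin ψ S) S s
      = a^2 * deriv (deriv φ) (a*s) + (a^4)⁻¹ * derivWithin (derivWithin ζ S) S s := by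
    have hcongr : derivWithin (derivWithin ψ S) S s
        = derivWithin (fun x => a * deriv φ (a*x) + (a^4)⁻¹ * derivWithin ζ S x) S s :=
      derivWithin_congr (fun x hx => hD1 x hx) (hD1 s hsS)
    rw [hcongr]
    have h1 : HasDerivAt (fun y : ℝ => deriv φ (a*y)) (a * deriv (deriv φ) (a*s)) s := by
      have hi : HasDerivAt (fun y : ℝ => a*y) a s := by
        simpa using (hasDerivAt_id s).const_mul a
      have := (hφ'at (a*s) hr0).comp s hi
      simpa [mul_comm, Function.comp_def] using this
    have h2 : HasDerivWithinAt (fun x => a * deriv φ (a*x) + (a^4)⁻¹ * derivWithin ζ S x)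
        (a * (a * deriv (deriv φ) (a*s)) + (a^4)⁻¹ * derivWithin (derivWithin ζ S) S s) S s :=
      ((h1.const_mul a).hasDerivWithinAt).add ((hζ1D s hsS).const_mul _)
    rw [h2.derivWithin (hUD s hsS)]
    ring
  -- abbreviations
  have hψs := hψ s
  have hD1s := hD1 s hsS
  set F : ℝ := φ (a*s) with hF
  set F1 : ℝ := deriv φ (a*s) with hF1
  set F2 : ℝ := deriv (deriv φ) (a*s) with hF2
  set Z : ℝ := ζ s with hZ
  set Z1 : ℝ := derivWithin ζ S s with hZ1
  set Z2 : ℝ := derivWithin (derivWithin ζ S) S s with hZ2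
  set U0 : ℝ := (a*s)^6*F - (a*s)^4 - 2*(a*s)^2 with hU0
  set U1 : ℝ := (a*s)^7*F1 + 2*(a*s)^4 + 8*(a*s)^2 with hU1
  set U2 : ℝ := (a*s)^8*F2 - 6*(a*s)^4 - 40*(a*s)^2 with hU2
  set W0 : ℝ := s^3*Z with hW0
  set W1 : ℝ := s^4*Z1 with hW1
  set W2 : ℝ := s^5*Z2 with hW2
  have hb0 : |U0| ≤ C₀ := by
    have h := hφasym (a*s) hr1
    rw [hU0, hF]
    have e : (a*s)^6*(φ (a*s)) - (a*s)^4 - 2*(a*s)^2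
        = (a*s)^6 * (φ (a*s) - ((a*s)^2)⁻¹ - 2*((a*s)^4)⁻¹) := by
      have h4 : ((a*s):ℝ)^4 * (((a*s))^4)⁻¹ = 1 := mul_inv_cancel₀ (by positivity)
      have h2 : ((a*s):ℝ)^2 * (((a*s))^2)⁻¹ = 1 := mul_inv_cancel₀ (by positivity)
      linear_combination ((a*s)^4)*h2 + (2*(a*s)^2)*h4
    rw [e, abs_mul, abs_of_pos (pow_pos hr0 6)]
    calc (a*s)^6 * |φ (a*s) - ((a*s)^2)⁻¹ - 2*((a*s)^4)⁻¹|
        ≤ (a*s)^6 * (C₀ * ((a*s)^6)⁻¹) := mul_le_mul_of_nonneg_left h (pow_pos hr0 6).le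
      _ = C₀ := by
        rw [mul_comm C₀, ← mul_assoc, mul_inv_cancel₀ (by positivity : (a*s:ℝ)^6 ≠ 0), one_mul]
  have hb1 : |U1| ≤ C₀ := by
    have h := hφ'asym (a*s) hr1
    rw [hU1, hF1]
    have e : (a*s)^7*(deriv φ (a*s)) + 2*(a*s)^4 + 8*(a*s)^2
        = (a*s)^7 * (deriv φ (a*s) + 2*((a*s)^3)⁻¹ + 8*((a*s)^5)⁻¹) := by
      have h3 : ((a*s):ℝ)^3 * (((a*s))^3)⁻¹ = 1 := mul_inv_cancel₀ (by positivity)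
      have h5 : ((a*s):ℝ)^5 * (((a*s))^5)⁻¹ = 1 := mul_inv_cancel₀ (by positivity)
      linear_combination (-2*(a*s)^4)*h3 + (-8*(a*s)^2)*h5
    rw [e, abs_mul, abs_of_pos (pow_pos hr0 7)]
    calc (a*s)^7 * |deriv φ (a*s) + 2*((a*s)^3)⁻¹ + 8*((a*s)^5)⁻¹|
        ≤ (a*s)^7 * (C₀ * ((a*s)^7)⁻¹) := mul_le_mul_of_nonneg_left h (pow_pos hr0 7).le
      _ = C₀ := by
        rw [mul_comm C₀, ← mul_assoc, mul_inv_cancel₀ (by positivity : (a*s:ℝ)^7 ≠ 0), one_mul]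
  have hb2 : |U2| ≤ C₀ := by
    have h := hφ''asym (a*s) hr1
    rw [hU2, hF2]
    have e : (a*s)^8*(deriv (deriv φ) (a*s)) - 6*(a*s)^4 - 40*(a*s)^2
        = (a*s)^8 * (deriv (deriv φ) (a*s) - 6*((a*s)^4)⁻¹ - 40*((a*s)^6)⁻¹) := by
      have h4 : ((a*s):ℝ)^4 * (((a*s))^4)⁻¹ = 1 := mul_inv_cancel₀ (by positivity)
      have h6 : ((a*s):ℝ)^6 * (((a*s))^6)⁻¹ = 1 := mul_inv_cancel₀ (by positivity)
      linear_combination (6*(a*s)^4)*h4 + (40*(a*s)^2)*h6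
    rw [e, abs_mul, abs_of_pos (pow_pos hr0 8)]
    calc (a*s)^8 * |deriv (deriv φ) (a*s) - 6*((a*s)^4)⁻¹ - 40*((a*s)^6)⁻¹|
        ≤ (a*s)^8 * (C₀ * ((a*s)^8)⁻¹) := mul_le_mul_of_nonneg_left h (pow_pos hr0 8).le
      _ = C₀ := by
        rw [mul_comm C₀, ← mul_assoc, mul_inv_cancel₀ (by positivity : (a*s:ℝ)^8 ≠ 0), one_mul]
  have hc0 : |W0| ≤ C₀ := by
    have h := (hζbound s hsS).1
    rw [hW0, hZ, abs_mul, abs_of_pos (pow_pos hs0 3)]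
    calc s^3 * |ζ s| ≤ s^3 * (C₀ * (s^3)⁻¹) := mul_le_mul_of_nonneg_left h (pow_pos hs0 3).le
      _ = C₀ := by
        rw [mul_comm C₀, ← mul_assoc, mul_inv_cancel₀ (by positivity : (s:ℝ)^3 ≠ 0), one_mul]
  have hc1 : |W1| ≤ C₀ := by
    have h := (hζbound s hsS).2.1
    rw [hW1, hZ1, abs_mul, abs_of_pos (pow_pos hs0 4)]
    calc s^4 * |derivWithin ζ S s| ≤ s^4 * (C₀ * (s^4)⁻¹) :=
        mul_le_mul_of_nonneg_left h (pow_pos hs0 4).le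
      _ = C₀ := by
        rw [mul_comm C₀, ← mul_assoc, mul_inv_cancel₀ (by positivity : (s:ℝ)^4 ≠ 0), one_mul]
  have hc2 : |W2| ≤ C₀ := by
    have h := (hζbound s hsS).2.2
    rw [hW2, hZ2, abs_mul, abs_of_pos (pow_pos hs0 5)]
    calc s^5 * |derivWithin (derivWithin ζ S) S s| ≤ s^5 * (C₀ * (s^5)⁻¹) :=
        mul_le_mul_of_nonneg_left h (pow_pos hs0 5).le
      _ = C₀ := by
        rw [mul_comm C₀, ← mul_assoc, mul_inv_cancel₀ (by positivity : (s:ℝ)^5 ≠ 0), one_mul]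
  have hODE : 2*a^6*s^6*U0 + a^6*s^6*U1 + 40*a^6*s^6 + 4*a^4*s^4*U0 + a^4*s^4*U1
      + a^4*s^4*U2 + 56*a^4*s^4 + 40*a^2*s^2*U0 + 6*a^2*s^2*U1 + 2*a^2*s^2*U2
      - 2*U0^2 - U0*U1 + U0*U2 - (1/2)*U1^2 = 0 := by
    have h := hφode (a*s) hr0
    have h2 : ((a*s):ℝ)^2 * (((a*s))^2)⁻¹ = 1 := mul_inv_cancel₀ (by positivity)
    rw [hU0, hU1, hU2, hF, hF1, hF2]
    linear_combination (a*s)^14 * h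
      - (1 - φ (a*s))*((a*s)*(deriv φ (a*s)) + 2*(φ (a*s)))*(a*s)^12 * h2
  have hzid : (1 - s^2)*W1 + 2*W0 = 2*s^3 - 5 - (1/2)*s^33 := by
    rw [hW1, hW0, hZ1, hZ]
    linear_combination hzfun s hsS
  have hkey := key C₀ N a s U0 U1 U2 W0 W1 W2 hC hN1 hNK haN has hs0 hs9
    hb0 hb1 hb2 hc0 hc1 hc2 hODE hzid
  rw [hψs, hD1s, hD2]
  have hfac : (F - (a^2)⁻¹ + (a^4)⁻¹ * Z) * (a^2 * F2 + (a^4)⁻¹ * Z2)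
      - (1/2) * (a * F1 + (a^4)⁻¹ * Z1)^2
      + (s^2)⁻¹ * (1 - (F - (a^2)⁻¹ + (a^4)⁻¹ * Z))
        * (s * (a * F1 + (a^4)⁻¹ * Z1) + 2 * (F - (a^2)⁻¹ + (a^4)⁻¹ * Z))
      - s * (a * F1 + (a^4)⁻¹ * Z1)
      = (a^12*s^14)⁻¹ * ((-2)*a^8*s^12 + (-1)*a^8*s^11*W1 + (4)*a^8*s^10 + (2)*a^8*s^9*W0 + (1)*a^8*s^9*W1
      + (4)*a^6*s^9*W0 + (1)*a^6*s^9*W1 + (-1)*a^6*s^9*W2 + (-1)*a^6*s^8*U1 + (-40)*a^6*s^8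
      + (4)*a^6*s^7*W0 + (1)*a^6*s^7*W1 + (1)*a^6*s^7*W2 + (2)*a^6*s^6*U0 + (1)*a^6*s^6*U1
      + (40)*a^6*s^6 + (4)*a^4*s^6*U0 + (1)*a^4*s^6*U1 + (-1)*a^4*s^6*U2 + (-2)*a^4*s^6*W0^2
      + (-1)*a^4*s^6*W0*W1 + (1)*a^4*s^6*W0*W2 + (-1/2)*a^4*s^6*W1^2 + (40)*a^4*s^5*W0
      + (6)*a^4*s^5*W1 + (2)*a^4*s^5*W2 + (4)*a^4*s^4*U0 + (1)*a^4*s^4*U1 + (1)*a^4*s^4*U2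
      + (56)*a^4*s^4 + (-4)*a^2*s^3*U0*W0 + (-1)*a^2*s^3*U0*W1 + (1)*a^2*s^3*U0*W2
      + (-1)*a^2*s^3*U1*W0 + (-1)*a^2*s^3*U1*W1 + (1)*a^2*s^3*U2*W0 + (40)*a^2*s^2*U0
      + (6)*a^2*s^2*U1 + (2)*a^2*s^2*U2 + (-2)*U0^2 + (-1)*U0*U1 + (1)*U0*U2
      + (-1/2)*U1^2) := by
    rw [hU0, hU1, hU2, hW0, hW1, hW2]
    field_simp
    ring
  rw [hfac]
  exact mul_neg_of_pos_of_neg (by positivity) hkey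
end

section
/- Let φ : (0,∞) → (0,∞) be a smooth positive function satisfying the steady-soliton ODE φ(r)·φ''(r) − (1/2)·φ'(r)² + r⁻²·(1−φ(r))·(r·φ'(r) + 2φ(r)) = 0 for all r > 0. Let 0 < r_* < N be fixed, and let β be a twice continuously differentiable function on [r_*, N] satisfying the linear ODE φ(r)·β''(r) + φ''(r)·β(r) − φ'(r)·β'(r) + r⁻²·(1−φ(r))·(r·β'(r) + 2β(r)) − r⁻²·β(r)·(r·φ'(r) + 2φ(r)) = −1 for all r ∈ [r_*, N]. Then there exists a₀ ≥ 1 such that for every a ≥ a₀ the function ψ_a(s) := φ(a·s) + a⁻¹·β(a·s) satisfies ψ_a(s)·ψ_a''(s) − (1/2)·ψ_a'(s)² + s⁻²·(1 − ψ_a(s))·(s·ψ_a'(s) + 2ψ_a(s)) − s·ψ_a'(s) < 0 for all s ∈ [r_*·a⁻¹, N·a⁻¹]. -/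
private lemma key_algebra (a c s w p p' p'' b b' b'' : ℝ) (hc : c * a = 1)
    (hE0 : p*p'' - (1/2)*p'^2 + w*(1-p)*((a*s)*p' + 2*p) = 0)
    (hE1 : p*b'' + p''*b - p'*b' + w*(1-p)*((a*s)*b'+2*b) - w*b*((a*s)*p'+2*p) = -1) :
    (p + c*b)*(a^2*p'' + a*b'') - (1/2)*(a*p' + b')^2
      + (a^2*w)*(1-(p+c*b))*(s*(a*p'+b') + 2*(p+c*b)) - s*(a*p'+b')
      = -a + (b*b'' - (1/2)*b'^2 - w*b*((a*s)*b'+2*b) - (a*s)*p') - c*((a*s)*b') := by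
  linear_combination a^2*hE0 + a*hE1 +
    (a*b*p'' + b*b'' + s*b' + 2*a*w*b - 4*a*w*p*b - a^2*s*w*b*p' - a*s*w*b*b' - 2*w*b^2*(a*c+1)) * hc

set_option maxHeartbeats 1600000 in
/-- Lemma 2.3 (inner barrier construction): if `φ` is the profile of Bryant's
singular steady soliton and `β` is a C² solution of the inhomogeneous linearized
soliton equation on `[r_*, N]`, then for all sufficiently large `a`, the function
`ψ_a(s) = φ(a·s) + a⁻¹·β(a·s)` is a strict supersolution of the self-similar
barrier inequality on `[r_*·a⁻¹, N·a⁻¹]`. -/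
theorem stmt_1
    (φ : ℝ → ℝ)
    (hφpos : ∀ r > (0:ℝ), 0 < φ r)
    (hφsmooth : ContDiffOn ℝ (⊤ : ℕ∞) φ (Set.Ioi 0))
    (hφode : ∀ r > (0:ℝ),
      φ r * deriv (deriv φ) r - (1/2) * (deriv φ r)^2
        + (r^2)⁻¹ * (1 - φ r) * (r * deriv φ r + 2 * φ r) = 0)
    (rs N : ℝ) (hrs : 0 < rs) (hrsN : rs < N)
    (β : ℝ → ℝ)
    (hβC2 : ContDiffOn ℝ 2 β (Set.Icc rs N))
    (hβode : ∀ r ∈ Set.Icc rs N,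
      φ r * derivWithin (derivWithin β (Set.Icc rs N)) (Set.Icc rs N) r
        + deriv (deriv φ) r * β r
        - deriv φ r * derivWithin β (Set.Icc rs N) r
        + (r^2)⁻¹ * (1 - φ r) * (r * derivWithin β (Set.Icc rs N) r + 2 * β r)
        - (r^2)⁻¹ * β r * (r * deriv φ r + 2 * φ r) = -1) :
    ∃ a₀ : ℝ, 1 ≤ a₀ ∧ ∀ a : ℝ, a₀ ≤ a → ∀ ψ : ℝ → ℝ,
      (∀ s, ψ s = φ (a * s) + a⁻¹ * β (a * s)) →
      ∀ s ∈ Set.Icc (rs * a⁻¹) (N * a⁻¹),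
        ψ s * derivWithin (derivWithin ψ (Set.Icc (rs * a⁻¹) (N * a⁻¹)))
              (Set.Icc (rs * a⁻¹) (N * a⁻¹)) s
          - (1/2) * (derivWithin ψ (Set.Icc (rs * a⁻¹) (N * a⁻¹)) s)^2
          + (s^2)⁻¹ * (1 - ψ s)
              * (s * derivWithin ψ (Set.Icc (rs * a⁻¹) (N * a⁻¹)) s + 2 * ψ s)
          - s * derivWithin ψ (Set.Icc (rs * a⁻¹) (N * a⁻¹)) s < 0 := by
  set I : Set ℝ := Set.Icc rs N with hI
  have hUI : UniqueDiffOn ℝ I := uniqueDiffOn_Icc hrsN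
  set b1 : ℝ → ℝ := derivWithin β I with hb1
  set b2 : ℝ → ℝ := derivWithin b1 I with hb2
  -- regularity facts
  have hsubIoi : I ⊆ Set.Ioi (0:ℝ) := fun r hr => lt_of_lt_of_le hrs hr.1
  have hβdiff : DifferentiableOn ℝ β I := hβC2.differentiableOn (by norm_num)
  have hb1C1 : ContDiffOn ℝ 1 b1 I := hβC2.derivWithin hUI (by norm_num)
  have hb1diff : DifferentiableOn ℝ b1 I := hb1C1.differentiableOn (by norm_num)
  have hb1cont : ContinuousOn b1 I := hb1C1.continuousOn
  have hb2cont : ContinuousOn b2 I := hb1C1.continuousOn_derivWithin hUI le_rfl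
  have hβcont : ContinuousOn β I := hβC2.continuousOn
  have hφ'cd : ContDiffOn ℝ (⊤ : ℕ∞) (deriv φ) (Set.Ioi 0) :=
    hφsmooth.deriv_of_isOpen isOpen_Ioi (by simp)
  have hφd : ∀ r > (0:ℝ), HasDerivAt φ (deriv φ r) r := fun r hr =>
    ((hφsmooth.contDiffAt (isOpen_Ioi.mem_nhds hr)).differentiableAt (by simp)).hasDerivAt
  have hφ'd : ∀ r > (0:ℝ), HasDerivAt (deriv φ) (deriv (deriv φ) r) r := fun r hr =>
    ((hφ'cd.contDiffAt (isOpen_Ioi.mem_nhds hr)).differentiableAt (by simp)).hasDerivAt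
  have hφ'cont : ContinuousOn (deriv φ) I := (hφ'cd.continuousOn).mono hsubIoi
  -- bounds
  have hinvcont : ContinuousOn (fun r : ℝ => (r^2)⁻¹) I :=
    (continuousOn_id.pow 2).inv₀ (fun r hr => pow_ne_zero 2 (ne_of_gt (hsubIoi hr)))
  have hFcont : ContinuousOn
      (fun r => β r * b2 r - (1/2)*(b1 r)^2 - (r^2)⁻¹ * β r * (r * b1 r + 2 * β r)
        - r * deriv φ r) I := by
    exact (((hβcont.mul hb2cont).sub
      ((continuousOn_const.mul (hb1cont.pow 2)))).sub
      (((hinvcont.mul hβcont).mul ((continuousOn_id.mul hb1cont).add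
        (continuousOn_const.mul hβcont))))).sub (continuousOn_id.mul hφ'cont)
  have hGcont : ContinuousOn (fun r => r * b1 r) I := continuousOn_id.mul hb1cont
  have hIc : IsCompact I := isCompact_Icc
  obtain ⟨M1, hM1⟩ := hIc.exists_bound_of_continuousOn hFcont
  obtain ⟨M2, hM2⟩ := hIc.exists_bound_of_continuousOn hGcont
  set M : ℝ := max M1 M2 with hM
  have hMnn : 0 ≤ M := by
    have := hM1 rs ⟨le_rfl, le_of_lt hrsN⟩
    exact le_trans (le_trans (norm_nonneg _) this) (le_max_left _ _)
  refine ⟨2*M + 1, by linarith, ?_⟩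
  intro a ha ψ hψ
  have ha1 : (1:ℝ) ≤ a := by linarith
  have ha0 : 0 < a := by linarith
  have hane : a ≠ 0 := ne_of_gt ha0
  have hψe : ψ = fun t => φ (a*t) + a⁻¹ * β (a*t) := funext hψ
  subst hψe
  set S : Set ℝ := Set.Icc (rs * a⁻¹) (N * a⁻¹) with hS
  have hSlt : rs * a⁻¹ < N * a⁻¹ := by
    exact mul_lt_mul_of_pos_right hrsN (inv_pos.mpr ha0)
  have hUS : UniqueDiffOn ℝ S := uniqueDiffOn_Icc hSlt
  have hmap : ∀ t ∈ S, a * t ∈ I := by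
    intro t ht
    constructor
    · have := ht.1
      calc rs = rs * a⁻¹ * a := by field_simp
        _ ≤ t * a := by nlinarith
        _ = a * t := mul_comm _ _
    · have := ht.2
      calc a * t = t * a := mul_comm _ _
        _ ≤ N * a⁻¹ * a := by nlinarith
        _ = N := by field_simp
  have hmapsTo : Set.MapsTo (fun t : ℝ => a * t) S I := fun t ht => hmap t ht
  have hlin : ∀ t : ℝ, HasDerivAt (fun x => a * x) a t := by
    intro t
    simpa using (hasDerivAt_id t).const_mul a
  -- first derivative
  set g : ℝ → ℝ := fun t => a * deriv φ (a*t) + b1 (a*t) with hg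
  have hgd : ∀ t ∈ S, HasDerivWithinAt (fun t => φ (a*t) + a⁻¹ * β (a*t)) (g t) S t := by
    intro t ht
    have hrpos : 0 < a * t := hsubIoi (hmap t ht)
    have h1 : HasDerivAt (fun t => φ (a*t)) (deriv φ (a*t) * a) t :=
      (hφd (a*t) hrpos).comp t (hlin t)
    have h2 : HasDerivWithinAt (fun t => β (a*t)) (b1 (a*t) * a) S t :=
      ((hβdiff (a*t) (hmap t ht)).hasDerivWithinAt).comp t (hlin t).hasDerivWithinAt hmapsTo
    have := h1.hasDerivWithinAt.add (h2.const_mul a⁻¹)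
    refine this.congr_deriv ?_
    field_simp [hg]
    ring
  have hd1 : ∀ t ∈ S, derivWithin (fun t => φ (a*t) + a⁻¹ * β (a*t)) S t = g t :=
    fun t ht => (hgd t ht).derivWithin (hUS t ht)
  -- second derivative
  have hgd2 : ∀ t ∈ S, HasDerivWithinAt g
      (a^2 * deriv (deriv φ) (a*t) + a * b2 (a*t)) S t := by
    intro t ht
    have hrpos : 0 < a * t := hsubIoi (hmap t ht)
    have h1 : HasDerivAt (fun t => deriv φ (a*t)) (deriv (deriv φ) (a*t) * a) t :=
      (hφ'd (a*t) hrpos).comp t (hlin t)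
    have h2 : HasDerivWithinAt (fun t => b1 (a*t)) (b2 (a*t) * a) S t :=
      ((hb1diff (a*t) (hmap t ht)).hasDerivWithinAt).comp t (hlin t).hasDerivWithinAt hmapsTo
    have := (h1.hasDerivWithinAt.const_mul a).add h2
    refine this.congr_deriv ?_
    ring
  have hd2 : ∀ t ∈ S, derivWithin (derivWithin (fun t => φ (a*t) + a⁻¹ * β (a*t)) S) S t
      = a^2 * deriv (deriv φ) (a*t) + a * b2 (a*t) := by
    intro t ht
    have : derivWithin (derivWithin (fun t => φ (a*t) + a⁻¹ * β (a*t)) S) S t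
        = derivWithin g S t := derivWithin_congr hd1 (hd1 t ht)
    rw [this]
    exact (hgd2 t ht).derivWithin (hUS t ht)
  -- main estimate
  intro s hs
  have hrmem : a * s ∈ I := hmap s hs
  have hrpos : 0 < a * s := hsubIoi hrmem
  have hspos : 0 < s := by
    have : 0 < rs * a⁻¹ := mul_pos hrs (inv_pos.mpr ha0)
    linarith [hs.1]
  rw [hd1 s hs, hd2 s hs]
  have hc : a⁻¹ * a = 1 := inv_mul_cancel₀ hane
  have hE0 := hφode (a*s) hrpos
  have hE1 := hβode (a*s) hrmem
  have hw : ((s:ℝ)^2)⁻¹ = a^2 * (((a*s))^2)⁻¹ := by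
    field_simp
  have hkey := key_algebra a a⁻¹ s (((a*s))^2)⁻¹ (φ (a*s)) (deriv φ (a*s))
    (deriv (deriv φ) (a*s)) (β (a*s)) (b1 (a*s)) (b2 (a*s)) hc
    (by linear_combination hE0) (by linear_combination hE1)
  have hgoal : (fun t => φ (a*t) + a⁻¹ * β (a*t)) s * (a^2 * deriv (deriv φ) (a*s) + a * b2 (a*s))
      - (1/2) * (g s)^2 + (s^2)⁻¹ * (1 - (fun t => φ (a*t) + a⁻¹ * β (a*t)) s)
        * (s * g s + 2 * (fun t => φ (a*t) + a⁻¹ * β (a*t)) s) - s * g s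
      = -a + (β (a*s) * b2 (a*s) - (1/2)*(b1 (a*s))^2
          - ((a*s)^2)⁻¹ * β (a*s) * ((a*s) * b1 (a*s) + 2 * β (a*s)) - (a*s) * deriv φ (a*s))
        - a⁻¹ * ((a*s) * b1 (a*s)) := by
    simp only [hg]
    rw [hw]
    linear_combination hkey
  rw [hgoal]
  have hF := hM1 (a*s) hrmem
  have hG := hM2 (a*s) hrmem
  rw [Real.norm_eq_abs] at hF hG
  have hF' : |β (a*s) * b2 (a*s) - (1/2)*(b1 (a*s))^2
      - ((a*s)^2)⁻¹ * β (a*s) * ((a*s) * b1 (a*s) + 2 * β (a*s))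
      - (a*s) * deriv φ (a*s)| ≤ M := le_trans hF (le_max_left _ _)
  have hG' : |(a*s) * b1 (a*s)| ≤ M := le_trans hG (le_max_right _ _)
  have hainv : a⁻¹ ≤ 1 := by
    rw [inv_le_one_iff₀]; right; exact ha1
  have hainv0 : 0 < a⁻¹ := inv_pos.mpr ha0
  have h1 := abs_le.mp hF'
  have h3 : |a⁻¹ * ((a*s) * b1 (a*s))| ≤ M := by
    rw [abs_mul, abs_of_pos hainv0]
    calc a⁻¹ * |(a*s) * b1 (a*s)| ≤ 1 * M :=
          mul_le_mul hainv hG' (abs_nonneg _) zero_le_one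
      _ = M := one_mul M
  have h2 := abs_le.mp h3
  linarith
end

section
/- Let φ : (0,∞) → ℝ be a function for which there is a constant C₀ with |φ(r) − r⁻² − 2r⁻⁴| ≤ C₀·r⁻⁶ for all r ≥ 1, and let ζ : (0, 9/8] → ℝ be continuous with ζ(1) = −7/4. Then there exist θ ∈ (0, 1/8) and a₀ ≥ 1 such that for all a ≥ a₀ and all s ∈ [1−θ, 1+θ]: φ(a·s) − a⁻² + a⁻⁴·ζ(s) ≥ a⁻²·(s⁻² − 1) + (1/16)·a⁻⁴. -/
/-!
By the asymptotics of `φ`, the difference between the two sides is at least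
`a⁻⁴ (2 s⁻⁴ + ζ(s) − C₀ s⁻⁶ a⁻² − 1/16)`. As `a → ∞` and `s → 1` the bracket tends to
`2 + ζ(1) − 1/16 = 3/16 > 0`, so it is positive for `a` large and `s` close to `1`.
-/

open Filter Topology Set

theorem exists_Icc_forall_of_eventually_nhds {p : ℝ → Prop} {x c : ℝ} (hc : 0 < c)
    (hp : ∀ᶠ s in 𝓝 x, p s) : ∃ θ ∈ Ioo 0 c, ∀ s ∈ Icc (x - θ) (x + θ), p s := by
  obtain ⟨ε, hε, hεp⟩ := Metric.nhds_basis_closedBall.eventually_iff.1 hp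
  refine ⟨min ε (c / 2), ⟨by positivity, by linarith [min_le_right ε (c / 2)]⟩, fun s hs => ?_⟩
  apply hεp
  rw [Real.closedBall_eq_Icc]
  have hθε := min_le_left ε (c / 2)
  exact Icc_subset_Icc (by linarith) (by linarith) hs

theorem tendsto_barrier_margin {ζ : ℝ → ℝ} (C : ℝ) (hζ : ContinuousAt ζ 1) :
    Tendsto (fun p : ℝ × ℝ => 2 * (p.2 ^ 4)⁻¹ + ζ p.2 - C * (p.2 ^ 6)⁻¹ * (p.1 ^ 2)⁻¹)
      (atTop ×ˢ 𝓝 1) (𝓝 (2 + ζ 1)) := by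
  have hs : Tendsto (fun p : ℝ × ℝ => p.2) (atTop ×ˢ 𝓝 1) (𝓝 1) := tendsto_snd
  have ha : Tendsto (fun p : ℝ × ℝ => (p.1 ^ 2)⁻¹) (atTop ×ˢ 𝓝 1) (𝓝 0) :=
    tendsto_inv_atTop_zero.comp ((tendsto_pow_atTop two_ne_zero).comp tendsto_fst)
  have hpow (n : ℕ) : Tendsto (fun p : ℝ × ℝ => (p.2 ^ n)⁻¹) (atTop ×ˢ 𝓝 1) (𝓝 1) := by
    simpa using (hs.pow n).inv₀ (by simp)
  simpa using (((hpow 4).const_mul 2).add (hζ.tendsto.comp hs)).sub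
    (((hpow 6).const_mul C).mul ha)

theorem barrier_ge_of_margin {φ ζ : ℝ → ℝ} {C a s : ℝ}
    (hφ : |φ (a * s) - ((a * s) ^ 2)⁻¹ - 2 * ((a * s) ^ 4)⁻¹| ≤ C * ((a * s) ^ 6)⁻¹)
    (hmargin : 1 / 16 ≤ 2 * (s ^ 4)⁻¹ + ζ s - C * (s ^ 6)⁻¹ * (a ^ 2)⁻¹) :
    φ (a * s) - (a ^ 2)⁻¹ + (a ^ 4)⁻¹ * ζ s
      ≥ (a ^ 2)⁻¹ * ((s ^ 2)⁻¹ - 1) + (1 / 16) * (a ^ 4)⁻¹ := by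
  have hφ_lower := (abs_le.1 hφ).1
  have hmargin_scaled := mul_le_mul_of_nonneg_left hmargin (by positivity : (0 : ℝ) ≤ (a ^ 4)⁻¹)
  simp only [mul_pow, mul_inv] at hφ_lower
  have ha6 : (a ^ 6)⁻¹ = (a ^ 4)⁻¹ * (a ^ 2)⁻¹ := by rw [← mul_inv, ← pow_add]
  rw [ha6] at hφ_lower
  linarith

/-- Proposition 2.4 (positivity of the barrier near `s = 1`): if
`φ(r) = r⁻² + 2r⁻⁴ + O(r⁻⁶)` and `ζ` is continuous on `(0, 9/8]` with
`ζ(1) = −7/4`, then there are `θ ∈ (0,1/8)` and `a₀ ≥ 1` such that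
`φ(a·s) − a⁻² + a⁻⁴·ζ(s) ≥ a⁻²(s⁻²−1) + (1/16)a⁻⁴` for `a ≥ a₀`,
`s ∈ [1−θ, 1+θ]`. -/
theorem stmt_2
    (φ ζ : ℝ → ℝ) (C₀ : ℝ)
    (hφasym : ∀ r ≥ (1:ℝ), |φ r - (r^2)⁻¹ - 2 * (r^4)⁻¹| ≤ C₀ * (r^6)⁻¹)
    (hζcont : ContinuousOn ζ (Set.Ioc 0 (9/8)))
    (hζ1 : ζ 1 = -7/4) :
    ∃ θ ∈ Set.Ioo (0:ℝ) (1/8), ∃ a₀ : ℝ, 1 ≤ a₀ ∧ ∀ a : ℝ, a₀ ≤ a →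
      ∀ s ∈ Set.Icc (1 - θ) (1 + θ),
        φ (a * s) - (a^2)⁻¹ + (a^4)⁻¹ * ζ s
          ≥ (a^2)⁻¹ * ((s^2)⁻¹ - 1) + (1/16) * (a^4)⁻¹ := by
  have hζ : ContinuousAt ζ 1 := hζcont.continuousAt (Ioc_mem_nhds (by norm_num) (by norm_num))
  have hev := (tendsto_barrier_margin C₀ hζ).eventually (lt_mem_nhds (by rw [hζ1]; norm_num :
    (1 / 16 : ℝ) < 2 + ζ 1))
  obtain ⟨pa, hpa, pb, hpb, hmargin⟩ := eventually_prod_iff.1 hev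
  obtain ⟨A, hA⟩ := eventually_atTop.1 hpa
  obtain ⟨θ, hθ, hθpb⟩ := exists_Icc_forall_of_eventually_nhds (by norm_num : (0 : ℝ) < 1 / 8) hpb
  refine ⟨θ, hθ, max A 2, by linarith [le_max_right A 2], fun a ha s hs => ?_⟩
  have ha2 : 2 ≤ a := le_trans (le_max_right A 2) ha
  have hs_half : 1 / 2 ≤ s := by linarith [hs.1, hθ.2]
  refine barrier_ge_of_margin (hφasym (a * s) (by nlinarith)) ?_
  exact (hmargin (hA a (le_trans (le_max_left A 2) ha)) (hθpb s hs)).le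
end

section
/- Let ζ : (0, 9/8] → ℝ be continuous at s = 1, and suppose that on (1/2, 1) ∪ (1, 9/8) the function s ↦ (s⁻²−1)⁻¹·ζ(s) is differentiable with derivative equal to (s⁻²−1)⁻²·(2s⁻³ − 5s⁻⁶ − (1/2)·s²⁷). Then ζ(1) = −7/4. -/
/-!
Since `(s⁻² - 1)⁻² = s⁴ / ((1 - s)² (1 + s)²)`, partial fractions give an explicit primitive of the
right-hand side on `(1/2, 1)`: its only term singular at `s = 1` is `-(7/8) / (1 - s)`, coming from
the double pole with coefficient `(2 - 5 - 1/2) / (1 + 1)² = -7/8` (the simple pole cancels).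
Hence `ζ s = (s⁻² - 1) (G s + C) - (7/8) (1 + s) / s²` on `(1/2, 1)` with `G` continuous at `1`,
because `s⁻² - 1 = (1 - s)(1 + s) / s²` absorbs the pole. Letting `s → 1⁻` and using continuity of
`ζ` at `1` gives `ζ 1 = -(7/8) · 2 = -7/4`.
-/

open Filter Topology Set

theorem ContinuousWithinAt.eq_of_eventuallyEq_nhdsWithin {X Y : Type*} [TopologicalSpace X]
    [TopologicalSpace Y] [T2Space Y] {f g : X → Y} {s : Set X} {a : X} [(𝓝[s] a).NeBot]
    (hf : ContinuousWithinAt f s a) (hg : ContinuousWithinAt g s a) (h : f =ᶠ[𝓝[s] a] g) :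
    f a = g a :=
  tendsto_nhds_unique hf (hg.congr' h.symm)

theorem inv_sq_sub_one_eq {s : ℝ} (hs : s ≠ 0) : (s ^ 2)⁻¹ - 1 = (1 - s) * (1 + s) / s ^ 2 := by
  field_simp
  ring

namespace CorrectionOde

noncomputable def rhs (s : ℝ) : ℝ :=
  (((s ^ 2)⁻¹ - 1) ^ 2)⁻¹ * (2 * (s ^ 3)⁻¹ - 5 * (s ^ 6)⁻¹ - (1 / 2) * s ^ 27)

noncomputable def primitivePoly (s : ℝ) : ℝ :=
  -∑ m ∈ Finset.range 14, (14 - m : ℝ) / (4 * (m + 1)) * s ^ (2 * m + 2)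

noncomputable def primitiveRegular (s : ℝ) : ℝ :=
  primitivePoly s + 5 * s⁻¹ + 13 / 8 * (1 + s)⁻¹ - 15 / 2 * Real.log (1 + s)

noncomputable def primitive (s : ℝ) : ℝ := primitiveRegular s - 7 / 8 * (1 - s)⁻¹

theorem hasDerivAt_primitivePoly (s : ℝ) :
    HasDerivAt primitivePoly (-∑ m ∈ Finset.range 14, (14 - m : ℝ) / 2 * s ^ (2 * m + 1)) s := by
  refine (HasDerivAt.fun_sum fun m _ =>
    (hasDerivAt_pow (2 * m + 2) s).const_mul _).neg.congr_deriv ?_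
  congr 1
  refine Finset.sum_congr rfl fun m _ => ?_
  push_cast
  field_simp
  ring

theorem hasDerivAt_primitive {s : ℝ} (hs0 : s ≠ 0) (hs1 : s ≠ 1) (hs : 1 + s ≠ 0) :
    HasDerivAt primitive (rhs s) s := by
  have hsub : (1 : ℝ) - s ≠ 0 := sub_ne_zero.2 hs1.symm
  have hplus : HasDerivAt (fun x : ℝ => 1 + x) 1 s := (hasDerivAt_id s).const_add 1
  have hminus : HasDerivAt (fun x : ℝ => 1 - x) (-1) s := by
    simpa using (hasDerivAt_id s).const_sub 1
  have h := ((((hasDerivAt_primitivePoly s).add ((hasDerivAt_inv hs0).const_mul 5)).add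
    ((hplus.inv hs).const_mul (13 / 8))).sub ((hplus.log hs).const_mul (15 / 2))).sub
    ((hminus.inv hsub).const_mul (7 / 8))
  refine h.congr_deriv ?_
  rw [rhs, inv_sq_sub_one_eq hs0]
  simp only [Finset.sum_range_succ, Finset.sum_range_zero]
  field_simp
  ring

theorem continuousAt_primitiveRegular_one : ContinuousAt primitiveRegular 1 := by
  unfold primitiveRegular primitivePoly
  fun_prop (disch := norm_num)

theorem exists_const_eq_of_hasDerivAt {ζ : ℝ → ℝ}
    (hode : ∀ s ∈ Ioo (1 / 2 : ℝ) 1,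
      HasDerivAt (fun s : ℝ => ((s ^ 2)⁻¹ - 1)⁻¹ * ζ s) (rhs s) s) :
    ∃ C, ∀ s ∈ Ioo (1 / 2 : ℝ) 1,
      ζ s = ((s ^ 2)⁻¹ - 1) * (primitiveRegular s + C) - 7 / 8 * ((1 + s) / s ^ 2) := by
  have hprim : ∀ s ∈ Ioo (1 / 2 : ℝ) 1, HasDerivAt primitive (rhs s) s :=
    fun s ⟨_, hs1⟩ => hasDerivAt_primitive (by positivity) hs1.ne (by positivity)
  obtain ⟨C, hC⟩ := isOpen_Ioo.exists_eq_add_of_deriv_eq isPreconnected_Ioo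
    (fun s hs => (hode s hs).differentiableAt.differentiableWithinAt)
    (fun s hs => (hprim s hs).differentiableAt.differentiableWithinAt)
    (fun s hs => (hode s hs).deriv.trans (hprim s hs).deriv.symm)
  refine ⟨C, fun s hs => ?_⟩
  have hs0 : s ≠ 0 := by linarith [hs.1]
  have hsub : 1 - s ≠ 0 := by linarith [hs.2]
  have hadd : 1 + s ≠ 0 := by linarith [hs.1]
  have h := hC hs
  simp only [primitive, inv_sq_sub_one_eq hs0] at h ⊢
  field_simp at h ⊢
  linear_combination h

end CorrectionOde

/-- The correction function `ζ`, defined by the first-order ODE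
`d/ds[(s⁻²−1)⁻¹ ζ(s)] = (s⁻²−1)⁻²(2s⁻³ − 5s⁻⁶ − (1/2)s²⁷)` away from `s = 1`,
extends continuously across `s = 1` with value `ζ(1) = −7/4`. -/
theorem stmt_3
    (ζ : ℝ → ℝ)
    (hcont : ContinuousAt ζ 1)
    (hode : ∀ s ∈ Set.Ioo (1/2 : ℝ) 1 ∪ Set.Ioo (1:ℝ) (9/8),
      HasDerivAt (fun s : ℝ => ((s^2)⁻¹ - 1)⁻¹ * ζ s)
        ((((s^2)⁻¹ - 1)^2)⁻¹ * (2 * (s^3)⁻¹ - 5 * (s^6)⁻¹ - (1/2) * s^27)) s) :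
    ζ 1 = -7/4 := by
  obtain ⟨C, hC⟩ := CorrectionOde.exists_const_eq_of_hasDerivAt fun s hs => hode s (Or.inl hs)
  set H : ℝ → ℝ :=
    fun s => ((s ^ 2)⁻¹ - 1) * (CorrectionOde.primitiveRegular s + C) - 7 / 8 * ((1 + s) / s ^ 2)
  have hH : ContinuousAt H 1 := by
    have := CorrectionOde.continuousAt_primitiveRegular_one
    fun_prop (disch := norm_num)
  have hζH : ζ =ᶠ[𝓝[<] 1] H := eventually_of_mem (Ioo_mem_nhdsLT (by norm_num)) hC
  calc ζ 1 = H 1 :=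
        hcont.continuousWithinAt.eq_of_eventuallyEq_nhdsWithin hH.continuousWithinAt hζH
    _ = -7 / 4 := by norm_num [H]
end

section
/- Let ζ be a differentiable function on (0, 1/2] such that s ↦ (s⁻²−1)⁻¹·ζ(s) has derivative (s⁻²−1)⁻²·(2s⁻³ − 5s⁻⁶ − (1/2)·s²⁷) at every s ∈ (0, 1/2]. Then there is a constant C with |ζ(s) − 5s⁻³| ≤ C·s⁻² for all s ∈ (0, 1/2]. -/
/-- Any solution `ζ` of the ODE
`d/ds[(s⁻²−1)⁻¹ ζ(s)] = (s⁻²−1)⁻²(2s⁻³ − 5s⁻⁶ − (1/2)s²⁷)` on `(0, 1/2]`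
satisfies `ζ(s) = 5s⁻³ + O(s⁻²)` as `s → 0`. -/
theorem stmt_5
    (ζ : ℝ → ℝ)
    (hode : ∀ s ∈ Set.Ioc (0:ℝ) (1/2),
      HasDerivWithinAt (fun s : ℝ => ((s^2)⁻¹ - 1)⁻¹ * ζ s)
        ((((s^2)⁻¹ - 1)^2)⁻¹ * (2 * (s^3)⁻¹ - 5 * (s^6)⁻¹ - (1/2) * s^27))
        (Set.Ioc 0 (1/2)) s) :
    ∃ C : ℝ, ∀ s ∈ Set.Ioc (0:ℝ) (1/2), |ζ s - 5 * (s^3)⁻¹| ≤ C * (s^2)⁻¹ := by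
  set h : ℝ → ℝ := fun s => ((s^2)⁻¹ - 1)⁻¹ * ζ s - 5 * s⁻¹ with hh
  set h' : ℝ → ℝ := fun s =>
    (((s^2)⁻¹ - 1)^2)⁻¹ * (2 * (s^3)⁻¹ - 5 * (s^6)⁻¹ - (1/2) * s^27) + 5 * (s^2)⁻¹ with hh'
  have hconv : Convex ℝ (Set.Ioc (0:ℝ) (1/2)) := convex_Ioc 0 (1/2)
  have hmem : (1/2 : ℝ) ∈ Set.Ioc (0:ℝ) (1/2) := by norm_num
  have hderiv : ∀ s ∈ Set.Ioc (0:ℝ) (1/2),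
      HasDerivWithinAt h (h' s) (Set.Ioc 0 (1/2)) s := by
    intro s hs
    have hs0 : s ≠ 0 := ne_of_gt hs.1
    have h1 : HasDerivWithinAt (fun y : ℝ => 5 * y⁻¹) (5 * -(s^2)⁻¹) (Set.Ioc 0 (1/2)) s :=
      ((hasDerivAt_inv hs0).const_mul (5:ℝ)).hasDerivWithinAt
    have h2 := (hode s hs).sub h1
    convert h2 using 1
    · rfl
    · rfl
    · rfl
    simp only [hh']
    ring
  have hbound : ∀ s ∈ Set.Ioc (0:ℝ) (1/2), ‖h' s‖ ≤ 24 := by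
    intro s hs
    obtain ⟨hs0, hs2⟩ := hs
    have hs0' : s ≠ 0 := ne_of_gt hs0
    have hd : (1:ℝ) - s^2 ≠ 0 := by nlinarith
    have hinv : ((s^2)⁻¹ - 1) = (1 - s^2) / s^2 := by field_simp
    have key : h' s = (2*s + 5*s^2 - 10 - s^31/2) / (1 - s^2)^2 := by
      simp only [hh', hinv]
      field_simp
      ring
    have h34 : (3:ℝ)/4 ≤ 1 - s^2 := by nlinarith
    have hden : (9:ℝ)/16 ≤ (1 - s^2)^2 := by nlinarith
    have hnum : |2*s + 5*s^2 - 10 - s^31/2| ≤ 11 := by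
      rw [abs_le]
      constructor <;> nlinarith [pow_le_one₀ (le_of_lt hs0) (by linarith : s ≤ 1) (n := 31),
        pow_pos hs0 31]
    rw [key, Real.norm_eq_abs, abs_div, abs_of_nonneg (by positivity : (0:ℝ) ≤ (1-s^2)^2)]
    rw [div_le_iff₀ (by nlinarith)]
    nlinarith
  have hmvt : ∀ s ∈ Set.Ioc (0:ℝ) (1/2), |h s| ≤ |h (1/2)| + 12 := by
    intro s hs
    have := hconv.norm_image_sub_le_of_norm_hasDerivWithin_le hderiv hbound hmem hs
    have habs : |h s - h (1/2)| ≤ 24 * |s - 1/2| := by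
      simpa [Real.norm_eq_abs] using this
    have h12 : |s - 1/2| ≤ 1/2 := by
      rw [abs_le]; constructor <;> [linarith [hs.1]; linarith [hs.2]]
    calc |h s| ≤ |h s - h (1/2)| + |h (1/2)| := by
          simpa using abs_add_le (h s - h (1/2)) (h (1/2))
      _ ≤ |h (1/2)| + 12 := by linarith [habs, h12]
  refine ⟨|h (1/2)| + 12 + 5/2, ?_⟩
  intro s hs
  obtain ⟨hs0, hs2⟩ := hs
  have hs0' : s ≠ 0 := ne_of_gt hs0
  have hd : (1:ℝ) - s^2 ≠ 0 := by nlinarith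
  have hinvne : ((s^2)⁻¹ - 1) ≠ 0 := by
    rw [show ((s^2)⁻¹ - 1) = (1 - s^2) / s^2 by field_simp]
    positivity
  have hzeta : ζ s = ((s^2)⁻¹ - 1) * (5 * s⁻¹ + h s) := by
    simp only [hh]
    field_simp
    ring
  have hb := hmvt s ⟨hs0, hs2⟩
  set M := |h (1/2)| + 12 with hM
  have hM0 : 0 ≤ M := by positivity
  have hid : ζ s - 5 * (s^3)⁻¹ = -5 * s⁻¹ + ((s^2)⁻¹ - 1) * h s := by
    rw [hzeta]
    field_simp
    ring
  rw [hid]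
  have habs : |(-5 : ℝ) * s⁻¹ + ((s^2)⁻¹ - 1) * h s| ≤
      5 * s⁻¹ + ((s^2)⁻¹ - 1) * |h s| := by
    refine (abs_add_le _ _).trans ?_
    have hinvpos : (0:ℝ) < (s^2)⁻¹ - 1 := by
      rw [show ((s^2)⁻¹ - 1) = (1 - s^2) / s^2 by field_simp]
      have h1s : (0:ℝ) < 1 - s^2 := by nlinarith
      positivity
    have : |(-5 : ℝ) * s⁻¹| = 5 * s⁻¹ := by
      rw [abs_mul, abs_inv, abs_of_nonneg (le_of_lt hs0)]
      norm_num
    rw [this, abs_mul, abs_of_pos hinvpos]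
  refine habs.trans ?_
  have hsq : (0:ℝ) < (s^2)⁻¹ := by positivity
  have h1 : 5 * s⁻¹ ≤ (5/2) * (s^2)⁻¹ := by
    have e : (s:ℝ)⁻¹ = s * (s^2)⁻¹ := by
      rw [pow_two, mul_inv, ← mul_assoc, mul_inv_cancel₀ hs0', one_mul]
    rw [e, show 5 * (s * (s^2)⁻¹) = (5*s) * (s^2)⁻¹ by ring]
    exact mul_le_mul_of_nonneg_right (by linarith) (le_of_lt hsq)
  have h2 : ((s^2)⁻¹ - 1) * |h s| ≤ M * (s^2)⁻¹ := by
    have : ((s^2)⁻¹ - 1) * |h s| ≤ (s^2)⁻¹ * |h s| :=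
      mul_le_mul_of_nonneg_right (by linarith) (abs_nonneg _)
    refine this.trans ?_
    rw [mul_comm M]
    exact mul_le_mul_of_nonneg_left hb (le_of_lt hsq)
  calc 5 * s⁻¹ + ((s^2)⁻¹ - 1) * |h s| ≤ (5/2) * (s^2)⁻¹ + M * (s^2)⁻¹ := by linarith
    _ = (M + 5/2) * (s^2)⁻¹ := by ring
end

section
/- Let I be an open interval, let u : (0,∞) × I → (0,∞) be smooth and satisfy u_t = u·u_rr − (1/2)·u_r² + r⁻²·(1−u)·(r·u_r + 2u) everywhere, and let r̄ : I → (0,∞) be differentiable with r̄'(t) = −r̄(t)⁻¹·(1 − u(r̄(t),t) − (1/2)·r̄(t)·u_r(r̄(t),t)) for all t ∈ I. For ρ > 0 and t ∈ I set z(ρ,t) := ∫_{r̄(t)}^{ρ} u(r,t)^{−1/2} dr, and let F be a smooth function on an open subset of ℝ × I containing {(z(ρ,t), t) : ρ > 0, t ∈ I} such that F(z(ρ,t), t) = ρ for all ρ > 0 and t ∈ I. Then for every ρ > 0 and t ∈ I, writing z = z(ρ,t): 0 = F_t(z,t) − F_zz(z,t) + F(z,t)⁻¹·(1 + F_z(z,t)²)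 + 2·F_z(z,t)·[ −F(0,t)⁻¹·F_z(0,t) + ∫_{F(0,t)}^{F(z,t)} r⁻²·u(r,t)^{1/2} dr ]. -/
set_option maxHeartbeats 4000000

open Set intervalIntegral MeasureTheory Filter Metric
open scoped Topology

section aux
variable {f : ℝ × ℝ → ℝ} {s : Set (ℝ × ℝ)}

lemma pd1_hasDerivAt (hs : IsOpen s) (hf : ContDiffOn ℝ (⊤ : ℕ∞) f s) {p : ℝ × ℝ} (hp : p ∈ s) :
    HasDerivAt (fun x => f (x, p.2)) (fderiv ℝ f p (1, 0)) p.1 := by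
  have hd : DifferentiableAt ℝ f p :=
    (hf.contDiffAt (hs.mem_nhds hp)).differentiableAt (by simp)
  have h1 : HasDerivAt (fun x : ℝ => ((x, p.2) : ℝ × ℝ)) ((1:ℝ), (0:ℝ)) p.1 :=
    (hasDerivAt_id p.1).prodMk (hasDerivAt_const p.1 p.2)
  have h2 : HasFDerivAt f (fderiv ℝ f p) ((p.1, p.2) : ℝ × ℝ) := by
    rw [Prod.mk.eta]; exact hd.hasFDerivAt
  exact h2.comp_hasDerivAt p.1 h1

lemma pd2_hasDerivAt (hs : IsOpen s) (hf : ContDiffOn ℝ (⊤ : ℕ∞) f s) {p : ℝ × ℝ} (hp : p ∈ s) :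
    HasDerivAt (fun y => f (p.1, y)) (fderiv ℝ f p (0, 1)) p.2 := by
  have hd : DifferentiableAt ℝ f p :=
    (hf.contDiffAt (hs.mem_nhds hp)).differentiableAt (by simp)
  have h1 : HasDerivAt (fun y : ℝ => ((p.1, y) : ℝ × ℝ)) ((0:ℝ), (1:ℝ)) p.2 :=
    (hasDerivAt_const p.2 p.1).prodMk (hasDerivAt_id p.2)
  have h2 : HasFDerivAt f (fderiv ℝ f p) ((p.1, p.2) : ℝ × ℝ) := by
    rw [Prod.mk.eta]; exact hd.hasFDerivAt
  exact h2.comp_hasDerivAt p.2 h1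

lemma pd_smooth (hs : IsOpen s) (hf : ContDiffOn ℝ (⊤ : ℕ∞) f s) (v : ℝ × ℝ) :
    ContDiffOn ℝ (⊤ : ℕ∞) (fun q => fderiv ℝ f q v) s :=
  (hf.fderiv_of_isOpen hs (by simp)).clm_apply contDiffOn_const

end aux

/-- Proposition 3.2: the evolution equation satisfied by the radius function
`F(z,t)`, where `z(ρ,t) = ∫_{r̄(t)}^ρ u(r,t)^{−1/2} dr` is the signed arclength
from the reference sphere of radius `r̄(t)` and `F(z(ρ,t),t) = ρ`. -/
theorem stmt_7
    (I : Set ℝ) (hIopen : IsOpen I) (hIconn : I.OrdConnected)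
    (u : ℝ → ℝ → ℝ)
    (husmooth : ContDiffOn ℝ (⊤ : ℕ∞) (fun p : ℝ × ℝ => u p.1 p.2) (Set.Ioi 0 ×ˢ I))
    (hupos : ∀ r > (0:ℝ), ∀ t ∈ I, 0 < u r t)
    (hupde : ∀ r > (0:ℝ), ∀ t ∈ I,
      deriv (fun t' => u r t') t
        = u r t * deriv (fun r' => deriv (fun r'' => u r'' t) r') r
          - (1/2) * (deriv (fun r' => u r' t) r)^2
          + (r^2)⁻¹ * (1 - u r t) * (r * deriv (fun r' => u r' t) r + 2 * u r t))
    (rbar : ℝ → ℝ) (hrbarpos : ∀ t ∈ I, 0 < rbar t)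
    (hrbarode : ∀ t ∈ I, HasDerivAt rbar
      (-(rbar t)⁻¹ * (1 - u (rbar t) t
        - (1/2) * rbar t * deriv (fun r' => u r' t) (rbar t))) t)
    (z : ℝ → ℝ → ℝ)
    (hz : ∀ ρ t : ℝ, z ρ t = ∫ r in (rbar t)..ρ, (Real.sqrt (u r t))⁻¹)
    (V : Set (ℝ × ℝ)) (hVopen : IsOpen V)
    (hVmem : ∀ ρ > (0:ℝ), ∀ t ∈ I, (z ρ t, t) ∈ V)
    (F : ℝ → ℝ → ℝ)
    (hFsmooth : ContDiffOn ℝ (⊤ : ℕ∞) (fun p : ℝ × ℝ => F p.1 p.2) V)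
    (hF : ∀ ρ > (0:ℝ), ∀ t ∈ I, F (z ρ t) t = ρ) :
    ∀ ρ > (0:ℝ), ∀ t ∈ I,
      0 = deriv (fun t' => F (z ρ t) t') t
        - deriv (fun z' => deriv (fun z'' => F z'' t) z') (z ρ t)
        + (F (z ρ t) t)⁻¹ * (1 + (deriv (fun z' => F z' t) (z ρ t))^2)
        + 2 * deriv (fun z' => F z' t) (z ρ t) *
            (-(F 0 t)⁻¹ * deriv (fun z' => F z' t) 0
              + ∫ r in (F 0 t)..(F (z ρ t) t), (r^2)⁻¹ * Real.sqrt (u r t)) := by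
  intro ρ hρ t ht
  -- basic sets and memberships
  have hΩ : IsOpen (Set.Ioi (0:ℝ) ×ˢ I) := isOpen_Ioi.prod hIopen
  have hmem : ∀ r > (0:ℝ), ∀ t' ∈ I, ((r, t') : ℝ × ℝ) ∈ Set.Ioi (0:ℝ) ×ˢ I :=
    fun r hr t' ht' => ⟨hr, ht'⟩
  -- partial derivatives of u
  set ur : ℝ × ℝ → ℝ := fun q => fderiv ℝ (fun p : ℝ × ℝ => u p.1 p.2) q (1, 0) with hurdef
  set ut : ℝ × ℝ → ℝ := fun q => fderiv ℝ (fun p : ℝ × ℝ => u p.1 p.2) q (0, 1) with hutdef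
  set urr : ℝ × ℝ → ℝ := fun q => fderiv ℝ ur q (1, 0) with hurrdef
  have hur_smooth : ContDiffOn ℝ (⊤ : ℕ∞) ur (Set.Ioi 0 ×ˢ I) := pd_smooth hΩ husmooth _
  have hur : ∀ r > (0:ℝ), ∀ t' ∈ I, HasDerivAt (fun x => u x t') (ur (r, t')) r :=
    fun r hr t' ht' => pd1_hasDerivAt hΩ husmooth (hmem r hr t' ht')
  have hut : ∀ r > (0:ℝ), ∀ t' ∈ I, HasDerivAt (fun y => u r y) (ut (r, t')) t' :=
    fun r hr t' ht' => pd2_hasDerivAt hΩ husmooth (hmem r hr t' ht')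
  have hurr : ∀ r > (0:ℝ), ∀ t' ∈ I, HasDerivAt (fun x => ur (x, t')) (urr (r, t')) r :=
    fun r hr t' ht' => pd1_hasDerivAt hΩ hur_smooth (hmem r hr t' ht')
  -- the PDE in terms of ur, ut, urr
  have hpde : ∀ r > (0:ℝ), ∀ t' ∈ I,
      ut (r, t') = u r t' * urr (r, t') - (1/2) * (ur (r, t'))^2
        + (r^2)⁻¹ * (1 - u r t') * (r * ur (r, t') + 2 * u r t') := by
    intro r hr t' ht'
    have h1 : deriv (fun y => u r y) t' = ut (r, t') := (hut r hr t' ht').deriv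
    have h2 : deriv (fun x => u x t') r = ur (r, t') := (hur r hr t' ht').deriv
    have h3 : deriv (fun x => deriv (fun x' => u x' t') x) r = urr (r, t') := by
      have hev : (fun x => deriv (fun x' => u x' t') x) =ᶠ[𝓝 r] fun x => ur (x, t') := by
        filter_upwards [isOpen_Ioi.mem_nhds hr] with x hx
        exact (hur x hx t' ht').deriv
      rw [hev.deriv_eq]
      exact (hurr r hr t' ht').deriv
    have := hupde r hr t' ht'
    rw [h1, h2, h3] at this
    exact this
  -- sqrt of u, and g = (sqrt u)⁻¹
  have hsqpos : ∀ r > (0:ℝ), ∀ t' ∈ I, 0 < Real.sqrt (u r t') :=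
    fun r hr t' ht' => Real.sqrt_pos.2 (hupos r hr t' ht')
  set g : ℝ × ℝ → ℝ := fun q => (Real.sqrt (u q.1 q.2))⁻¹ with hgdef
  have hg_smooth : ContDiffOn ℝ (⊤ : ℕ∞) g (Set.Ioi 0 ×ˢ I) := by
    intro p hp
    have hu : ContDiffAt ℝ (⊤ : ℕ∞) (fun p : ℝ × ℝ => u p.1 p.2) p := husmooth.contDiffAt (hΩ.mem_nhds hp)
    have hupos' : (0:ℝ) < u p.1 p.2 := hupos p.1 hp.1 p.2 hp.2
    have : ContDiffAt ℝ (⊤ : ℕ∞) (fun q : ℝ × ℝ => Real.sqrt (u q.1 q.2)) p :=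
      (Real.contDiffAt_sqrt hupos'.ne').comp p hu
    exact (this.inv (Real.sqrt_pos.2 hupos').ne').contDiffWithinAt
  have hg_cont : ContinuousOn g (Set.Ioi 0 ×ˢ I) := hg_smooth.continuousOn
  set gt : ℝ × ℝ → ℝ := fun q => fderiv ℝ g q (0, 1) with hgtdef
  have hgt_cont : ContinuousOn gt (Set.Ioi 0 ×ˢ I) := (pd_smooth hΩ hg_smooth _).continuousOn
  have hgt : ∀ r > (0:ℝ), ∀ t' ∈ I, HasDerivAt (fun y => g (r, y)) (gt (r, t')) t' :=
    fun r hr t' ht' => pd2_hasDerivAt hΩ hg_smooth (hmem r hr t' ht')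
  -- value of gt
  have hgtval : ∀ r > (0:ℝ), ∀ t' ∈ I,
      gt (r, t') = -(1 / (2 * Real.sqrt (u r t')) * ut (r, t')) / (Real.sqrt (u r t'))^2 := by
    intro r hr t' ht'
    have h1 : HasDerivAt (fun y => Real.sqrt (u r y))
        (1 / (2 * Real.sqrt (u r t')) * ut (r, t')) t' :=
      (Real.hasDerivAt_sqrt (hupos r hr t' ht').ne').comp t' (hut r hr t' ht')
    have h2 := h1.inv (hsqpos r hr t' ht').ne'
    exact (hgt r hr t' ht').unique h2
  -- interval integrability of continuous functions on (0, ∞)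
  have hsub : ∀ a > (0:ℝ), ∀ b > (0:ℝ), Set.uIcc a b ⊆ Set.Ioi (0:ℝ) := by
    intro a ha b hb x hx
    exact lt_of_lt_of_le (lt_min ha hb) hx.1
  have hg_int : ∀ a > (0:ℝ), ∀ b > (0:ℝ), ∀ t' ∈ I,
      IntervalIntegrable (fun r => g (r, t')) volume a b := by
    intro a ha b hb t' ht'
    apply ContinuousOn.intervalIntegrable
    exact hg_cont.comp (Continuous.continuousOn (by fun_prop))
      (fun x hx => ⟨hsub a ha b hb hx, ht'⟩)
  -- derivative of z in ρ
  have hz_rho : ∀ ρ' > (0:ℝ), ∀ t' ∈ I, HasDerivAt (fun x => z x t') (g (ρ', t')) ρ' := by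
    intro ρ' hρ' t' ht'
    have hcont : ContinuousOn (fun r => g (r, t')) (Set.Ioi 0) :=
      hg_cont.comp (Continuous.continuousOn (by fun_prop)) (fun x hx => ⟨hx, ht'⟩)
    have h := intervalIntegral.integral_hasDerivAt_right
      (hg_int (rbar t') (hrbarpos t' ht') ρ' hρ' t' ht')
      (hcont.stronglyMeasurableAtFilter isOpen_Ioi ρ' hρ')
      (hcont.continuousAt (isOpen_Ioi.mem_nhds hρ'))
    have : (fun x => z x t') = fun x => ∫ r in (rbar t')..x, g (r, t') := by
      funext x; rw [hz x t']
    rw [this]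
    exact h
  -- partial derivatives of F
  set Fz : ℝ × ℝ → ℝ := fun q => fderiv ℝ (fun p : ℝ × ℝ => F p.1 p.2) q (1, 0) with hFzdef
  set Ftp : ℝ × ℝ → ℝ := fun q => fderiv ℝ (fun p : ℝ × ℝ => F p.1 p.2) q (0, 1) with hFtdef
  set Fzz : ℝ × ℝ → ℝ := fun q => fderiv ℝ Fz q (1, 0) with hFzzdef
  have hFz_smooth : ContDiffOn ℝ (⊤ : ℕ∞) Fz V := pd_smooth hVopen hFsmooth _
  -- key identity : Fz (z ρ' t', t') = sqrt (u ρ' t')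
  have hFz_eq : ∀ ρ' > (0:ℝ), ∀ t' ∈ I, Fz (z ρ' t', t') = Real.sqrt (u ρ' t') := by
    intro ρ' hρ' t' ht'
    have hdF : HasFDerivAt (fun p : ℝ × ℝ => F p.1 p.2)
        (fderiv ℝ (fun p : ℝ × ℝ => F p.1 p.2) (z ρ' t', t')) (z ρ' t', t') :=
      ((hFsmooth.contDiffAt (hVopen.mem_nhds (hVmem ρ' hρ' t' ht'))).differentiableAt
        (by simp)).hasFDerivAt
    have hin : HasDerivAt (fun x => ((z x t', t') : ℝ × ℝ)) ((g (ρ', t'), 0)) ρ' :=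
      (hz_rho ρ' hρ' t' ht').prodMk (hasDerivAt_const ρ' t')
    have hchain := hdF.comp_hasDerivAt ρ' hin
    have hval : (fderiv ℝ (fun p : ℝ × ℝ => F p.1 p.2) (z ρ' t', t')) (g (ρ', t'), 0)
        = Fz (z ρ' t', t') * g (ρ', t') := by
      have : ((g (ρ', t'), 0) : ℝ × ℝ) = g (ρ', t') • ((1:ℝ), (0:ℝ)) := by
        simp [Prod.smul_mk]
      rw [this, _root_.map_smul]
      simp [hFzdef, mul_comm]
    rw [hval] at hchain
    have hev : (fun x => F (z x t') t') =ᶠ[𝓝 ρ'] fun x => x := by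
      filter_upwards [isOpen_Ioi.mem_nhds hρ'] with x hx
      exact hF x hx t' ht'
    have hone : HasDerivAt (fun x => F (z x t') t') 1 ρ' :=
      (hasDerivAt_id ρ').congr_of_eventuallyEq hev
    have := hone.unique hchain
    have hgpos : 0 < g (ρ', t') := inv_pos.2 (hsqpos ρ' hρ' t' ht')
    have : Fz (z ρ' t', t') = (g (ρ', t'))⁻¹ := by
      field_simp at this ⊢
      linarith [this]
    rw [this, hgdef]
    simp
  -- second derivative of F in z
  have hmemV : ((z ρ t, t) : ℝ × ℝ) ∈ V := hVmem ρ hρ t ht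
  have hFzz_eq : Fzz (z ρ t, t) = ur (ρ, t) / 2 := by
    have hdFz : HasFDerivAt Fz (fderiv ℝ Fz (z ρ t, t)) (z ρ t, t) :=
      ((hFz_smooth.contDiffAt (hVopen.mem_nhds hmemV)).differentiableAt (by simp)).hasFDerivAt
    have hin : HasDerivAt (fun x => ((z x t, t) : ℝ × ℝ)) ((g (ρ, t), 0)) ρ :=
      (hz_rho ρ hρ t ht).prodMk (hasDerivAt_const ρ t)
    have hchain := hdFz.comp_hasDerivAt ρ hin
    have hval : (fderiv ℝ Fz (z ρ t, t)) (g (ρ, t), 0) = Fzz (z ρ t, t) * g (ρ, t) := by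
      have h0 : ((g (ρ, t), 0) : ℝ × ℝ) = g (ρ, t) • ((1:ℝ), (0:ℝ)) := by simp
      rw [h0, _root_.map_smul]; simp [hFzzdef, mul_comm]
    rw [hval] at hchain
    have hsq : HasDerivAt (fun x => Real.sqrt (u x t))
        (1 / (2 * Real.sqrt (u ρ t)) * ur (ρ, t)) ρ :=
      (Real.hasDerivAt_sqrt (hupos ρ hρ t ht).ne').comp ρ (hur ρ hρ t ht)
    have hev : (fun x => Real.sqrt (u x t)) =ᶠ[𝓝 ρ] fun x => Fz (z x t, t) := by
      filter_upwards [isOpen_Ioi.mem_nhds hρ] with x hx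
      exact (hFz_eq x hx t ht).symm
    have h2 : HasDerivAt (fun x => Fz (z x t, t))
        (1 / (2 * Real.sqrt (u ρ t)) * ur (ρ, t)) ρ := hsq.congr_of_eventuallyEq hev.symm
    have h3 := h2.unique hchain
    have hspos := hsqpos ρ hρ t ht
    have hgval : g (ρ, t) = (Real.sqrt (u ρ t))⁻¹ := rfl
    rw [hgval] at h3
    field_simp at h3
    have h4 : ur (ρ, t) * Real.sqrt (u ρ t) = (2 * Fzz (z ρ t, t)) * Real.sqrt (u ρ t) := by
      rw [h3]
    have h5 := mul_right_cancel₀ hspos.ne' h4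
    linarith
  -- rewriting of the goal terms
  have hz0 : z (rbar t) t = 0 := by rw [hz]; simp
  have hmemV0 : ((0, t) : ℝ × ℝ) ∈ V := by
    have := hVmem (rbar t) (hrbarpos t ht) t ht
    rwa [hz0] at this
  have hG1 : deriv (fun t' => F (z ρ t) t') t = Ftp (z ρ t, t) :=
    (pd2_hasDerivAt hVopen hFsmooth hmemV).deriv
  have hG2 : deriv (fun z' => F z' t) (z ρ t) = Real.sqrt (u ρ t) := by
    rw [(pd1_hasDerivAt hVopen hFsmooth hmemV).deriv]
    exact hFz_eq ρ hρ t ht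
  have hG4 : deriv (fun z' => F z' t) 0 = Real.sqrt (u (rbar t) t) := by
    rw [(pd1_hasDerivAt hVopen hFsmooth hmemV0).deriv]
    have := hFz_eq (rbar t) (hrbarpos t ht) t ht
    rwa [hz0] at this
  have hG5 : F 0 t = rbar t := by
    rw [← hz0]; exact hF (rbar t) (hrbarpos t ht) t ht
  have hG5' : F (z ρ t) t = ρ := hF ρ hρ t ht
  have hG3 : deriv (fun z' => deriv (fun z'' => F z'' t) z') (z ρ t) = Fzz (z ρ t, t) := by
    have hW : IsOpen {x : ℝ | ((x, t) : ℝ × ℝ) ∈ V} :=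
      hVopen.preimage (by fun_prop)
    have hev : (fun z' => deriv (fun z'' => F z'' t) z') =ᶠ[𝓝 (z ρ t)] fun z' => Fz (z', t) := by
      filter_upwards [hW.mem_nhds hmemV] with x hx
      exact (pd1_hasDerivAt hVopen hFsmooth hx).deriv
    rw [hev.deriv_eq]
    exact (pd1_hasDerivAt hVopen hFz_smooth hmemV).deriv
  -- time derivative of z
  have ha : 0 < rbar t := hrbarpos t ht
  set a := rbar t with hadef
  obtain ⟨ε, hε, hballI⟩ : ∃ ε > 0, Metric.closedBall t ε ⊆ I :=
    Metric.nhds_basis_closedBall.mem_iff.1 (hIopen.mem_nhds ht)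
  have hKcompact : IsCompact ((Set.uIcc a ρ) ×ˢ Metric.closedBall t ε) :=
    isCompact_uIcc.prod (isCompact_closedBall t ε)
  have hKsub : (Set.uIcc a ρ) ×ˢ Metric.closedBall t ε ⊆ Set.Ioi 0 ×ˢ I :=
    Set.prod_mono (hsub a ha ρ hρ) hballI
  obtain ⟨C, hC⟩ := hKcompact.exists_bound_of_continuousOn (hgt_cont.mono hKsub)
  -- measurability helpers
  have hmeasI : ∀ t' ∈ I, AEStronglyMeasurable (fun r => g (r, t'))
      (volume.restrict (Set.uIoc a ρ)) := by
    intro t' ht'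
    apply ContinuousOn.aestronglyMeasurable _ measurableSet_uIoc
    exact hg_cont.comp (Continuous.continuousOn (by fun_prop))
      (fun x hx => ⟨hsub a ha ρ hρ (Set.uIoc_subset_uIcc hx), ht'⟩)
  -- derivative of the fixed-endpoint parametric integral
  have hP : HasDerivAt (fun t' => ∫ r in a..ρ, g (r, t')) (∫ r in a..ρ, gt (r, t)) t := by
    have hmeas : ∀ᶠ x in 𝓝 t, AEStronglyMeasurable (fun r => g (r, x))
        (volume.restrict (Set.uIoc a ρ)) := by
      filter_upwards [hIopen.mem_nhds ht] with x hx using hmeasI x hx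
    have hmeas' : AEStronglyMeasurable (fun r => gt (r, t)) (volume.restrict (Set.uIoc a ρ)) := by
      apply ContinuousOn.aestronglyMeasurable _ measurableSet_uIoc
      exact hgt_cont.comp (Continuous.continuousOn (by fun_prop))
        (fun x hx => ⟨hsub a ha ρ hρ (Set.uIoc_subset_uIcc hx), ht⟩)
    have hbound : ∀ᵐ r ∂volume, r ∈ Set.uIoc a ρ → ∀ x ∈ Metric.ball t ε,
        ‖gt (r, x)‖ ≤ C := by
      refine Filter.Eventually.of_forall (fun r hr x hx => hC (r, x) ?_)
      exact ⟨Set.uIoc_subset_uIcc hr, Metric.ball_subset_closedBall hx⟩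
    have hdiff : ∀ᵐ r ∂volume, r ∈ Set.uIoc a ρ → ∀ x ∈ Metric.ball t ε,
        HasDerivAt (fun x' => g (r, x')) (gt (r, x)) x := by
      refine Filter.Eventually.of_forall (fun r hr x hx => ?_)
      exact hgt r (hsub a ha ρ hρ (Set.uIoc_subset_uIcc hr)) x
        (hballI (Metric.ball_subset_closedBall hx))
    exact (intervalIntegral.hasDerivAt_integral_of_dominated_loc_of_deriv_le (Metric.ball_mem_nhds t hε) hmeas
      (hg_int a ha ρ hρ t ht) hmeas' hbound (intervalIntegrable_const) hdiff).2
  -- rewrite rbar's ODE with ur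
  have hrb' : HasDerivAt rbar (-a⁻¹ * (1 - u a t - (1/2) * a * ur (a, t))) t := by
    have h := hrbarode t ht
    rwa [(hur a ha t ht).deriv] at h
  set rb' : ℝ := -a⁻¹ * (1 - u a t - (1/2) * a * ur (a, t)) with hrb'def
  -- derivative of the moving-endpoint integral
  have hQ : HasDerivAt (fun t' => ∫ r in a..(rbar t'), g (r, t')) (g (a, t) * rb') t := by
    rw [hasDerivAt_iff_isLittleO]
    have hE2 : (fun t' => g (a, t) * (rbar t' - a - (t' - t) * rb')) =o[𝓝 t]
        fun t' => t' - t := by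
      have := hasDerivAt_iff_isLittleO.1 hrb'
      simpa [smul_eq_mul] using this.const_mul_left (g (a, t))
    have hL : (0:ℝ) < |rb'| + 1 := by positivity
    have hE1 : (fun t' => (∫ r in a..(rbar t'), g (r, t')) - (rbar t' - a) * g (a, t))
        =o[𝓝 t] fun t' => t' - t := by
      rw [Asymptotics.isLittleO_iff]
      intro c hc
      set c' := c / (|rb'| + 1) with hc'def
      have hc' : 0 < c' := div_pos hc hL
      have hgc : ContinuousAt g (a, t) := hg_cont.continuousAt (hΩ.mem_nhds (hmem a ha t ht))
      have h1 : ∀ᶠ q in 𝓝 ((a, t) : ℝ × ℝ), dist (g q) (g (a, t)) < c' ∧ q ∈ Set.Ioi 0 ×ˢ I := by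
        refine Filter.Eventually.and ?_ ?_
        · exact hgc (Metric.ball_mem_nhds _ hc')
        · exact hΩ.mem_nhds (hmem a ha t ht)
      obtain ⟨δ, hδpos, hδ⟩ := Metric.eventually_nhds_iff.1 h1
      have e1 : ∀ᶠ t' in 𝓝 t, ‖rbar t' - a - (t' - t) * rb'‖ ≤ 1 * ‖t' - t‖ := by
        have := (hasDerivAt_iff_isLittleO.1 hrb').def one_pos
        simpa [smul_eq_mul] using this
      have e2 : ∀ᶠ t' in 𝓝 t, |rbar t' - a| < δ / 2 := by
        have hcont : ContinuousAt rbar t := hrb'.continuousAt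
        have : ∀ᶠ t' in 𝓝 t, dist (rbar t') a < δ / 2 :=
          hcont (Metric.ball_mem_nhds _ (half_pos hδpos))
        simpa [Real.dist_eq] using this
      have e3 : ∀ᶠ t' in 𝓝 t, dist t' t < δ / 2 :=
        Metric.eventually_nhds_iff_ball.2 ⟨δ / 2, half_pos hδpos, fun _ h => h⟩
      have e4 : ∀ᶠ t' in 𝓝 t, t' ∈ I := hIopen.mem_nhds ht
      filter_upwards [e1, e2, e3, e4] with t' h1' h2' h3' h4'
      have hb' : 0 < rbar t' := hrbarpos t' h4'
      have hintg : IntervalIntegrable (fun r => g (r, t')) volume a (rbar t') :=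
        hg_int a ha (rbar t') hb' t' h4'
      have hrw : (∫ r in a..(rbar t'), g (r, t')) - (rbar t' - a) * g (a, t)
          = ∫ r in a..(rbar t'), (g (r, t') - g (a, t)) := by
        rw [intervalIntegral.integral_sub hintg intervalIntegrable_const,
          intervalIntegral.integral_const, smul_eq_mul]
      rw [hrw]
      have hbd : ∀ x ∈ Set.uIoc a (rbar t'), ‖g (x, t') - g (a, t)‖ ≤ c' := by
        intro x hx
        have hxu : x ∈ Set.uIcc a (rbar t') := Set.uIoc_subset_uIcc hx
        have hdx : dist x a ≤ dist (rbar t') a := by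
          have := Real.dist_le_of_mem_uIcc hxu (Set.left_mem_uIcc (a := a) (b := rbar t'))
          rwa [dist_comm a (rbar t')] at this
        have hdist : dist ((x, t') : ℝ × ℝ) (a, t) < δ := by
          rw [Prod.dist_eq]
          apply max_lt
          · calc dist x a ≤ dist (rbar t') a := hdx
              _ < δ / 2 := by rwa [Real.dist_eq]
              _ < δ := by linarith
          · calc dist t' t < δ / 2 := h3'
              _ < δ := by linarith
        exact le_of_lt ((hδ hdist).1)
      calc ‖∫ r in a..(rbar t'), (g (r, t') - g (a, t))‖
          ≤ c' * |rbar t' - a| := intervalIntegral.norm_integral_le_of_norm_le_const hbd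
        _ ≤ c' * ((|rb'| + 1) * ‖t' - t‖) := by
            apply mul_le_mul_of_nonneg_left _ hc'.le
            have : |rbar t' - a| ≤ ‖rbar t' - a - (t' - t) * rb'‖ + |(t' - t) * rb'| := by
              rw [Real.norm_eq_abs]
              calc |rbar t' - a| = |(rbar t' - a - (t' - t) * rb') + (t' - t) * rb'| := by
                    ring_nf
                _ ≤ _ := abs_add_le _ _
            calc |rbar t' - a| ≤ ‖rbar t' - a - (t' - t) * rb'‖ + |(t' - t) * rb'| := this
              _ ≤ 1 * ‖t' - t‖ + |t' - t| * |rb'| := by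
                  rw [abs_mul]; exact add_le_add h1' le_rfl
              _ = (|rb'| + 1) * ‖t' - t‖ := by rw [Real.norm_eq_abs]; ring
        _ = c * ‖t' - t‖ := by
            have hcc : c' * (|rb'| + 1) = c := by
              rw [hc'def]; field_simp
            rw [← mul_assoc, hcc]
    have heq : (fun t' => (∫ r in a..(rbar t'), g (r, t'))
          - (∫ r in a..(rbar t), g (r, t)) - (t' - t) • (g (a, t) * rb'))
        = fun t' => ((∫ r in a..(rbar t'), g (r, t')) - (rbar t' - a) * g (a, t))
          + g (a, t) * (rbar t' - a - (t' - t) * rb') := by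
      funext t'
      rw [← hadef, intervalIntegral.integral_same, smul_eq_mul]
      ring
    rw [heq]
    exact hE1.add hE2
  -- derivative of z in time
  set zt : ℝ := (∫ r in a..ρ, gt (r, t)) - g (a, t) * rb' with hztdef
  have hzt : HasDerivAt (fun t' => z ρ t') zt t := by
    have hsplit : (fun t' => (∫ r in a..ρ, g (r, t')) - ∫ r in a..(rbar t'), g (r, t'))
        =ᶠ[𝓝 t] fun t' => z ρ t' := by
      filter_upwards [hIopen.mem_nhds ht] with t' ht'
      have h1 : IntervalIntegrable (fun r => g (r, t')) volume (rbar t') a :=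
        hg_int (rbar t') (hrbarpos t' ht') a ha t' ht'
      have h2 : IntervalIntegrable (fun r => g (r, t')) volume a ρ := hg_int a ha ρ hρ t' ht'
      have hadd := intervalIntegral.integral_add_adjacent_intervals h1 h2
      have hsymm : (∫ r in (rbar t')..a, g (r, t')) = -∫ r in a..(rbar t'), g (r, t') :=
        intervalIntegral.integral_symm a (rbar t')
      have hzval : z ρ t' = ∫ r in (rbar t')..ρ, g (r, t') := hz ρ t'
      rw [hzval, ← hadd, hsymm]
      ring
    exact (hP.sub hQ).congr_of_eventuallyEq hsplit.symm
  -- the time partial derivative of F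
  have hFt_eq : Ftp (z ρ t, t) = -(Real.sqrt (u ρ t)) * zt := by
    have hdF : HasFDerivAt (fun p : ℝ × ℝ => F p.1 p.2)
        (fderiv ℝ (fun p : ℝ × ℝ => F p.1 p.2) (z ρ t, t)) (z ρ t, t) :=
      ((hFsmooth.contDiffAt (hVopen.mem_nhds hmemV)).differentiableAt (by simp)).hasFDerivAt
    have hin : HasDerivAt (fun t' => ((z ρ t', t') : ℝ × ℝ)) ((zt, 1)) t :=
      hzt.prodMk (hasDerivAt_id t)
    have hchain := HasFDerivAt.comp_hasDerivAt (f := fun t' => ((z ρ t', t') : ℝ × ℝ)) t hdF hin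
    have hval : (fderiv ℝ (fun p : ℝ × ℝ => F p.1 p.2) (z ρ t, t)) (zt, 1)
        = zt * Fz (z ρ t, t) + Ftp (z ρ t, t) := by
      have h0 : ((zt, 1) : ℝ × ℝ) = zt • ((1:ℝ), (0:ℝ)) + ((0:ℝ), (1:ℝ)) := by simp
      rw [h0, map_add, _root_.map_smul]
      simp [hFzdef, hFtdef, smul_eq_mul]
    rw [hval] at hchain
    have hev : (fun t' => F (z ρ t') t') =ᶠ[𝓝 t] fun _ => ρ := by
      filter_upwards [hIopen.mem_nhds ht] with t' ht' using hF ρ hρ t' ht'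
    have hzero : HasDerivAt (fun t' => F (z ρ t') t') 0 t :=
      (hasDerivAt_const t ρ).congr_of_eventuallyEq hev
    have huniq := hzero.unique hchain
    rw [hFz_eq ρ hρ t ht] at huniq
    linarith
  -- the antiderivative Φ
  set Φ : ℝ → ℝ := fun x => -(1/2) * ((Real.sqrt (u x t))⁻¹ * ur (x, t)
      - 2 * x⁻¹ * (Real.sqrt (u x t))⁻¹ - 2 * x⁻¹ * Real.sqrt (u x t)) with hΦdef
  have hΦderiv : ∀ x > (0:ℝ),
      HasDerivAt Φ (gt (x, t) - 2 * ((x^2)⁻¹ * Real.sqrt (u x t))) x := by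
    intro x hx
    have hux : 0 < u x t := hupos x hx t ht
    have hsx : 0 < Real.sqrt (u x t) := hsqpos x hx t ht
    have h_u : HasDerivAt (fun y => u y t) (ur (x, t)) x := hur x hx t ht
    have h_s : HasDerivAt (fun y => Real.sqrt (u y t))
        (1 / (2 * Real.sqrt (u x t)) * ur (x, t)) x :=
      (Real.hasDerivAt_sqrt hux.ne').comp x h_u
    have h_si : HasDerivAt (fun y => (Real.sqrt (u y t))⁻¹)
        (-(1 / (2 * Real.sqrt (u x t)) * ur (x, t)) / (Real.sqrt (u x t))^2) x :=
      h_s.inv hsx.ne'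
    have h_ur : HasDerivAt (fun y => ur (y, t)) (urr (x, t)) x := hurr x hx t ht
    have h_inv : HasDerivAt (fun y : ℝ => y⁻¹) (-1 / x^2) x := by
      have := (hasDerivAt_id x).inv hx.ne'
      exact (hasDerivAt_inv hx.ne').congr_deriv (by ring)
    have hD := ((((h_si.mul h_ur).sub ((h_inv.const_mul (2:ℝ)).mul h_si)).sub
      ((h_inv.const_mul (2:ℝ)).mul h_s)).const_mul (-(1/2) : ℝ))
    refine hD.congr_deriv ?_
    rw [hgtval x hx t ht, hpde x hx t ht]
    set s := Real.sqrt (u x t) with hsdef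
    have hs2 : s^2 = u x t := Real.sq_sqrt hux.le
    rw [← hs2]
    field_simp
    ring
  -- integrability
  have hu_cont : ContinuousOn (fun r => u r t) (Set.Ioi 0) :=
    husmooth.continuousOn.comp
      ((continuous_id.prodMk continuous_const).continuousOn :
        ContinuousOn (fun r : ℝ => ((r, t) : ℝ × ℝ)) (Set.Ioi 0))
      (fun x hx => ⟨hx, ht⟩)
  have hcont2 : ContinuousOn (fun r => (r^2)⁻¹ * Real.sqrt (u r t)) (Set.Ioi 0) := by
    apply ContinuousOn.mul
    · exact ContinuousOn.inv₀ (by fun_prop) (fun x hx => pow_ne_zero 2 (ne_of_gt hx))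
    · exact Real.continuous_sqrt.comp_continuousOn hu_cont
  have hint2 : IntervalIntegrable (fun r => (r^2)⁻¹ * Real.sqrt (u r t)) volume a ρ :=
    (hcont2.mono (hsub a ha ρ hρ)).intervalIntegrable
  have hgt_int : IntervalIntegrable (fun r => gt (r, t)) volume a ρ := by
    apply ContinuousOn.intervalIntegrable
    exact (hgt_cont.comp (Continuous.continuousOn (by fun_prop))
      (fun x hx => ⟨hx, ht⟩)).mono (hsub a ha ρ hρ)
  have hFTC : (∫ r in a..ρ, (gt (r, t) - 2 * ((r^2)⁻¹ * Real.sqrt (u r t)))) = Φ ρ - Φ a :=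
    intervalIntegral.integral_eq_sub_of_hasDerivAt
      (fun x hx => hΦderiv x (hsub a ha ρ hρ hx))
      (hgt_int.sub (hint2.const_mul 2))
  have hkey : (∫ r in a..ρ, gt (r, t))
      = Φ ρ - Φ a + 2 * ∫ r in a..ρ, (r^2)⁻¹ * Real.sqrt (u r t) := by
    rw [intervalIntegral.integral_sub hgt_int (hint2.const_mul 2),
      intervalIntegral.integral_const_mul] at hFTC
    linarith
  -- final assembly
  rw [hG1, hG2, hG3, hG4, hG5, hG5', hFt_eq, hFzz_eq, hztdef, hkey, hrb'def]
  have hga : g (a, t) = (Real.sqrt (u a t))⁻¹ := rfl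
  rw [hga, hΦdef]
  beta_reduce
  have hsρ : 0 < Real.sqrt (u ρ t) := hsqpos ρ hρ t ht
  have hsa : 0 < Real.sqrt (u a t) := hsqpos a ha t ht
  have huρ2 : (Real.sqrt (u ρ t))^2 = u ρ t := Real.sq_sqrt (hupos ρ hρ t ht).le
  have hua2 : (Real.sqrt (u a t))^2 = u a t := Real.sq_sqrt (hupos a ha t ht).le
  set sρ := Real.sqrt (u ρ t) with hsρdef
  set sa := Real.sqrt (u a t) with hsadef
  rw [← hua2]
  set S := ∫ r in a..ρ, (r^2)⁻¹ * Real.sqrt (u r t) with hSdef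
  field_simp
  ring
end

section
/- Let u be a positive, twice continuously differentiable function of (r,t) on a neighborhood of a point (r₀,t₀) with r₀ > 0, and suppose u_t = u·u_rr − (1/2)·u_r² + r⁻²·(1−u)·(r·u_r + 2u) holds at (r₀,t₀). Then at (r₀,t₀): ∂_t(u^{−1/2}) = ∂_r[ r⁻¹·u^{−1/2}·(1 + u − (1/2)·r·u_r) ] + 2·r⁻²·u^{1/2}. -/
/-- The divergence-form identity for `∂_t(u^{−1/2})` from the proof of
Proposition 3.2: if `u` solves the rotationally symmetric Ricci flow equation
at `(r₀,t₀)`, then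
`∂_t(u^{−1/2}) = ∂_r[r⁻¹ u^{−1/2}(1 + u − (1/2) r u_r)] + 2 r⁻² u^{1/2}`
there. -/
theorem stmt_8
    (u : ℝ → ℝ → ℝ) (r₀ t₀ : ℝ) (hr₀ : 0 < r₀)
    (U : Set (ℝ × ℝ)) (hUopen : IsOpen U) (hmem : (r₀, t₀) ∈ U)
    (hupos : ∀ p ∈ U, 0 < u p.1 p.2)
    (huC2 : ContDiffOn ℝ 2 (fun p : ℝ × ℝ => u p.1 p.2) U)
    (hpde : deriv (fun t => u r₀ t) t₀
      = u r₀ t₀ * deriv (fun r => deriv (fun r' => u r' t₀) r) r₀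
        - (1/2) * (deriv (fun r => u r t₀) r₀)^2
        + (r₀^2)⁻¹ * (1 - u r₀ t₀) * (r₀ * deriv (fun r => u r t₀) r₀ + 2 * u r₀ t₀)) :
    deriv (fun t => (Real.sqrt (u r₀ t))⁻¹) t₀
      = deriv (fun r => r⁻¹ * (Real.sqrt (u r t₀))⁻¹
          * (1 + u r t₀ - (1/2) * r * deriv (fun r' => u r' t₀) r)) r₀
        + 2 * (r₀^2)⁻¹ * Real.sqrt (u r₀ t₀) := by
  set F : ℝ × ℝ → ℝ := fun p => u p.1 p.2 with hF
  have hF2 : ContDiffAt ℝ 2 F (r₀, t₀) := huC2.contDiffAt (hUopen.mem_nhds hmem)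
  have ha : 0 < u r₀ t₀ := hupos _ hmem
  set a := u r₀ t₀ with haa
  set b := deriv (fun r => u r t₀) r₀ with hbb
  set w : ℝ → ℝ := fun r => deriv (fun r' => u r' t₀) r with hww
  set c := deriv w r₀ with hcc
  set d := deriv (fun t => u r₀ t) t₀ with hdd
  -- t-slice differentiable
  have hcurve_t : DifferentiableAt ℝ (fun t : ℝ => ((r₀ : ℝ), t)) t₀ :=
    (differentiableAt_const _).prodMk differentiableAt_id
  have hFd : DifferentiableAt ℝ F (r₀, t₀) := hF2.differentiableAt (by norm_num)
  have hdt : DifferentiableAt ℝ (fun t => u r₀ t) t₀ := by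
    have := hFd.comp t₀ hcurve_t
    exact this
  have hFt : HasDerivAt (fun t => u r₀ t) d t₀ := hdt.hasDerivAt
  -- r-slice differentiable at r₀
  have hcurve_r : ∀ r : ℝ, HasDerivAt (fun r' : ℝ => (r', t₀)) ((1:ℝ), (0:ℝ)) r := by
    intro r
    exact (hasDerivAt_id r).prodMk (hasDerivAt_const r t₀)
  have hdr : DifferentiableAt ℝ (fun r => u r t₀) r₀ := by
    have := hFd.comp r₀ ((hcurve_r r₀).differentiableAt)
    exact this
  have hFr : HasDerivAt (fun r => u r t₀) b r₀ := hdr.hasDerivAt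
  -- w equals G near r₀, where G r = fderiv F (r,t₀) (1,0)
  set G : ℝ → ℝ := fun r => fderiv ℝ F (r, t₀) (1, 0) with hGG
  have hwG : ∀ᶠ r in nhds r₀, w r = G r := by
    have hUo : IsOpen {r : ℝ | (r, t₀) ∈ U} := hUopen.preimage (by fun_prop)
    filter_upwards [hUo.mem_nhds (by exact hmem : (r₀, t₀) ∈ U)] with r hr
    have hFd' : DifferentiableAt ℝ F (r, t₀) :=
      (huC2.differentiableOn (by norm_num)).differentiableAt (hUopen.mem_nhds hr)
    have hslice : HasDerivAt (fun r' => u r' t₀) (fderiv ℝ F (r, t₀) (1, 0)) r := by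
      have := hFd'.hasFDerivAt.comp_hasDerivAt r (hcurve_r r)
      exact this
    exact hslice.deriv
  have hGdiff : DifferentiableAt ℝ G r₀ := by
    have hfd : ContDiffAt ℝ 1 (fderiv ℝ F) (r₀, t₀) := hF2.fderiv_right (by norm_num)
    have h1 : DifferentiableAt ℝ (fun r : ℝ => fderiv ℝ F (r, t₀)) r₀ :=
      (hfd.differentiableAt (by norm_num)).comp r₀ ((hcurve_r r₀).differentiableAt)
    exact (ContinuousLinearMap.apply ℝ ℝ ((1:ℝ), (0:ℝ))).differentiableAt.comp r₀ h1
  have hwdiff : DifferentiableAt ℝ w r₀ := hGdiff.congr_of_eventuallyEq hwG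
  have hw : HasDerivAt w c r₀ := hwdiff.hasDerivAt
  have hwr₀ : w r₀ = b := rfl
  -- sqrt inverse derivative in t
  have hs0 : 0 < Real.sqrt a := Real.sqrt_pos.mpr ha
  have hsqrt_t : HasDerivAt (fun t => Real.sqrt (u r₀ t)) (1 / (2 * Real.sqrt a) * d) t₀ :=
    (Real.hasDerivAt_sqrt ha.ne').comp t₀ hFt
  have hLHS : HasDerivAt (fun t => (Real.sqrt (u r₀ t))⁻¹)
      (-(1 / (2 * Real.sqrt a) * d) / (Real.sqrt a) ^ 2) t₀ := hsqrt_t.inv hs0.ne'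
  -- r-direction pieces
  have hsqrt_r : HasDerivAt (fun r => Real.sqrt (u r t₀)) (1 / (2 * Real.sqrt a) * b) r₀ :=
    (Real.hasDerivAt_sqrt ha.ne').comp r₀ hFr
  have hs_r : HasDerivAt (fun r => (Real.sqrt (u r t₀))⁻¹)
      (-(1 / (2 * Real.sqrt a) * b) / (Real.sqrt a) ^ 2) r₀ := hsqrt_r.inv hs0.ne'
  have hinv : HasDerivAt (fun r : ℝ => r⁻¹) (-(r₀ ^ 2)⁻¹) r₀ := hasDerivAt_inv hr₀.ne'
  have hB : HasDerivAt (fun r => 1 + u r t₀ - (1/2) * r * w r)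
      (b - ((1/2) * (1 * w r₀ + r₀ * c))) r₀ := by
    have h1 : HasDerivAt (fun r : ℝ => (1:ℝ) + u r t₀) b r₀ := hFr.const_add 1
    have h2 : HasDerivAt (fun r : ℝ => (1/2) * (r * w r)) ((1/2) * (1 * w r₀ + r₀ * c)) r₀ :=
      ((hasDerivAt_id r₀).mul hw).const_mul (1/2)
    have e : (fun r => 1 + u r t₀ - (1/2) * r * w r) = fun r => (1 + u r t₀) - (1/2) * (r * w r) := by
      ext r; ring
    rw [e]
    exact h1.sub h2
  have hRHS : HasDerivAt (fun r => r⁻¹ * (Real.sqrt (u r t₀))⁻¹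
      * (1 + u r t₀ - (1/2) * r * w r))
      ((-(r₀ ^ 2)⁻¹ * (Real.sqrt a)⁻¹ + r₀⁻¹ * (-(1 / (2 * Real.sqrt a) * b) / (Real.sqrt a) ^ 2))
        * (1 + a - (1/2) * r₀ * w r₀)
        + r₀⁻¹ * (Real.sqrt a)⁻¹ * (b - ((1/2) * (1 * w r₀ + r₀ * c)))) r₀ :=
    (hinv.mul hs_r).mul hB
  rw [hLHS.deriv, hRHS.deriv]
  rw [hwr₀]
  have hd : d = a * c - (1/2) * b ^ 2 + (r₀^2)⁻¹ * (1 - a) * (r₀ * b + 2 * a) := hpde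
  set s := Real.sqrt a with hss
  have hs2 : s ^ 2 = a := Real.sq_sqrt ha.le
  rw [hd, ← hs2]
  field_simp
  ring
end

section
/- Let u be a positive smooth function of (r,t) near a point (r₀,t₀) with r₀ > 0, satisfying u_t = u·u_rr − (1/2)·u_r² + r⁻²·(1−u)·(r·u_r + 2u) at (r₀,t₀). Set v := r⁻¹·(1 − u − (1/2)·r·u_r) and R := 2r⁻²·(1 − u − r·u_r), and suppose 1 + (r₀/2)·u⁻¹·v ≠ 0 at (r₀,t₀). Then at (r₀,t₀): ∂_t(R + u⁻¹·v²) + (v/2)·(1 + (r/2)·u⁻¹·v)⁻¹·∂_r(R + u⁻¹·v²) = (1 + (r/2)·u⁻¹·v)·( R_t − (2/r)·u⁻¹·u_t·v ). -/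
set_option maxHeartbeats 2000000


/-- The identity from the proof of Proposition 4.3: along a solution of the
rotationally symmetric Ricci flow equation, with `v = r⁻¹(1 − u − (1/2) r u_r)`
and `R = 2r⁻²(1 − u − r u_r)`, one has
`∂_t(R + u⁻¹v²) + (v/2)(1 + (r/2)u⁻¹v)⁻¹ ∂_r(R + u⁻¹v²)
  = (1 + (r/2)u⁻¹v)(R_t − (2/r)u⁻¹u_t v)`. -/
theorem stmt_9
    (u : ℝ → ℝ → ℝ) (r₀ t₀ : ℝ) (hr₀ : 0 < r₀)
    (U : Set (ℝ × ℝ)) (hUopen : IsOpen U) (hmem : (r₀, t₀) ∈ U)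
    (hupos : ∀ p ∈ U, 0 < u p.1 p.2)
    (husmooth : ContDiffOn ℝ (⊤ : ℕ∞) (fun p : ℝ × ℝ => u p.1 p.2) U)
    (hpde : deriv (fun t => u r₀ t) t₀
      = u r₀ t₀ * deriv (fun r => deriv (fun r' => u r' t₀) r) r₀
        - (1/2) * (deriv (fun r => u r t₀) r₀)^2
        + (r₀^2)⁻¹ * (1 - u r₀ t₀) * (r₀ * deriv (fun r => u r t₀) r₀ + 2 * u r₀ t₀))
    (v R : ℝ → ℝ → ℝ)
    (hv : ∀ r t : ℝ, v r t = r⁻¹ * (1 - u r t - (1/2) * r * deriv (fun r' => u r' t) r))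
    (hR : ∀ r t : ℝ, R r t = 2 * (r^2)⁻¹ * (1 - u r t - r * deriv (fun r' => u r' t) r))
    (hne : 1 + (r₀ / 2) * (u r₀ t₀)⁻¹ * v r₀ t₀ ≠ 0) :
    deriv (fun t => R r₀ t + (u r₀ t)⁻¹ * (v r₀ t)^2) t₀
      + (v r₀ t₀ / 2) * (1 + (r₀ / 2) * (u r₀ t₀)⁻¹ * v r₀ t₀)⁻¹
          * deriv (fun r => R r t₀ + (u r t₀)⁻¹ * (v r t₀)^2) r₀
    = (1 + (r₀ / 2) * (u r₀ t₀)⁻¹ * v r₀ t₀)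
        * (deriv (fun t => R r₀ t) t₀
            - (2 / r₀) * (u r₀ t₀)⁻¹ * deriv (fun t => u r₀ t) t₀ * v r₀ t₀) := by
  have hUnhds : U ∈ nhds (r₀, t₀) := hUopen.mem_nhds hmem
  set F : ℝ × ℝ → ℝ := fun p => u p.1 p.2 with hFdef
  set G : ℝ × ℝ → ℝ := fun p => fderiv ℝ F p (1, 0) with hGdef
  have hFat : ContDiffAt ℝ (⊤ : ℕ∞) F (r₀, t₀) := husmooth.contDiffAt hUnhds
  have hGat : ContDiffAt ℝ (⊤ : ℕ∞) G (r₀, t₀) :=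
    (hFat.fderiv_right (m := (⊤ : ℕ∞)) (by simp)).clm_apply contDiffAt_const
  have hFdiff : ∀ p ∈ U, DifferentiableAt ℝ F p := fun p hp =>
    (husmooth.contDiffAt (hUopen.mem_nhds hp)).differentiableAt (by simp)
  -- the radial derivative of u coincides with G on U
  have hGd : ∀ r t : ℝ, (r, t) ∈ U → HasDerivAt (fun r' => u r' t) (G (r, t)) r := by
    intro r t hp
    have h1 : HasDerivAt (fun r' : ℝ => (r', t)) ((1 : ℝ), (0 : ℝ)) r :=
      (hasDerivAt_id r).prodMk (hasDerivAt_const r t)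
    simpa [Function.comp_def] using (hFdiff _ hp).hasFDerivAt.comp_hasDerivAt r h1
  have hGdiff : DifferentiableAt ℝ G (r₀, t₀) := hGat.differentiableAt (by simp)
  have hpatht : HasDerivAt (fun t : ℝ => ((r₀ : ℝ), t)) ((0 : ℝ), (1 : ℝ)) t₀ :=
    (hasDerivAt_const t₀ r₀).prodMk (hasDerivAt_id t₀)
  have hpathr : HasDerivAt (fun r : ℝ => ((r : ℝ), t₀)) ((1 : ℝ), (0 : ℝ)) r₀ :=
    (hasDerivAt_id r₀).prodMk (hasDerivAt_const r₀ t₀)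
  -- partial derivatives
  have hUt : HasDerivAt (fun t => u r₀ t) (fderiv ℝ F (r₀, t₀) (0, 1)) t₀ := by
    simpa [Function.comp_def] using (hFdiff _ hmem).hasFDerivAt.comp_hasDerivAt t₀ hpatht
  have hUr : HasDerivAt (fun r => u r t₀) (G (r₀, t₀)) r₀ := hGd r₀ t₀ hmem
  have hGt : HasDerivAt (fun t => G (r₀, t)) (fderiv ℝ G (r₀, t₀) (0, 1)) t₀ := by
    simpa [Function.comp_def] using hGdiff.hasFDerivAt.comp_hasDerivAt t₀ hpatht
  have hGr : HasDerivAt (fun r => G (r, t₀)) (fderiv ℝ G (r₀, t₀) (1, 0)) r₀ := by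
    simpa [Function.comp_def] using hGdiff.hasFDerivAt.comp_hasDerivAt r₀ hpathr
  set a : ℝ := u r₀ t₀ with ha_def
  set b : ℝ := G (r₀, t₀) with hb_def
  set c : ℝ := fderiv ℝ F (r₀, t₀) (0, 1) with hc_def
  set d : ℝ := fderiv ℝ G (r₀, t₀) (1, 0) with hd_def
  set e : ℝ := fderiv ℝ G (r₀, t₀) (0, 1) with he_def
  have hapos : (0 : ℝ) < a := hupos _ hmem
  have ha : a ≠ 0 := ne_of_gt hapos
  have hr : r₀ ≠ 0 := ne_of_gt hr₀
  -- eventual memberships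
  have hev_t : ∀ᶠ t in nhds t₀, (r₀, t) ∈ U := by
    have hc : Continuous fun t : ℝ => ((r₀ : ℝ), t) := continuous_const.prodMk continuous_id
    exact hc.continuousAt.preimage_mem_nhds hUnhds
  have hev_r : ∀ᶠ r in nhds r₀, (r, t₀) ∈ U := by
    have hc : Continuous fun r : ℝ => ((r : ℝ), t₀) := continuous_id.prodMk continuous_const
    exact hc.continuousAt.preimage_mem_nhds hUnhds
  -- rewrite the pde derivatives
  have hmix : deriv (fun r => deriv (fun r' => u r' t₀) r) r₀ = d := by
    have heq : (fun r => deriv (fun r' => u r' t₀) r) =ᶠ[nhds r₀] fun r => G (r, t₀) := by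
      filter_upwards [hev_r] with r hrU
      exact (hGd r t₀ hrU).deriv
    exact heq.deriv_eq.trans hGr.deriv
  rw [hUt.deriv, hUr.deriv, hmix] at hpde
  -- time derivative of R + u⁻¹ v²
  have Ht := (((hasDerivAt_const t₀ (1:ℝ)).sub hUt).sub (hGt.const_mul r₀)).const_mul
      (2 * (r₀^2)⁻¹) |>.add
    ((hUt.inv ha).mul
      (((((hasDerivAt_const t₀ (1:ℝ)).sub hUt).sub (hGt.const_mul (1/2 * r₀))).const_mul
        r₀⁻¹).pow 2))
  have heq_t : (fun t => R r₀ t + (u r₀ t)⁻¹ * (v r₀ t)^2)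
      =ᶠ[nhds t₀] fun t => 2 * (r₀^2)⁻¹ * (1 - u r₀ t - r₀ * G (r₀, t))
        + (u r₀ t)⁻¹ * (r₀⁻¹ * (1 - u r₀ t - 1/2 * r₀ * G (r₀, t)))^2 := by
    filter_upwards [hev_t] with t htU
    rw [hR, hv, (hGd r₀ t htU).deriv]
  have Dt_eq := heq_t.deriv_eq.trans Ht.deriv
  -- radial derivative of R + u⁻¹ v²
  have hinvsq : HasDerivAt (fun r : ℝ => (r^2)⁻¹) (-(2 * r₀ ^ 1 * 1) / (r₀^2)^2) r₀ :=
    ((hasDerivAt_id r₀).pow 2).inv (pow_ne_zero 2 hr)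
  have hinvr : HasDerivAt (fun r : ℝ => r⁻¹) (-(r₀^2)⁻¹) r₀ := hasDerivAt_inv hr
  have Hr := ((hinvsq.const_mul 2).mul
      (((hasDerivAt_const r₀ (1:ℝ)).sub hUr).sub ((hasDerivAt_id r₀).mul hGr))).add
    ((hUr.inv ha).mul
      ((hinvr.mul (((hasDerivAt_const r₀ (1:ℝ)).sub hUr).sub
        (((hasDerivAt_id r₀).const_mul (1/2)).mul hGr))).pow 2))
  have heq_r : (fun r => R r t₀ + (u r t₀)⁻¹ * (v r t₀)^2)
      =ᶠ[nhds r₀] fun r => 2 * (r^2)⁻¹ * (1 - u r t₀ - r * G (r, t₀))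
        + (u r t₀)⁻¹ * (r⁻¹ * (1 - u r t₀ - 1/2 * r * G (r, t₀)))^2 := by
    filter_upwards [hev_r] with r hrU
    rw [hR, hv, (hGd r t₀ hrU).deriv]
  have Dr_eq := heq_r.deriv_eq.trans Hr.deriv
  -- time derivative of R alone
  have HRt := (((hasDerivAt_const t₀ (1:ℝ)).sub hUt).sub (hGt.const_mul r₀)).const_mul
      (2 * (r₀^2)⁻¹)
  have heq_Rt : (fun t => R r₀ t)
      =ᶠ[nhds t₀] fun t => 2 * (r₀^2)⁻¹ * (1 - u r₀ t - r₀ * G (r₀, t)) := by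
    filter_upwards [hev_t] with t htU
    rw [hR, (hGd r₀ t htU).deriv]
  have Rt_eq := heq_Rt.deriv_eq.trans HRt.deriv
  -- assemble
  have hv0 : v r₀ t₀ = r₀⁻¹ * (1 - a - 1/2 * r₀ * b) := by
    rw [hv, hUr.deriv]
  rw [Dt_eq, Dr_eq, Rt_eq, hUt.deriv, hv0]
  rw [hv0] at hne
  have hKval : 1 + r₀ / 2 * a⁻¹ * (r₀⁻¹ * (1 - a - 1 / 2 * r₀ * b))
      = (a + 1 - 1/2 * r₀ * b) / (2 * a) := by
    field_simp; ring
  have hK2 : a + 1 - 1/2 * r₀ * b ≠ 0 := by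
    intro h; exact hne (by rw [hKval, h, zero_div])
  rw [hKval, inv_div, hpde]
  set k : ℝ := a + 1 - 1/2 * r₀ * b with hk
  push_cast [Pi.sub_apply, Pi.inv_apply, Pi.pow_apply, Pi.mul_apply, Pi.add_apply, id, ← ha_def, ← hb_def]
  field_simp [ha, hr, hK2]
  rw [hk]
  ring
end

section
/- Let u be a positive smooth function of (r,t) near a point (r₀,t₀) with r₀ > 0, satisfying u_t = u·u_rr − (1/2)·u_r² + r⁻²·(1−u)·(r·u_r + 2u) at (r₀,t₀). Set v := r⁻¹·(1 − u − (1/2)·r·u_r) and R := 2r⁻²·(1 − u − r·u_r). Then at (r₀,t₀): ∂_r(R + u⁻¹·v²) = −(2/r)·(1 + (r/2)·u⁻¹·v)·u⁻¹·u_t. -/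
/-- The key identity from Section 4: along a solution of the rotationally
symmetric Ricci flow equation, with `v = r⁻¹(1 − u − (1/2) r u_r)` and
`R = 2r⁻²(1 − u − r u_r)`, one has
`∂_r(R + u⁻¹v²) = −(2/r)(1 + (r/2)u⁻¹v) u⁻¹ u_t`. -/
theorem stmt_10
    (u : ℝ → ℝ → ℝ) (r₀ t₀ : ℝ) (hr₀ : 0 < r₀)
    (U : Set (ℝ × ℝ)) (hUopen : IsOpen U) (hmem : (r₀, t₀) ∈ U)
    (hupos : ∀ p ∈ U, 0 < u p.1 p.2)
    (husmooth : ContDiffOn ℝ (⊤ : ℕ∞) (fun p : ℝ × ℝ => u p.1 p.2) U)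
    (hpde : deriv (fun t => u r₀ t) t₀
      = u r₀ t₀ * deriv (fun r => deriv (fun r' => u r' t₀) r) r₀
        - (1/2) * (deriv (fun r => u r t₀) r₀)^2
        + (r₀^2)⁻¹ * (1 - u r₀ t₀) * (r₀ * deriv (fun r => u r t₀) r₀ + 2 * u r₀ t₀))
    (v R : ℝ → ℝ → ℝ)
    (hv : ∀ r t : ℝ, v r t = r⁻¹ * (1 - u r t - (1/2) * r * deriv (fun r' => u r' t) r))
    (hR : ∀ r t : ℝ, R r t = 2 * (r^2)⁻¹ * (1 - u r t - r * deriv (fun r' => u r' t) r)) :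
    deriv (fun r => R r t₀ + (u r t₀)⁻¹ * (v r t₀)^2) r₀
      = -(2 / r₀) * (1 + (r₀ / 2) * (u r₀ t₀)⁻¹ * v r₀ t₀)
          * (u r₀ t₀)⁻¹ * deriv (fun t => u r₀ t) t₀ := by
  have hr0 : r₀ ≠ 0 := hr₀.ne'
  have hune : u r₀ t₀ ≠ 0 := (hupos _ hmem).ne'
  -- find a ball around (r₀,t₀) inside U
  obtain ⟨ε, hε, hball⟩ := Metric.isOpen_iff.1 hUopen _ hmem
  have hmaps : ∀ r ∈ Metric.ball r₀ ε, (r, t₀) ∈ U := by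
    intro r hr
    apply hball
    simpa [Metric.mem_ball, Prod.dist_eq, dist_self, hε] using hr
  have hr₀s : r₀ ∈ Metric.ball r₀ ε := Metric.mem_ball_self hε
  -- smoothness of r ↦ u r t₀ on the ball
  have hf : ContDiffOn ℝ (⊤ : ℕ∞) (fun r : ℝ => u r t₀) (Metric.ball r₀ ε) := by
    have h1 : ContDiff ℝ (⊤ : ℕ∞) (fun r : ℝ => ((r, t₀) : ℝ × ℝ)) :=
      contDiff_id.prodMk contDiff_const
    exact husmooth.comp h1.contDiffOn hmaps
  have hfd : HasDerivAt (fun r => u r t₀) (deriv (fun r => u r t₀) r₀) r₀ := by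
    have := (hf.differentiableOn (by simp)).differentiableAt
      (Metric.isOpen_ball.mem_nhds hr₀s)
    exact this.hasDerivAt
  have hf' : ContDiffOn ℝ (⊤ : ℕ∞) (deriv (fun r : ℝ => u r t₀)) (Metric.ball r₀ ε) :=
    hf.deriv_of_isOpen Metric.isOpen_ball (by simp)
  have hfd' : HasDerivAt (deriv (fun r => u r t₀))
      (deriv (deriv (fun r => u r t₀)) r₀) r₀ := by
    have := (hf'.differentiableOn (by simp)).differentiableAt
      (Metric.isOpen_ball.mem_nhds hr₀s)
    exact this.hasDerivAt
  set a := u r₀ t₀ with ha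
  set b := deriv (fun r => u r t₀) r₀ with hb
  set c := deriv (deriv (fun r => u r t₀)) r₀ with hc
  -- derivatives of the pieces
  have hA : HasDerivAt (fun r => 1 - u r t₀ - r * deriv (fun r' => u r' t₀) r)
      (-b - (b + r₀ * c)) r₀ := by
    have := ((hasDerivAt_const r₀ (1:ℝ)).sub hfd).sub ((hasDerivAt_id r₀).mul hfd')
    refine this.congr_deriv ?_
    simp only [id_eq]
    ring
  have hinv2 : HasDerivAt (fun r : ℝ => (r^2)⁻¹) (-(2*r₀)/(r₀^2)^2) r₀ := by
    have := (hasDerivAt_pow 2 r₀).inv (pow_ne_zero 2 hr0)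
    refine this.congr_deriv ?_
    push_cast
    ring
  have hT1 : HasDerivAt
      (fun r => 2 * (r^2)⁻¹ * (1 - u r t₀ - r * deriv (fun r' => u r' t₀) r))
      ((2 * (-(2*r₀)/(r₀^2)^2)) * (1 - a - r₀ * b)
        + (2 * (r₀^2)⁻¹) * (-b - (b + r₀ * c))) r₀ := by
    have := ((hasDerivAt_const r₀ (2:ℝ)).mul hinv2).mul hA
    refine this.congr_deriv ?_
    simp only [Pi.mul_apply, ← ha, ← hb]
    ring
  have hC : HasDerivAt (fun r => (u r t₀)⁻¹) (-b / a^2) r₀ := hfd.inv hune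
  have hw : HasDerivAt
      (fun r => 1 - u r t₀ - (1/2) * r * deriv (fun r' => u r' t₀) r)
      (-b - ((1/2) * b + (1/2) * r₀ * c)) r₀ := by
    have := ((hasDerivAt_const r₀ (1:ℝ)).sub hfd).sub
      (((hasDerivAt_const r₀ ((1:ℝ)/2)).mul (hasDerivAt_id r₀)).mul hfd')
    refine this.congr_deriv ?_
    simp only [Pi.mul_apply, id_eq, ← hb]
    ring
  have hV : HasDerivAt
      (fun r => r⁻¹ * (1 - u r t₀ - (1/2) * r * deriv (fun r' => u r' t₀) r))
      ((-(r₀^2)⁻¹) * (1 - a - (1/2) * r₀ * b)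
        + r₀⁻¹ * (-b - ((1/2) * b + (1/2) * r₀ * c))) r₀ := by
    exact (hasDerivAt_inv hr0).mul hw
  have hV2 : HasDerivAt
      (fun r => (r⁻¹ * (1 - u r t₀ - (1/2) * r * deriv (fun r' => u r' t₀) r))^2)
      (2 * (r₀⁻¹ * (1 - a - (1/2) * r₀ * b))
        * ((-(r₀^2)⁻¹) * (1 - a - (1/2) * r₀ * b)
          + r₀⁻¹ * (-b - ((1/2) * b + (1/2) * r₀ * c)))) r₀ := by
    have := hV.pow 2
    refine this.congr_deriv ?_
    push_cast
    ring
  have htot := hT1.add (hC.mul hV2)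
  have hfun : (fun r => R r t₀ + (u r t₀)⁻¹ * (v r t₀)^2)
      = fun r => 2 * (r^2)⁻¹ * (1 - u r t₀ - r * deriv (fun r' => u r' t₀) r)
        + (u r t₀)⁻¹ * (r⁻¹ * (1 - u r t₀ - (1/2) * r * deriv (fun r' => u r' t₀) r))^2 := by
    funext r
    rw [hR, hv]
  rw [hfun]
  erw [htot.deriv]
  rw [hpde, hv r₀ t₀, ← ha, ← hb]
  field_simp
  ring
end

section
/- Let u be a positive smooth function of (r,t) on a neighborhood of (r₀,t₀) with r₀ > 0, satisfying u_t = u·u_rr − (1/2)·u_r² + r⁻²·(1−u)·(r·u_r + 2u) on that neighborhood, and suppose 1 + u − (1/2)·r·u_r ≠ 0 at (r₀,t₀). Set v := r⁻¹·(1 − u − (1/2)·r·u_r) and R := 2r⁻²·(1 − u − r·u_r). Then at (r₀,t₀): ∂_t(R + u⁻¹·v²) = u·∂_r∂_r(R + u⁻¹·v²) + (2/r)·u·∂_r(R + u⁻¹·v²) + Ξ·∂_r(R + u⁻¹·v²), where Ξ := (1 + u − (1/2)·r·u_r)⁻¹·[ (1/r)·(1 − (1/2)·r·u_r)·(1 −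 u − (1/2)·r·u_r) − u³·∂_r( u⁻²·(1 + u − (1/2)·r·u_r) ) ]. -/
/-- first spatial derivative value of `W` -/
noncomputable def Wrv (x a b c : ℝ) : ℝ :=
  -4*(x^3)⁻¹*(1 - a - x*b) + 2*(x^2)⁻¹*(-2*b - x*c)
  - b*(a^2)⁻¹*(x^2)⁻¹*(1 - a - (1/2)*x*b)^2
  - 2*a⁻¹*(x^3)⁻¹*(1 - a - (1/2)*x*b)^2
  + 2*a⁻¹*(x^2)⁻¹*(1 - a - (1/2)*x*b)*(-(3/2)*b - (1/2)*x*c)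

/-- second spatial derivative value of `W` -/
noncomputable def Wrrv (x a b c d : ℝ) : ℝ :=
  (12*(x^4)⁻¹*(1 - a - x*b) - 4*(x^3)⁻¹*(-2*b - x*c))
  + (-(4*(x^3)⁻¹*(-2*b - x*c)) + 2*(x^2)⁻¹*(-(3*c) - x*d))
  + (-(c*(a^2)⁻¹*(x^2)⁻¹*(1 - a - (x/2)*b)^2) + 2*b^2*(a^3)⁻¹*(x^2)⁻¹*(1 - a - (x/2)*b)^2
     + 2*b*(a^2)⁻¹*(x^3)⁻¹*(1 - a - (x/2)*b)^2
     - 2*b*(a^2)⁻¹*(x^2)⁻¹*(1 - a - (x/2)*b)*(-(3/2*b) - (x/2)*c))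
  + (2*b*(a^2)⁻¹*(x^3)⁻¹*(1 - a - (x/2)*b)^2 + 6*a⁻¹*(x^4)⁻¹*(1 - a - (x/2)*b)^2
     - 4*a⁻¹*(x^3)⁻¹*(1 - a - (x/2)*b)*(-(3/2*b) - (x/2)*c))
  + (-(2*b*(a^2)⁻¹*(x^2)⁻¹*(1 - a - (x/2)*b)*(-(3/2*b) - (x/2)*c))
     - 4*a⁻¹*(x^3)⁻¹*(1 - a - (x/2)*b)*(-(3/2*b) - (x/2)*c)
     + 2*a⁻¹*(x^2)⁻¹*((-(3/2*b) - (x/2)*c)^2 + (1 - a - (x/2)*b)*(-(2*c) - (x/2)*d)))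

/-- time derivative of `u` (value given by the PDE) -/
noncomputable def Tv (x a b c : ℝ) : ℝ := a*c - (1/2)*b^2 + (x^2)⁻¹*(1 - a)*(x*b + 2*a)

/-- mixed derivative value `∂_r ∂_t u` -/
noncomputable def Mv (x a b c d : ℝ) : ℝ :=
  a*d - 2*(x^3)⁻¹*(1 - a)*(x*b + 2*a) - (x^2)⁻¹*b*(x*b + 2*a) + (x^2)⁻¹*(1 - a)*(3*b + x*c)

/-- the inner derivative appearing in `Ξ` -/
noncomputable def Ev (x a b c : ℝ) : ℝ := -2*b*(a^3)⁻¹*(1 + a - (1/2)*x*b) + (a^2)⁻¹*((1/2)*b - (1/2)*x*c)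

/-- time derivative value of `W` -/
noncomputable def Wtv (x a b T M : ℝ) : ℝ :=
  2*(x^2)⁻¹*(-T - x*M) - T*(a^2)⁻¹*(x^2)⁻¹*(1 - a - (1/2)*x*b)^2
  + a⁻¹*(x^2)⁻¹*2*(1 - a - (1/2)*x*b)*(-T - (1/2)*x*M)

set_option maxHeartbeats 4000000 in
/-- the key algebraic identity, cleared of the `Ξ` denominator -/
theorem key_alg0 (x a b c d : ℝ) (hx : x ≠ 0) (ha : a ≠ 0) :
    (x⁻¹*(1 - (1/2)*x*b)*(1 - a - (1/2)*x*b) - a^3 * Ev x a b c) * Wrv x a b c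
      = (1 + a - (1/2)*x*b)
          * (Wtv x a b (Tv x a b c) (Mv x a b c d)
              - a * Wrrv x a b c d - (2/x)*a*Wrv x a b c) := by
  unfold Wtv Tv Mv Wrrv Wrv Ev
  field_simp
  ring

/-- the key algebraic identity -/
theorem key_alg (x a b c d : ℝ) (hx : x ≠ 0) (ha : a ≠ 0)
    (hD : 1 + a - (1/2)*x*b ≠ 0) :
    Wtv x a b (Tv x a b c) (Mv x a b c d)
      = a * Wrrv x a b c d + (2/x)*a*Wrv x a b c
        + ((1 + a - (1/2)*x*b)⁻¹
            * (x⁻¹*(1 - (1/2)*x*b)*(1 - a - (1/2)*x*b) - a^3 * Ev x a b c)) * Wrv x a b c := by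
  have h := key_alg0 x a b c d hx ha
  have h2 : ((1 + a - (1/2)*x*b)⁻¹
      * (x⁻¹*(1 - (1/2)*x*b)*(1 - a - (1/2)*x*b) - a^3 * Ev x a b c)) * Wrv x a b c
      = Wtv x a b (Tv x a b c) (Mv x a b c d)
        - a * Wrrv x a b c d - (2/x)*a*Wrv x a b c := by
    rw [mul_assoc, h, ← mul_assoc, inv_mul_cancel₀ hD, one_mul]
  linarith [h2]

set_option maxHeartbeats 1000000 in
theorem aux1 (f : ℝ → ℝ) (r : ℝ)
    (hd_f : HasDerivAt f (deriv f r) r)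
    (hd_f1 : HasDerivAt (deriv f) (deriv (deriv f) r) r)
    (hrne : r ≠ 0) (hfne : f r ≠ 0) :
    HasDerivAt
      (fun r' => 2*(r'^2)⁻¹*(1 - f r' - r' * deriv f r')
        + (f r')⁻¹*(r'⁻¹*(1 - f r' - (1/2)*r'*deriv f r'))^2)
      (Wrv r (f r) (deriv f r) (deriv (deriv f) r)) r := by
  have h1 : HasDerivAt (fun r' : ℝ => (r'^2)⁻¹) (-((2:ℕ)*r^1) / (r^2)^2) r :=
    (hasDerivAt_pow 2 r).inv (pow_ne_zero 2 hrne)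
  have hP : HasDerivAt (fun r' => 1 - f r' - r' * deriv f r')
      (0 - deriv f r - (1 * deriv f r + r * deriv (deriv f) r)) r :=
    ((hasDerivAt_const r (1:ℝ)).sub hd_f).sub ((hasDerivAt_id r).mul hd_f1)
  have hQ : HasDerivAt (fun r' => 1 - f r' - 1/2 * r' * deriv f r')
      (0 - deriv f r - ((1/2*1) * deriv f r + (1/2 * r) * deriv (deriv f) r)) r :=
    ((hasDerivAt_const r (1:ℝ)).sub hd_f).sub (((hasDerivAt_id r).const_mul (1/2)).mul hd_f1)
  have hvv := ((hasDerivAt_id r).inv hrne).mul hQ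
  have hv2 := hvv.pow 2
  have hinv : HasDerivAt (fun r' => (f r')⁻¹) (-(deriv f r)/(f r)^2) r := hd_f.inv hfne
  have H := ((h1.const_mul 2).mul hP).add (hinv.mul hv2)
  refine H.congr_deriv ?_
  unfold Wrv
  norm_num
  field_simp
  ring

set_option maxHeartbeats 2000000 in
theorem aux2 (f : ℝ → ℝ) (x : ℝ)
    (hd_f : HasDerivAt f (deriv f x) x)
    (hd_f1 : HasDerivAt (deriv f) (deriv (deriv f) x) x)
    (hd_f2 : HasDerivAt (deriv (deriv f)) (deriv (deriv (deriv f)) x) x)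
    (hrne : x ≠ 0) (hfne : f x ≠ 0) :
    HasDerivAt (fun r => Wrv r (f r) (deriv f r) (deriv (deriv f) r))
      (Wrrv x (f x) (deriv f x) (deriv (deriv f) x) (deriv (deriv (deriv f)) x)) x := by
  simp only [Wrv, Wrrv]
  have hx2 : HasDerivAt (fun r : ℝ => (r^2)⁻¹) (-((2:ℕ)*x^1) / (x^2)^2) x :=
    (hasDerivAt_pow 2 x).inv (pow_ne_zero 2 hrne)
  have hx3 : HasDerivAt (fun r : ℝ => (r^3)⁻¹) (-((3:ℕ)*x^2) / (x^3)^2) x :=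
    (hasDerivAt_pow 3 x).inv (pow_ne_zero 3 hrne)
  have hP : HasDerivAt (fun r => 1 - f r - r * deriv f r)
      (0 - (deriv f x) - (1 * (deriv f x) + x * (deriv (deriv f) x))) x :=
    ((hasDerivAt_const x (1:ℝ)).sub hd_f).sub ((hasDerivAt_id x).mul hd_f1)
  have hP1 : HasDerivAt (fun r => -2*deriv f r - r*deriv (deriv f) r)
      ((-2) * (deriv (deriv f) x) - (1 * (deriv (deriv f) x) + x * (deriv (deriv (deriv f)) x))) x :=
    (hd_f1.const_mul ((-2):ℝ)).sub ((hasDerivAt_id x).mul hd_f2)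
  have hQ : HasDerivAt (fun r => 1 - f r - 1/2 * r * deriv f r)
      (0 - (deriv f x) - ((1/2*1) * (deriv f x) + (1/2 * x) * (deriv (deriv f) x))) x :=
    ((hasDerivAt_const x (1:ℝ)).sub hd_f).sub (((hasDerivAt_id x).const_mul (1/2)).mul hd_f1)
  have hQ1 : HasDerivAt (fun r => -(3/2)*deriv f r - (1/2)*r*deriv (deriv f) r)
      ((-(3/2)) * (deriv (deriv f) x) - ((1/2*1) * (deriv (deriv f) x) + (1/2 * x) * (deriv (deriv (deriv f)) x))) x :=
    (hd_f1.const_mul ((-(3/2)) : ℝ)).sub (((hasDerivAt_id x).const_mul (1/2)).mul hd_f2)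
  have hfinv : HasDerivAt (fun r => (f r)⁻¹) (-(deriv f x)/(f x)^2) x := hd_f.inv hfne
  have hf2inv : HasDerivAt (fun r => ((f r)^2)⁻¹) (-((2:ℕ)*(f x)^1*(deriv f x))/((f x)^2)^2) x :=
    (hd_f.pow 2).inv (pow_ne_zero 2 hfne)
  have t1 := ((hx3.const_mul (4:ℝ)).mul hP).neg
  have t2 := (hx2.const_mul (2:ℝ)).mul hP1
  have t3 := ((hd_f1.mul hf2inv).mul hx2).mul (hQ.pow 2)
  have t4 := ((hfinv.const_mul (2:ℝ)).mul hx3).mul (hQ.pow 2)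
  have t5 := (((hfinv.const_mul (2:ℝ)).mul hx2).mul hQ).mul hQ1
  have H := (((t1.add t2).sub t3).sub t4).add t5
  convert H using 1
  · rfl
  · rfl
  · funext r; simp only [Pi.add_apply, Pi.sub_apply, Pi.mul_apply, Pi.neg_apply, Pi.pow_apply]; ring
  norm_num
  field_simp
  ring

set_option maxHeartbeats 1000000 in
theorem auxM (f : ℝ → ℝ) (x : ℝ)
    (hd_f : HasDerivAt f (deriv f x) x)
    (hd_f1 : HasDerivAt (deriv f) (deriv (deriv f) x) x)
    (hd_f2 : HasDerivAt (deriv (deriv f)) (deriv (deriv (deriv f)) x) x)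
    (hrne : x ≠ 0) :
    HasDerivAt (fun r => f r * deriv (fun r1 => deriv f r1) r - (1/2)*(deriv f r)^2
        + (r^2)⁻¹*(1 - f r)*(r*deriv f r + 2*f r))
      (Mv x (f x) (deriv f x) (deriv (deriv f) x) (deriv (deriv (deriv f)) x)) x := by
  have hx2 : HasDerivAt (fun r : ℝ => (r^2)⁻¹) (-((2:ℕ)*x^1) / (x^2)^2) x :=
    (hasDerivAt_pow 2 x).inv (pow_ne_zero 2 hrne)
  have hmid : HasDerivAt (fun r1 => deriv f r1) (deriv (deriv f) x) x := hd_f1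
  have hdd : HasDerivAt (fun r => deriv (fun r1 => deriv f r1) r) (deriv (deriv (deriv f)) x) x := hd_f2
  have t1 := hd_f.mul hdd
  have t2 := (hd_f1.pow 2).const_mul ((1:ℝ)/2)
  have hone := (hasDerivAt_const x (1:ℝ)).sub hd_f
  have hlin := ((hasDerivAt_id x).mul hd_f1).add (hd_f.const_mul (2:ℝ))
  have t3 := (hx2.mul hone).mul hlin
  have H := (t1.sub t2).add t3
  refine H.congr_deriv ?_
  unfold Mv
  norm_num
  field_simp
  ring

theorem auxXi (f : ℝ → ℝ) (x : ℝ)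
    (hd_f : HasDerivAt f (deriv f x) x)
    (hd_f1 : HasDerivAt (deriv f) (deriv (deriv f) x) x)
    (hfne : f x ≠ 0) :
    HasDerivAt (fun r => ((f r)^2)⁻¹ * (1 + f r - (1/2)*r*deriv f r))
      (Ev x (f x) (deriv f x) (deriv (deriv f) x)) x := by
  have hf2inv : HasDerivAt (fun r => ((f r)^2)⁻¹) (-((2:ℕ)*(f x)^1*(deriv f x))/((f x)^2)^2) x :=
    (hd_f.pow 2).inv (pow_ne_zero 2 hfne)
  have hlin := ((hasDerivAt_const x (1:ℝ)).add hd_f).sub (((hasDerivAt_id x).const_mul (1/2)).mul hd_f1)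
  have H := hf2inv.mul hlin
  refine H.congr_deriv ?_
  unfold Ev
  norm_num
  field_simp
  ring

theorem auxT (h k : ℝ → ℝ) (x T M t₀ : ℝ)
    (hh : HasDerivAt h T t₀) (hk : HasDerivAt k M t₀)
    (hx : x ≠ 0) (hane : h t₀ ≠ 0) :
    HasDerivAt
      (fun t => 2*(x^2)⁻¹*(1 - h t - x * k t) + (h t)⁻¹*(x⁻¹*(1 - h t - (1/2)*x*k t))^2)
      (Wtv x (h t₀) (k t₀) T M) t₀ := by
  have hP := ((hasDerivAt_const t₀ (1:ℝ)).sub hh).sub (hk.const_mul x)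
  have t1 := hP.const_mul (2*(x^2)⁻¹)
  have hQ := ((hasDerivAt_const t₀ (1:ℝ)).sub hh).sub (hk.const_mul ((1/2)*x))
  have hvv := (hQ.const_mul x⁻¹).pow 2
  have t2 := (hh.inv hane).mul hvv
  have H := t1.add t2
  refine H.congr_deriv ?_
  unfold Wtv
  norm_num
  field_simp
  ring


set_option maxHeartbeats 1000000 in
/-- Proposition 4.5: along a solution of the rotationally symmetric Ricci flow
equation, the quantity `R + u⁻¹v²` satisfies the linear parabolic equation
`∂_t(R + u⁻¹v²) = u ∂_r²(R + u⁻¹v²) + (2/r) u ∂_r(R + u⁻¹v²) + Ξ ∂_r(R + u⁻¹v²)`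
with the indicated coefficient `Ξ`. -/
theorem stmt_11
    (u : ℝ → ℝ → ℝ) (r₀ t₀ : ℝ) (hr₀ : 0 < r₀)
    (U : Set (ℝ × ℝ)) (hUopen : IsOpen U) (hmem : (r₀, t₀) ∈ U)
    (hupos : ∀ p ∈ U, 0 < u p.1 p.2)
    (husmooth : ContDiffOn ℝ (⊤ : ℕ∞) (fun p : ℝ × ℝ => u p.1 p.2) U)
    (hpde : ∀ p ∈ U,
      deriv (fun t => u p.1 t) p.2
        = u p.1 p.2 * deriv (fun r => deriv (fun r' => u r' p.2) r) p.1
          - (1/2) * (deriv (fun r => u r p.2) p.1)^2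
          + (p.1^2)⁻¹ * (1 - u p.1 p.2)
              * (p.1 * deriv (fun r => u r p.2) p.1 + 2 * u p.1 p.2))
    (hne : 1 + u r₀ t₀ - (1/2) * r₀ * deriv (fun r => u r t₀) r₀ ≠ 0)
    (v R W : ℝ → ℝ → ℝ)
    (hv : ∀ r t : ℝ, v r t = r⁻¹ * (1 - u r t - (1/2) * r * deriv (fun r' => u r' t) r))
    (hR : ∀ r t : ℝ, R r t = 2 * (r^2)⁻¹ * (1 - u r t - r * deriv (fun r' => u r' t) r))
    (hW : ∀ r t : ℝ, W r t = R r t + (u r t)⁻¹ * (v r t)^2)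
    (Ξ : ℝ)
    (hΞ : Ξ = (1 + u r₀ t₀ - (1/2) * r₀ * deriv (fun r => u r t₀) r₀)⁻¹
        * (r₀⁻¹ * (1 - (1/2) * r₀ * deriv (fun r => u r t₀) r₀)
              * (1 - u r₀ t₀ - (1/2) * r₀ * deriv (fun r => u r t₀) r₀)
            - (u r₀ t₀)^3 * deriv (fun r => ((u r t₀)^2)⁻¹
                * (1 + u r t₀ - (1/2) * r * deriv (fun r' => u r' t₀) r)) r₀)) :
    deriv (fun t => W r₀ t) t₀
      = u r₀ t₀ * deriv (fun r => deriv (fun r' => W r' t₀) r) r₀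
        + (2 / r₀) * u r₀ t₀ * deriv (fun r => W r t₀) r₀
        + Ξ * deriv (fun r => W r t₀) r₀ := by
  have hr₀ne : r₀ ≠ 0 := ne_of_gt hr₀
  have hane : u r₀ t₀ ≠ 0 := ne_of_gt (hupos (r₀, t₀) hmem)
  -- the two-variable function and its partial-derivative fields
  set F : ℝ × ℝ → ℝ := fun p => u p.1 p.2 with hF
  set G : ℝ × ℝ → ℝ := fun p => fderiv ℝ F p (1, 0) with hG
  set Gt : ℝ × ℝ → ℝ := fun p => fderiv ℝ F p (0, 1) with hGt
  have hFc : ∀ p ∈ U, ContDiffAt ℝ (⊤ : ℕ∞) F p := fun p hp => husmooth.contDiffAt (hUopen.mem_nhds hp)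
  have hslice_r : ∀ p ∈ U, HasDerivAt (fun r' => u r' p.2) (G p) p.1 := by
    intro p hp
    have hFd : HasFDerivAt F (fderiv ℝ F p) p :=
      ((hFc p hp).differentiableAt (by simp)).hasFDerivAt
    have hι : HasDerivAt (fun r : ℝ => (r, p.2)) ((1:ℝ), (0:ℝ)) p.1 :=
      (hasDerivAt_id p.1).prodMk (hasDerivAt_const p.1 p.2)
    have := hFd.comp_hasDerivAt (x := p.1) (by simpa using hι)
    exact this
  have hslice_t : ∀ p ∈ U, HasDerivAt (fun t' => u p.1 t') (Gt p) p.2 := by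
    intro p hp
    have hFd : HasFDerivAt F (fderiv ℝ F p) p :=
      ((hFc p hp).differentiableAt (by simp)).hasFDerivAt
    have hι : HasDerivAt (fun t : ℝ => (p.1, t)) ((0:ℝ), (1:ℝ)) p.2 :=
      (hasDerivAt_const p.2 p.1).prodMk (hasDerivAt_id p.2)
    have := hFd.comp_hasDerivAt (x := p.2) (by simpa using hι)
    exact this
  have hF2 : HasFDerivAt (fderiv ℝ F) (fderiv ℝ (fderiv ℝ F) (r₀, t₀)) (r₀, t₀) :=
    (((hFc _ hmem).fderiv_right (m := (⊤ : ℕ∞)) (by simp)).differentiableAt (by simp)).hasFDerivAt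
  have hGfd : HasFDerivAt G
      (((ContinuousLinearMap.apply ℝ ℝ ((1:ℝ),(0:ℝ))).comp (fderiv ℝ (fderiv ℝ F) (r₀, t₀)))) (r₀, t₀) :=
    (ContinuousLinearMap.apply ℝ ℝ ((1:ℝ),(0:ℝ))).hasFDerivAt.comp (r₀, t₀) hF2
  have hGtfd : HasFDerivAt Gt
      (((ContinuousLinearMap.apply ℝ ℝ ((0:ℝ),(1:ℝ))).comp (fderiv ℝ (fderiv ℝ F) (r₀, t₀)))) (r₀, t₀) :=
    (ContinuousLinearMap.apply ℝ ℝ ((0:ℝ),(1:ℝ))).hasFDerivAt.comp (r₀, t₀) hF2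
  have hGslice : HasDerivAt (fun t => G (r₀, t))
      (fderiv ℝ (fderiv ℝ F) (r₀, t₀) (0, 1) (1, 0)) t₀ := by
    have hι : HasDerivAt (fun t : ℝ => (r₀, t)) ((0:ℝ), (1:ℝ)) t₀ :=
      (hasDerivAt_const t₀ r₀).prodMk (hasDerivAt_id t₀)
    have := hGfd.comp_hasDerivAt (x := t₀) (by simpa using hι)
    exact this
  have hGtslice : HasDerivAt (fun r => Gt (r, t₀))
      (fderiv ℝ (fderiv ℝ F) (r₀, t₀) (1, 0) (0, 1)) r₀ := by
    have hι : HasDerivAt (fun r : ℝ => (r, t₀)) ((1:ℝ), (0:ℝ)) r₀ :=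
      (hasDerivAt_id r₀).prodMk (hasDerivAt_const r₀ t₀)
    have := hGtfd.comp_hasDerivAt (x := r₀) (by simpa using hι)
    exact this
  have hsymm : fderiv ℝ (fderiv ℝ F) (r₀, t₀) (0, 1) (1, 0)
      = fderiv ℝ (fderiv ℝ F) (r₀, t₀) (1, 0) (0, 1) :=
    (hFc _ hmem).isSymmSndFDerivAt (by norm_num; exact WithTop.coe_le_coe.mpr le_top) _ _
  -- the fixed-time slice
  set V : Set ℝ := {r | (r, t₀) ∈ U ∧ 0 < r} with hV
  have hVopen : IsOpen V := by
    have h1 : IsOpen {r : ℝ | (r, t₀) ∈ U} :=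
      (hUopen.preimage (by continuity : Continuous fun r : ℝ => (r, t₀)))
    exact h1.inter isOpen_Ioi
  have hr₀V : r₀ ∈ V := ⟨hmem, hr₀⟩
  have hfc : ContDiffOn ℝ (⊤ : ℕ∞) (fun r => u r t₀) V := by
    have h1 : ContDiff ℝ (⊤ : ℕ∞) (fun r : ℝ => (r, t₀)) := contDiff_id.prodMk contDiff_const
    exact husmooth.comp h1.contDiffOn (fun r hr => hr.1)
  have hc1 : ContDiffOn ℝ (⊤ : ℕ∞) (deriv (fun r => u r t₀)) V := hfc.deriv_of_isOpen hVopen (by simp)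
  have hc2 : ContDiffOn ℝ (⊤ : ℕ∞) (deriv (deriv (fun r => u r t₀))) V := hc1.deriv_of_isOpen hVopen (by simp)
  have hd_f : ∀ r ∈ V, HasDerivAt (fun r' => u r' t₀) (deriv (fun r' => u r' t₀) r) r := fun r hr =>
    ((hfc.contDiffAt (hVopen.mem_nhds hr)).differentiableAt (by simp)).hasDerivAt
  have hd_f1 : ∀ r ∈ V, HasDerivAt (deriv (fun r' => u r' t₀))
      (deriv (deriv (fun r' => u r' t₀)) r) r := fun r hr =>
    ((hc1.contDiffAt (hVopen.mem_nhds hr)).differentiableAt (by simp)).hasDerivAt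
  have hd_f2 : HasDerivAt (deriv (deriv (fun r' => u r' t₀)))
      (deriv (deriv (deriv (fun r' => u r' t₀))) r₀) r₀ :=
    ((hc2.contDiffAt (hVopen.mem_nhds hr₀V)).differentiableAt (by simp)).hasDerivAt
  -- rewriting W slices
  have heqW_r : (fun r' => W r' t₀)
      = (fun r' => 2*(r'^2)⁻¹*(1 - u r' t₀ - r' * deriv (fun r'' => u r'' t₀) r')
        + (u r' t₀)⁻¹*(r'⁻¹*(1 - u r' t₀ - (1/2)*r'*deriv (fun r'' => u r'' t₀) r'))^2) :=
    funext fun r' => by rw [hW, hR, hv]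
  have heqW_t : (fun t => W r₀ t)
      = (fun t => 2*(r₀^2)⁻¹*(1 - u r₀ t - r₀ * deriv (fun r'' => u r'' t) r₀)
        + (u r₀ t)⁻¹*(r₀⁻¹*(1 - u r₀ t - (1/2)*r₀*deriv (fun r'' => u r'' t) r₀))^2) :=
    funext fun t => by rw [hW, hR, hv]
  -- spatial derivatives of W
  have hA : ∀ r ∈ V, HasDerivAt (fun r' => W r' t₀)
      (Wrv r (u r t₀) (deriv (fun r' => u r' t₀) r) (deriv (deriv (fun r' => u r' t₀)) r)) r := by
    intro r hr
    rw [heqW_r]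
    exact aux1 (fun r' => u r' t₀) r (hd_f r hr) (hd_f1 r hr) (ne_of_gt hr.2)
      (ne_of_gt (hupos (r, t₀) hr.1))
  have e1 : deriv (fun r => W r t₀) r₀
      = Wrv r₀ (u r₀ t₀) (deriv (fun r' => u r' t₀) r₀) (deriv (deriv (fun r' => u r' t₀)) r₀) :=
    (hA r₀ hr₀V).deriv
  have hev2 : (fun r => deriv (fun r' => W r' t₀) r) =ᶠ[nhds r₀]
      (fun r => Wrv r (u r t₀) (deriv (fun r' => u r' t₀) r) (deriv (deriv (fun r' => u r' t₀)) r)) := by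
    filter_upwards [hVopen.mem_nhds hr₀V] with r hr
    exact (hA r hr).deriv
  have e2 : deriv (fun r => deriv (fun r' => W r' t₀) r) r₀
      = Wrrv r₀ (u r₀ t₀) (deriv (fun r' => u r' t₀) r₀) (deriv (deriv (fun r' => u r' t₀)) r₀)
          (deriv (deriv (deriv (fun r' => u r' t₀))) r₀) :=
    hev2.deriv_eq.trans
      (aux2 (fun r' => u r' t₀) r₀ (hd_f r₀ hr₀V) (hd_f1 r₀ hr₀V) hd_f2 hr₀ne hane).deriv
  -- time derivative of u
  have hu1 : HasDerivAt (fun t => u r₀ t) (Gt (r₀, t₀)) t₀ := hslice_t (r₀, t₀) hmem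
  have hTval : Gt (r₀, t₀)
      = Tv r₀ (u r₀ t₀) (deriv (fun r' => u r' t₀) r₀) (deriv (deriv (fun r' => u r' t₀)) r₀) := by
    have hp' : deriv (fun t => u r₀ t) t₀
        = u r₀ t₀ * deriv (fun r => deriv (fun r' => u r' t₀) r) r₀
          - (1/2) * (deriv (fun r => u r t₀) r₀)^2
          + (r₀^2)⁻¹ * (1 - u r₀ t₀)
              * (r₀ * deriv (fun r => u r t₀) r₀ + 2 * u r₀ t₀) := hpde (r₀, t₀) hmem
    rw [← hu1.deriv, hp']
    unfold Tv
    rfl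
  have hu' : HasDerivAt (fun t => u r₀ t)
      (Tv r₀ (u r₀ t₀) (deriv (fun r' => u r' t₀) r₀) (deriv (deriv (fun r' => u r' t₀)) r₀)) t₀ :=
    hTval ▸ hu1
  -- mixed derivative
  have hkev : (fun t => deriv (fun r' => u r' t) r₀) =ᶠ[nhds t₀] (fun t => G (r₀, t)) := by
    have hmemt : {t : ℝ | (r₀, t) ∈ U} ∈ nhds t₀ := by
      have hcont : Continuous fun t : ℝ => (r₀, t) := by continuity
      exact hcont.continuousAt.preimage_mem_nhds (hUopen.mem_nhds hmem)
    filter_upwards [hmemt] with t ht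
    exact (hslice_r (r₀, t) ht).deriv
  have hk0 : HasDerivAt (fun t => deriv (fun r' => u r' t) r₀)
      (fderiv ℝ (fderiv ℝ F) (r₀, t₀) (0, 1) (1, 0)) t₀ :=
    hGslice.congr_of_eventuallyEq hkev
  have hMev : (fun r => Gt (r, t₀)) =ᶠ[nhds r₀]
      (fun r => u r t₀ * deriv (fun r1 => deriv (fun r' => u r' t₀) r1) r
        - (1/2)*(deriv (fun r' => u r' t₀) r)^2
        + (r^2)⁻¹*(1 - u r t₀)*(r*deriv (fun r' => u r' t₀) r + 2*u r t₀)) := by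
    filter_upwards [hVopen.mem_nhds hr₀V] with r hr
    have h1 : HasDerivAt (fun t => u r t) (Gt (r, t₀)) t₀ := hslice_t (r, t₀) hr.1
    have hp' : deriv (fun t => u r t) t₀
        = u r t₀ * deriv (fun r1 => deriv (fun r' => u r' t₀) r1) r
          - (1/2)*(deriv (fun r' => u r' t₀) r)^2
          + (r^2)⁻¹*(1 - u r t₀)*(r*deriv (fun r' => u r' t₀) r + 2*u r t₀) := hpde (r, t₀) hr.1
    exact h1.deriv.symm.trans hp'
  have hMval : deriv (fun r => u r t₀ * deriv (fun r1 => deriv (fun r' => u r' t₀) r1) r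
        - (1/2)*(deriv (fun r' => u r' t₀) r)^2
        + (r^2)⁻¹*(1 - u r t₀)*(r*deriv (fun r' => u r' t₀) r + 2*u r t₀)) r₀
      = Mv r₀ (u r₀ t₀) (deriv (fun r' => u r' t₀) r₀) (deriv (deriv (fun r' => u r' t₀)) r₀)
          (deriv (deriv (deriv (fun r' => u r' t₀))) r₀) :=
    (auxM (fun r' => u r' t₀) r₀ (hd_f r₀ hr₀V) (hd_f1 r₀ hr₀V) hd_f2 hr₀ne).deriv
  have hMfinal : fderiv ℝ (fderiv ℝ F) (r₀, t₀) (0, 1) (1, 0)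
      = Mv r₀ (u r₀ t₀) (deriv (fun r' => u r' t₀) r₀) (deriv (deriv (fun r' => u r' t₀)) r₀)
          (deriv (deriv (deriv (fun r' => u r' t₀))) r₀) :=
    hsymm.trans (hGtslice.deriv.symm.trans (hMev.deriv_eq.trans hMval))
  have hk' : HasDerivAt (fun t => deriv (fun r' => u r' t) r₀)
      (Mv r₀ (u r₀ t₀) (deriv (fun r' => u r' t₀) r₀) (deriv (deriv (fun r' => u r' t₀)) r₀)
        (deriv (deriv (deriv (fun r' => u r' t₀))) r₀)) t₀ :=
    hMfinal ▸ hk0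
  -- time derivative of W
  have e0 : deriv (fun t => W r₀ t) t₀
      = Wtv r₀ (u r₀ t₀) (deriv (fun r' => u r' t₀) r₀)
          (Tv r₀ (u r₀ t₀) (deriv (fun r' => u r' t₀) r₀) (deriv (deriv (fun r' => u r' t₀)) r₀))
          (Mv r₀ (u r₀ t₀) (deriv (fun r' => u r' t₀) r₀) (deriv (deriv (fun r' => u r' t₀)) r₀)
            (deriv (deriv (deriv (fun r' => u r' t₀))) r₀)) := by
    rw [heqW_t]
    exact (auxT (fun t => u r₀ t) (fun t => deriv (fun r' => u r' t) r₀) r₀ _ _ t₀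
      hu' hk' hr₀ne hane).deriv
  -- the Ξ inner derivative
  have eXi : deriv (fun r => ((u r t₀)^2)⁻¹
        * (1 + u r t₀ - (1/2) * r * deriv (fun r' => u r' t₀) r)) r₀
      = Ev r₀ (u r₀ t₀) (deriv (fun r' => u r' t₀) r₀) (deriv (deriv (fun r' => u r' t₀)) r₀) :=
    (auxXi (fun r' => u r' t₀) r₀ (hd_f r₀ hr₀V) (hd_f1 r₀ hr₀V) hane).deriv
  rw [e0, e2, e1, hΞ, eXi]
  exact key_alg r₀ (u r₀ t₀) (deriv (fun r' => u r' t₀) r₀) (deriv (deriv (fun r' => u r' t₀)) r₀)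
    (deriv (deriv (deriv (fun r' => u r' t₀))) r₀) hr₀ne hane hne
end

section
/- Let C ≥ 1, let (Γ_k), (Γ_k⁺), (Γ_k⁰), (Γ_k⁻) be nonincreasing sequences of positive real numbers, and let (ε_k) be a sequence of nonnegative real numbers with ε_k → 0, such that for every k: C⁻¹·Γ_k ≤ Γ_k⁺ + Γ_k⁰ + Γ_k⁻ ≤ C·Γ_k, Γ_{k+1}⁺ ≤ e⁻¹·Γ_k⁺ + ε_k·Γ_k, |Γ_{k+1}⁰ − Γ_k⁰| ≤ ε_k·Γ_k, and Γ_{k+1}⁻ ≥ e·Γ_k⁻ − ε_k·Γ_k. Then at least one of the following holds: (a) for every ε > 0 there exists K such that Γ_k⁰ + Γ_k⁻ ≤ ε·Γ_k⁺ for all k ≥ K; or (b) for every ε > 0 there exists K such that Γ_k⁺ + Γ_k⁻ ≤ ε·Γ_k⁰ for all k ≥ K. -/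
/-!
Since `Γ⁻` is nonincreasing, the hypothesis on `Γ⁻` gives `(e - 1) Γ⁻_k ≤ ε_k Γ_k`, so `Γ⁻` is
negligible, `Γ` is comparable to `Γ⁺ + Γ⁰`, and all errors `ε_k Γ_k` are `o(Γ⁺_k + Γ⁰_k)`.

For the pair `(x, y) = (Γ⁺, Γ⁰)` the cone `{x ≤ R y}` becomes invariant once the relative error is
small compared with `R`. If `y = o(x)` fails, the sequence enters some cone `{x ≤ Δ y}` infinitely
often, hence stays in it. Inside it, as long as `x > δ y`, the error is uniformly small and the
ratio `x / y` contracts by the factor `(1 + a) / 2`; so it falls below any `δ` infinitely often,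
and by invariance of `{x ≤ δ y}` eventually stays there, i.e. `x = o(y)`.
-/

open Filter Topology Asymptotics

theorem Asymptotics.isLittleO_of_norm_le_mul {α E F : Type*} [Norm E] [SeminormedAddGroup F]
    {l : Filter α} {f : α → E} {g : α → F} {θ : α → ℝ} (hθ : Tendsto θ l (𝓝 0))
    (h : ∀ᶠ x in l, ‖f x‖ ≤ θ x * ‖g x‖) : f =o[l] g :=
  isLittleO_iff.2 fun _ hc => (h.and (hθ.eventually (ge_mem_nhds hc))).mono
    fun _ hx => hx.1.trans (mul_le_mul_of_nonneg_right hx.2 (norm_nonneg _))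

theorem Asymptotics.IsLittleO.add_of_isLittleO_add {α : Type*} {l : Filter α} {u v w : α → ℝ}
    (hu : u =o[l] v) (hw : w =o[l] (u + v)) : (u + w) =o[l] v :=
  hu.add (hw.trans_isBigO (hu.isBigO.add (isBigO_refl v l)))

theorem exists_forall_le_mul_of_isLittleO {f g : ℕ → ℝ} (h : f =o[atTop] g) (hg : ∀ k, 0 ≤ g k)
    {δ : ℝ} (hδ : 0 < δ) : ∃ K, ∀ k ≥ K, f k ≤ δ * g k :=
  eventually_atTop.1 <| (h.bound hδ).mono fun k hk => by
    simpa [abs_of_nonneg (hg k)] using (le_abs_self (f k)).trans hk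

structure MerleZaagSystem (a : ℝ) (η x y : ℕ → ℝ) : Prop where
  a_nonneg : 0 ≤ a
  a_lt_one : a < 1
  x_nonneg : ∀ k, 0 ≤ x k
  y_nonneg : ∀ k, 0 ≤ y k
  η_nonneg : ∀ k, 0 ≤ η k
  tendsto_η : Tendsto η atTop (𝓝 0)
  x_succ_le : ∀ k, x (k + 1) ≤ a * x k + η k * (x k + y k)
  sub_le_y_succ : ∀ k, y k - η k * (x k + y k) ≤ y (k + 1)

namespace MerleZaagSystem

variable {a : ℝ} {η x y : ℕ → ℝ}

theorem eventually_mul_le (h : MerleZaagSystem a η x y) (M : ℝ) {c : ℝ} (hc : 0 < c) :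
    ∀ᶠ k in atTop, η k * M ≤ c := by
  simpa using (h.tendsto_η.mul_const M).eventually (ge_mem_nhds (by simpa using hc))

theorem succ_le_mul_of_le_mul (h : MerleZaagSystem a η x y) {R R' : ℝ} {k : ℕ} (hR' : 0 ≤ R')
    (hη : η k * ((1 + R) * (1 + R')) ≤ R' - a * R) (hk : x k ≤ R * y k) :
    x (k + 1) ≤ R' * y (k + 1) := by
  have hsum : η k * (x k + y k) ≤ η k * ((1 + R) * y k) :=
    mul_le_mul_of_nonneg_left (by linarith) (h.η_nonneg k)
  have hax : a * x k ≤ a * (R * y k) := mul_le_mul_of_nonneg_left hk h.a_nonneg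
  have hy : R' * (y k - η k * ((1 + R) * y k)) ≤ R' * y (k + 1) :=
    mul_le_mul_of_nonneg_left (by linarith [h.sub_le_y_succ k]) hR'
  have hηy := mul_le_mul_of_nonneg_right hη (h.y_nonneg k)
  nlinarith [h.x_succ_le k]

theorem eventually_le_mul_of_frequently (h : MerleZaagSystem a η x y) {R : ℝ} (hR : 0 < R)
    (hfreq : ∃ᶠ k in atTop, x k ≤ R * y k) : ∀ᶠ k in atTop, x k ≤ R * y k := by
  obtain ⟨K, hK⟩ := eventually_atTop.1 <|
    h.eventually_mul_le ((1 + R) * (1 + R)) (mul_pos (sub_pos.2 h.a_lt_one) hR)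
  obtain ⟨k₀, hk₀K, hk₀⟩ := frequently_atTop.1 hfreq K
  refine eventually_atTop.2 ⟨k₀, fun k hk => ?_⟩
  induction k, hk using Nat.le_induction with
  | base => exact hk₀
  | succ k hk ih => exact h.succ_le_mul_of_le_mul hR.le (by linarith [hK k (hk₀K.trans hk)]) ih

theorem succ_le_mul_of_mul_lt (h : MerleZaagSystem a η x y) {δ Δ R : ℝ} {k : ℕ} (hδ : 0 < δ)
    (hRΔ : R ≤ Δ) (hηk : η k * ((1 + Δ) * (1 + Δ)) ≤ (1 - a) * δ / 2) (hδk : δ * y k < x k)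
    (hk : x k ≤ R * y k) : x (k + 1) ≤ (1 + a) / 2 * R * y (k + 1) := by
  have hδR : δ ≤ R := by nlinarith [h.y_nonneg k]
  have hR0 : 0 ≤ R := hδ.le.trans hδR
  have hqR : (1 + a) / 2 * R ≤ R := by nlinarith [h.a_lt_one]
  refine h.succ_le_mul_of_le_mul (by nlinarith [h.a_nonneg]) ?_ hk
  calc η k * ((1 + R) * (1 + (1 + a) / 2 * R))
      ≤ η k * ((1 + Δ) * (1 + Δ)) :=
        mul_le_mul_of_nonneg_left (mul_le_mul (by linarith) (by linarith)
          (by nlinarith [h.a_nonneg]) (by linarith)) (h.η_nonneg k)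
    _ ≤ (1 - a) * δ / 2 := hηk
    _ ≤ (1 - a) * R / 2 := by gcongr; linarith [h.a_lt_one]
    _ = (1 + a) / 2 * R - a * R := by ring

theorem frequently_le_mul (h : MerleZaagSystem a η x y) {δ Δ : ℝ} (hδ : 0 < δ)
    (hΔ : ∀ᶠ k in atTop, x k ≤ Δ * y k) : ∃ᶠ k in atTop, x k ≤ δ * y k := by
  set q := (1 + a) / 2 with hq
  have hq0 : 0 < q := by linarith [h.a_nonneg]
  have hq1 : q < 1 := by linarith [h.a_lt_one]
  by_contra hnot
  simp only [not_frequently, not_le] at hnot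
  obtain ⟨K, hK⟩ := eventually_atTop.1 <| hnot.and <| hΔ.and <|
    h.eventually_mul_le ((1 + Δ) * (1 + Δ)) (half_pos (mul_pos (sub_pos.2 h.a_lt_one) hδ))
  have hΔ0 : 0 ≤ Δ := by nlinarith [hK K le_rfl, h.y_nonneg K]
  have decay (n : ℕ) : x (K + n) ≤ q ^ n * Δ * y (K + n) := by
    induction n with
    | zero => simpa using (hK K le_rfl).2.1
    | succ n ih =>
      obtain ⟨hδk, -, hηk⟩ := hK (K + n) (Nat.le_add_right K n)
      have hRΔ : q ^ n * Δ ≤ Δ := mul_le_of_le_one_left hΔ0 (pow_le_one₀ hq0.le hq1.le)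
      show x (K + n + 1) ≤ q ^ (n + 1) * Δ * y (K + n + 1)
      rw [pow_succ, mul_right_comm _ q, mul_comm _ q]
      exact h.succ_le_mul_of_mul_lt hδ hRΔ hηk hδk ih
  obtain ⟨n, hn⟩ := ((tendsto_pow_atTop_nhds_zero_of_lt_one hq0.le hq1).mul_const Δ
    |>.eventually (gt_mem_nhds (by simpa using hδ))).exists
  nlinarith [(hK (K + n) (Nat.le_add_right K n)).1, decay n, h.y_nonneg (K + n)]

theorem isLittleO_or_isLittleO (h : MerleZaagSystem a η x y) :
    y =o[atTop] x ∨ x =o[atTop] y := by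
  refine or_iff_not_imp_left.2 fun hyx => ?_
  obtain ⟨c, hc, hfreq⟩ : ∃ c > 0, ∃ᶠ k in atTop, c * ‖x k‖ < ‖y k‖ := by
    simpa only [isLittleO_iff, not_forall, not_eventually, not_le, exists_prop] using hyx
  have hbounded : ∀ᶠ k in atTop, x k ≤ c⁻¹ * y k :=
    h.eventually_le_mul_of_frequently (inv_pos.2 hc) <| hfreq.mono fun k hk => by
      rw [Real.norm_of_nonneg (h.x_nonneg k), Real.norm_of_nonneg (h.y_nonneg k)] at hk
      rw [le_inv_mul_iff₀ hc]
      exact hk.le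
  refine isLittleO_iff.2 fun δ hδ =>
    (h.eventually_le_mul_of_frequently hδ (h.frequently_le_mul hδ hbounded)).mono fun k hk => ?_
  rwa [Real.norm_of_nonneg (h.x_nonneg k), Real.norm_of_nonneg (h.y_nonneg k)]

end MerleZaagSystem

theorem eventually_le_two_mul_of_le_mul_add {Γ g m ε : ℕ → ℝ} {C c : ℝ} (hC : 0 < C) (hc : 0 < c)
    (hΓ : ∀ k, 0 ≤ Γ k) (hε : Tendsto ε atTop (𝓝 0)) (hle : ∀ k, Γ k ≤ C * (g k + m k))
    (hm : ∀ k, c * m k ≤ ε k * Γ k) : ∀ᶠ k in atTop, Γ k ≤ 2 * C * g k := by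
  have hsmall : ∀ᶠ k in atTop, C * ε k ≤ c / 2 := by
    simpa using (hε.const_mul C).eventually (ge_mem_nhds (by simpa using half_pos hc))
  filter_upwards [hsmall] with k hk
  have habsorb : c * Γ k ≤ c * (2 * C * g k) := by
    nlinarith [mul_le_mul_of_nonneg_left (hle k) hc.le, mul_le_mul_of_nonneg_left (hm k) hC.le,
      mul_le_mul_of_nonneg_right hk (hΓ k)]
  exact le_of_mul_le_mul_left habsorb hc

theorem tendsto_mul_div_of_eventually_le {Γ g ε : ℕ → ℝ} {C : ℝ} (hε0 : ∀ k, 0 ≤ ε k)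
    (hΓ : ∀ k, 0 ≤ Γ k) (hg : ∀ k, 0 < g k) (hε : Tendsto ε atTop (𝓝 0))
    (hΓg : ∀ᶠ k in atTop, Γ k ≤ C * g k) : Tendsto (fun k => ε k * Γ k / g k) atTop (𝓝 0) := by
  refine squeeze_zero' (.of_forall fun k => div_nonneg (mul_nonneg (hε0 k) (hΓ k)) (hg k).le)
    (hΓg.mono fun k hk => ?_) (by simpa using hε.const_mul C)
  rw [div_le_iff₀ (hg k)]
  nlinarith [mul_le_mul_of_nonneg_left hk (hε0 k)]

theorem stmt_12_general
    (C : ℝ) (hC : 1 ≤ C)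
    (Γ Γp Γ0 Γm ε : ℕ → ℝ)
    (hΓmanti : Antitone Γm)
    (hΓpos : ∀ k, 0 < Γ k) (hΓppos : ∀ k, 0 < Γp k)
    (hΓ0pos : ∀ k, 0 < Γ0 k) (hΓmpos : ∀ k, 0 < Γm k)
    (hεnonneg : ∀ k, 0 ≤ ε k)
    (hεlim : Filter.Tendsto ε Filter.atTop (nhds 0))
    (hlower : ∀ k, C⁻¹ * Γ k ≤ Γp k + Γ0 k + Γm k)
    (hp : ∀ k, Γp (k + 1) ≤ (Real.exp 1)⁻¹ * Γp k + ε k * Γ k)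
    (h0 : ∀ k, |Γ0 (k + 1) - Γ0 k| ≤ ε k * Γ k)
    (hm : ∀ k, Γm (k + 1) ≥ Real.exp 1 * Γm k - ε k * Γ k) :
    (∀ δ > (0:ℝ), ∃ K : ℕ, ∀ k ≥ K, Γ0 k + Γm k ≤ δ * Γp k)
    ∨ (∀ δ > (0:ℝ), ∃ K : ℕ, ∀ k ≥ K, Γp k + Γm k ≤ δ * Γ0 k) := by
  have hE1 : 1 < Real.exp 1 := Real.one_lt_exp_iff.2 one_pos
  have hE : 0 < Real.exp 1 - 1 := sub_pos.2 hE1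
  have hΓm_le (k : ℕ) : (Real.exp 1 - 1) * Γm k ≤ ε k * Γ k := by
    linarith [hm k, hΓmanti k.le_succ]
  have hg (k : ℕ) : 0 < Γp k + Γ0 k := add_pos (hΓppos k) (hΓ0pos k)
  set η : ℕ → ℝ := fun k => ε k * Γ k / (Γp k + Γ0 k)
  have hηg (k : ℕ) : η k * (Γp k + Γ0 k) = ε k * Γ k := div_mul_cancel₀ _ (hg k).ne'
  have hΓ_le := eventually_le_two_mul_of_le_mul_add (by linarith) hE (fun k => (hΓpos k).le)
    hεlim (fun k => (inv_mul_le_iff₀ (by linarith)).1 (hlower k)) hΓm_le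
  have hη : Tendsto η atTop (𝓝 0) := tendsto_mul_div_of_eventually_le hεnonneg
    (fun k => (hΓpos k).le) hg hεlim hΓ_le
  have hsys : MerleZaagSystem (Real.exp 1)⁻¹ η Γp Γ0 :=
    { a_nonneg := by positivity
      a_lt_one := inv_lt_one_of_one_lt₀ hE1
      x_nonneg := fun k => (hΓppos k).le
      y_nonneg := fun k => (hΓ0pos k).le
      η_nonneg := fun k => div_nonneg (mul_nonneg (hεnonneg k) (hΓpos k).le) (hg k).le
      tendsto_η := hη
      x_succ_le := fun k => by rw [hηg]; exact hp k
      sub_le_y_succ := fun k => by rw [hηg]; linarith [(abs_le.1 (h0 k)).1] }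
  have hΓm : Γm =o[atTop] (Γp + Γ0) := by
    refine isLittleO_of_norm_le_mul (θ := fun k => (Real.exp 1 - 1)⁻¹ * η k)
      (by simpa using hη.const_mul (Real.exp 1 - 1)⁻¹) (.of_forall fun k => ?_)
    rw [Pi.add_apply, Real.norm_of_nonneg (hΓmpos k).le, Real.norm_of_nonneg (hg k).le,
      mul_assoc, hηg, le_inv_mul_iff₀ hE]
    exact hΓm_le k
  rcases hsys.isLittleO_or_isLittleO with h | h
  · exact Or.inl fun δ hδ => exists_forall_le_mul_of_isLittleO
      (h.add_of_isLittleO_add (add_comm Γp Γ0 ▸ hΓm)) (fun k => (hΓppos k).le) hδ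
  · exact Or.inr fun δ hδ => exists_forall_le_mul_of_isLittleO
      (h.add_of_isLittleO_add hΓm) (fun k => (hΓ0pos k).le) hδ

/-- Lemma 3.8, a discrete version of the Merle–Zaag lemma: for tail-supremum
sequences attached to the positive, neutral, and negative spectral parts,
either the neutral and negative parts are negligible compared with the positive
part, or the positive and negative parts are negligible compared with the
neutral part. -/
theorem stmt_12
    (C : ℝ) (hC : 1 ≤ C)
    (Γ Γp Γ0 Γm ε : ℕ → ℝ)
    (hΓanti : Antitone Γ) (hΓpanti : Antitone Γp)
    (hΓ0anti : Antitone Γ0) (hΓmanti : Antitone Γm)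
    (hΓpos : ∀ k, 0 < Γ k) (hΓppos : ∀ k, 0 < Γp k)
    (hΓ0pos : ∀ k, 0 < Γ0 k) (hΓmpos : ∀ k, 0 < Γm k)
    (hεnonneg : ∀ k, 0 ≤ ε k)
    (hεlim : Filter.Tendsto ε Filter.atTop (nhds 0))
    (hlower : ∀ k, C⁻¹ * Γ k ≤ Γp k + Γ0 k + Γm k)
    (hupper : ∀ k, Γp k + Γ0 k + Γm k ≤ C * Γ k)
    (hp : ∀ k, Γp (k + 1) ≤ (Real.exp 1)⁻¹ * Γp k + ε k * Γ k)
    (h0 : ∀ k, |Γ0 (k + 1) - Γ0 k| ≤ ε k * Γ k)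
    (hm : ∀ k, Γm (k + 1) ≥ Real.exp 1 * Γm k - ε k * Γ k) :
    (∀ δ > (0:ℝ), ∃ K : ℕ, ∀ k ≥ K, Γ0 k + Γm k ≤ δ * Γp k)
    ∨ (∀ δ > (0:ℝ), ∃ K : ℕ, ∀ k ≥ K, Γp k + Γm k ≤ δ * Γ0 k) :=
  stmt_12_general C hC Γ Γp Γ0 Γm ε hΓmanti hΓpos hΓppos hΓ0pos hΓmpos hεnonneg hεlim hlower hp h0
    hm
end

section
/- There exists a universal constant C such that the following holds: for every δ ∈ (0, 1/2] and every twice continuously differentiable function G : [−M, M] → ℝ, where M := δ^{−1/100}, satisfying |G(ξ)| + |G'(ξ)| + |G''(ξ)| ≤ δ^{1/8} for all ξ ∈ [−M, M], one has ∫_{−M}^{M} e^{−ξ²/4}·G'(ξ)⁴ dξ ≤ C·δ^{1/100}·∫_{−M}^{M} e^{−ξ²/4}·G(ξ)² dξ + C·exp(−(1/8)·δ^{−1/50}). -/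
set_option maxHeartbeats 1000000

open Set MeasureTheory intervalIntegral

/-- The integration-by-parts estimate from Lemma 3.6: the Gaussian-weighted L⁴
norm of `G'` is controlled by the weighted L² norm of `G`, for C² functions
`G` on `[−δ^{−1/100}, δ^{−1/100}]` with `|G| + |G'| + |G''| ≤ δ^{1/8}`. -/
theorem stmt_13 :
    ∃ C : ℝ, ∀ δ : ℝ, 0 < δ → δ ≤ 1/2 → ∀ M : ℝ, M = δ ^ (-(1/100) : ℝ) →
      ∀ G G' G'' : ℝ → ℝ,
        (∀ ξ ∈ Set.Icc (-M) M, HasDerivWithinAt G (G' ξ) (Set.Icc (-M) M) ξ) →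
        (∀ ξ ∈ Set.Icc (-M) M, HasDerivWithinAt G' (G'' ξ) (Set.Icc (-M) M) ξ) →
        ContinuousOn G'' (Set.Icc (-M) M) →
        (∀ ξ ∈ Set.Icc (-M) M, |G ξ| + |G' ξ| + |G'' ξ| ≤ δ ^ (1/8 : ℝ)) →
        (∫ ξ in (-M)..M, Real.exp (-ξ^2 / 4) * (G' ξ)^4)
          ≤ C * δ ^ (1/100 : ℝ) * (∫ ξ in (-M)..M, Real.exp (-ξ^2 / 4) * (G ξ)^2)
            + C * Real.exp (-(1/8) * δ ^ (-(1/50) : ℝ)) := by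
  refine ⟨16, ?_⟩
  intro δ hδ hδ2 M hM G G' G'' hG hG' hG''c hbound
  have hδ1 : δ ≤ 1 := hδ2.trans (by norm_num)
  have hM1 : (1:ℝ) ≤ M := by
    rw [hM]
    exact Real.one_le_rpow_of_pos_of_le_one_of_nonpos hδ hδ1 (by norm_num)
  have hM0 : (0:ℝ) < M := lt_of_lt_of_le one_pos hM1
  have hMM : (-M) ≤ M := by linarith
  set s : Set ℝ := Set.Icc (-M) M with hs
  -- basic continuity
  have hGc : ContinuousOn G s := fun x hx => (hG x hx).continuousWithinAt
  have hG'c : ContinuousOn G' s := fun x hx => (hG' x hx).continuousWithinAt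
  have hec : Continuous fun ξ : ℝ => Real.exp (-ξ^2 / 4) := by fun_prop
  set d8 : ℝ := δ ^ (1/8 : ℝ) with hd8
  have hd8pos : 0 < d8 := Real.rpow_pos_of_pos hδ _
  have hd8le1 : d8 ≤ 1 := Real.rpow_le_one hδ.le hδ1 (by norm_num)
  have habs : ∀ ξ ∈ s, |G ξ| ≤ d8 ∧ |G' ξ| ≤ d8 ∧ |G'' ξ| ≤ d8 := by
    intro ξ hξ
    have h := hbound ξ hξ
    have h1 := abs_nonneg (G ξ); have h2 := abs_nonneg (G' ξ)
    have h3 := abs_nonneg (G'' ξ)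
    exact ⟨by linarith, by linarith, by linarith⟩
  -- the function and its derivative for integration by parts
  set F : ℝ → ℝ := fun ξ => Real.exp (-ξ^2 / 4) * (G ξ * (G' ξ)^3) with hF
  set P : ℝ → ℝ := fun ξ =>
    Real.exp (-ξ^2 / 4) * (G ξ * ((-ξ/2) * (G' ξ)^3 + 3 * (G' ξ)^2 * G'' ξ)) with hP
  have hFd : ∀ ξ ∈ s, HasDerivWithinAt F
      (Real.exp (-ξ^2 / 4) * (G' ξ)^4 + P ξ) s ξ := by
    intro ξ hξ
    have he : HasDerivWithinAt (fun ξ : ℝ => Real.exp (-ξ^2 / 4))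
        ((-ξ/2) * Real.exp (-ξ^2 / 4)) s ξ := by
      have h1 : HasDerivAt (fun ξ : ℝ => -ξ^2 / 4) (-ξ/2) ξ := by
        exact (((hasDerivAt_pow 2 ξ).neg).div_const 4).congr_deriv (by push_cast; ring)
      have := (Real.hasDerivAt_exp (-ξ^2/4)).comp ξ h1
      exact (this.hasDerivWithinAt).congr_deriv (by ring)
    have hg3 : HasDerivWithinAt (fun ξ => G ξ * (G' ξ)^3)
        (G' ξ * (G' ξ)^3 + G ξ * (3 * (G' ξ)^2 * G'' ξ)) s ξ := by
      have h3 : HasDerivWithinAt (fun ξ => (G' ξ)^3)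
          (3 * (G' ξ)^2 * G'' ξ) s ξ := by
        exact ((hG' ξ hξ).pow 3).congr_deriv (by push_cast; ring)
      exact (hG ξ hξ).mul h3
    have := he.mul hg3
    refine this.congr_deriv ?_
    simp only [hP]
    ring
  have hFc : ContinuousOn F s :=
    (hec.continuousOn).mul (hGc.mul (hG'c.pow 3))
  -- integrability facts
  have hI1 : IntervalIntegrable (fun ξ => Real.exp (-ξ^2 / 4) * (G' ξ)^4)
      volume (-M) M := by
    apply ContinuousOn.intervalIntegrable
    rw [Set.uIcc_of_le hMM]
    exact (hec.continuousOn).mul (hG'c.pow 4)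
  have hIP : IntervalIntegrable P volume (-M) M := by
    apply ContinuousOn.intervalIntegrable
    rw [Set.uIcc_of_le hMM]
    apply (hec.continuousOn).mul
    apply hGc.mul
    apply ContinuousOn.add
    · exact (((continuousOn_id.neg).div_const 2).mul (hG'c.pow 3))
    · exact (continuousOn_const.mul (hG'c.pow 2)).mul hG''c
  have hI2 : IntervalIntegrable (fun ξ => Real.exp (-ξ^2 / 4) * (G ξ)^2)
      volume (-M) M := by
    apply ContinuousOn.intervalIntegrable
    rw [Set.uIcc_of_le hMM]
    exact (hec.continuousOn).mul (hGc.pow 2)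
  -- FTC
  have hFTC : (∫ ξ in (-M)..M, (Real.exp (-ξ^2 / 4) * (G' ξ)^4 + P ξ))
      = F M - F (-M) := by
    apply integral_eq_sub_of_hasDeriv_right_of_le hMM hFc
    · intro x hx
      have hx' : x ∈ s := Set.mem_Icc.mpr ⟨hx.1.le, hx.2.le⟩
      exact (hFd x hx').mono_of_mem_nhdsWithin
        (Icc_mem_nhdsGT_of_mem ⟨hx.1.le, hx.2⟩)
    · exact hI1.add hIP
  have hsplit : (∫ ξ in (-M)..M, Real.exp (-ξ^2 / 4) * (G' ξ)^4)
      = (F M - F (-M)) - ∫ ξ in (-M)..M, P ξ := by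
    rw [← hFTC, intervalIntegral.integral_add hI1 hIP]; ring
  -- abbreviations
  set Y : ℝ := ∫ ξ in (-M)..M, Real.exp (-ξ^2 / 4) * (G' ξ)^4 with hY
  set X : ℝ := ∫ ξ in (-M)..M, Real.exp (-ξ^2 / 4) * (G ξ)^2 with hX
  set K : ℝ := ((M/2 + 3) * d8)^2 with hK
  -- pointwise bound: -P ξ ≤ (1/2) e G'^4 + (K/2) e G^2
  have hpt : ∀ ξ ∈ s, -P ξ ≤
      (1/2) * (Real.exp (-ξ^2 / 4) * (G' ξ)^4) + (K/2) * (Real.exp (-ξ^2 / 4) * (G ξ)^2) := by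
    intro ξ hξ
    obtain ⟨h1, h2, h3⟩ := habs ξ hξ
    have hξM : |ξ| ≤ M := abs_le.mpr ⟨hξ.1, hξ.2⟩
    have hepos : (0:ℝ) < Real.exp (-ξ^2 / 4) := Real.exp_pos _
    have hc : |ξ/2 * G' ξ - 3 * G'' ξ| ≤ (M/2 + 3) * d8 := by
      calc |ξ/2 * G' ξ - 3 * G'' ξ| ≤ |ξ/2 * G' ξ| + |3 * G'' ξ| := abs_sub _ _
        _ = |ξ|/2 * |G' ξ| + 3 * |G'' ξ| := by
            rw [abs_mul, abs_mul, abs_div]; norm_num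
        _ ≤ M/2 * d8 + 3 * d8 := by
            have e1 : |ξ|/2 * |G' ξ| ≤ M/2 * d8 :=
              mul_le_mul (by linarith) h2 (abs_nonneg _) (by linarith)
            have e2 : 3 * |G'' ξ| ≤ 3 * d8 := by linarith
            linarith
        _ = (M/2 + 3) * d8 := by ring
    have hb2 : (G ξ * (ξ/2 * G' ξ - 3 * G'' ξ))^2 ≤ K * (G ξ)^2 := by
      have := sq_le_sq' (neg_le_of_abs_le hc) (le_of_abs_le hc)
      calc (G ξ * (ξ/2 * G' ξ - 3 * G'' ξ))^2
          = (G ξ)^2 * (ξ/2 * G' ξ - 3 * G'' ξ)^2 := by ring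
        _ ≤ (G ξ)^2 * ((M/2 + 3) * d8)^2 := by
            exact mul_le_mul_of_nonneg_left this (sq_nonneg _)
        _ = K * (G ξ)^2 := by rw [hK]; ring
    have key : -(G ξ * ((-ξ/2) * (G' ξ)^3 + 3 * (G' ξ)^2 * G'' ξ))
        ≤ (1/2) * (G' ξ)^4 + (K/2) * (G ξ)^2 := by
      have hab : (G' ξ)^2 * (G ξ * (ξ/2 * G' ξ - 3 * G'' ξ))
          ≤ (1/2) * ((G' ξ)^2)^2 + (1/2) * (G ξ * (ξ/2 * G' ξ - 3 * G'' ξ))^2 := by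
        nlinarith [sq_nonneg ((G' ξ)^2 - G ξ * (ξ/2 * G' ξ - 3 * G'' ξ))]
      nlinarith
    have := mul_le_mul_of_nonneg_left key hepos.le
    calc -P ξ = Real.exp (-ξ^2/4) *
          (-(G ξ * ((-ξ/2) * (G' ξ)^3 + 3 * (G' ξ)^2 * G'' ξ))) := by
          simp only [hP]; ring
      _ ≤ Real.exp (-ξ^2/4) * ((1/2) * (G' ξ)^4 + (K/2) * (G ξ)^2) := this
      _ = (1/2) * (Real.exp (-ξ^2 / 4) * (G' ξ)^4)
          + (K/2) * (Real.exp (-ξ^2 / 4) * (G ξ)^2) := by ring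
  -- integrate the pointwise bound
  have hKnn : 0 ≤ K := sq_nonneg _
  have hintP : (∫ ξ in (-M)..M, -P ξ) ≤ (1/2) * Y + (K/2) * X := by
    have hrhsI : IntervalIntegrable
        (fun ξ => (1/2) * (Real.exp (-ξ^2 / 4) * (G' ξ)^4)
          + (K/2) * (Real.exp (-ξ^2 / 4) * (G ξ)^2)) volume (-M) M :=
      (hI1.const_mul _).add (hI2.const_mul _)
    have := intervalIntegral.integral_mono_on hMM hIP.neg hrhsI hpt
    calc (∫ ξ in (-M)..M, -P ξ)
        ≤ ∫ ξ in (-M)..M, ((1/2) * (Real.exp (-ξ^2 / 4) * (G' ξ)^4)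
          + (K/2) * (Real.exp (-ξ^2 / 4) * (G ξ)^2)) := this
      _ = (1/2) * Y + (K/2) * X := by
          rw [intervalIntegral.integral_add (hI1.const_mul _) (hI2.const_mul _),
            intervalIntegral.integral_const_mul, intervalIntegral.integral_const_mul]
  -- boundary term
  have hB : F M - F (-M) ≤ 2 * Real.exp (-(1/8) * δ ^ (-(1/50) : ℝ)) := by
    have hMsq : M^2 = δ ^ (-(1/50) : ℝ) := by
      rw [hM, ← Real.rpow_natCast (δ ^ (-(1/100):ℝ)) 2, ← Real.rpow_mul hδ.le]
      norm_num
    have hbd : ∀ x ∈ ({M, -M} : Set ℝ), |F x| ≤ Real.exp (-(1/8) * δ ^ (-(1/50) : ℝ)) := by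
      intro x hx
      have hxs : x ∈ s ∧ x^2 = M^2 := by
        rcases hx with h | h <;> subst h <;>
          exact ⟨Set.mem_Icc.mpr (by constructor <;> linarith), by ring⟩
      obtain ⟨h1, h2, h3⟩ := habs x hxs.1
      have : |F x| ≤ Real.exp (-x^2/4) * 1 := by
        have hFx : |F x| = Real.exp (-x^2/4) * (|G x| * |G' x|^3) := by
          simp only [hF, abs_mul, Real.abs_exp, abs_pow]
        rw [hFx]
        apply mul_le_mul_of_nonneg_left _ (Real.exp_pos _).le
        calc |G x| * |G' x|^3 ≤ 1 * 1 :=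
              mul_le_mul (h1.trans hd8le1)
                (pow_le_one₀ (abs_nonneg _) (h2.trans hd8le1))
                (pow_nonneg (abs_nonneg _) 3) one_pos.le
          _ = 1 := by norm_num
      rw [mul_one] at this
      refine this.trans (Real.exp_le_exp.mpr ?_)
      rw [hxs.2, hMsq]
      have : 0 ≤ δ ^ (-(1/50) : ℝ) := (Real.rpow_pos_of_pos hδ _).le
      linarith
    have hFM := hbd M (by simp)
    have hFmM := hbd (-M) (by simp)
    have := abs_le.mp hFM
    have := abs_le.mp hFmM
    linarith [(abs_le.mp hFM).2, (abs_le.mp hFmM).1]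
  -- K ≤ 16 δ^{1/100}
  have hKle : K ≤ 16 * δ ^ (1/100 : ℝ) := by
    have hM2 : M/2 + 3 ≤ 4 * M := by linarith
    have h1 : K ≤ (4*M)^2 * d8^2 := by
      rw [hK, mul_pow]
      have h0 : (M/2+3)^2 ≤ (4*M)^2 := by nlinarith
      exact mul_le_mul_of_nonneg_right h0 (sq_nonneg _)
    have hM2v : M^2 = δ ^ (-(1/50) : ℝ) := by
      rw [hM, ← Real.rpow_natCast (δ ^ (-(1/100):ℝ)) 2, ← Real.rpow_mul hδ.le]
      norm_num
    have hd82 : d8^2 = δ ^ (1/4 : ℝ) := by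
      rw [hd8, ← Real.rpow_natCast (δ ^ ((1/8):ℝ)) 2, ← Real.rpow_mul hδ.le]
      norm_num
    have h2 : (4*M)^2 * d8^2 = 16 * δ ^ (23/100 : ℝ) := by
      rw [mul_pow, hM2v, hd82, mul_assoc, ← Real.rpow_add hδ]
      norm_num
    have h3 : δ ^ (23/100 : ℝ) ≤ δ ^ (1/100 : ℝ) :=
      Real.rpow_le_rpow_of_exponent_ge hδ hδ1 (by norm_num)
    calc K ≤ (4*M)^2 * d8^2 := h1
      _ = 16 * δ ^ (23/100 : ℝ) := h2
      _ ≤ 16 * δ ^ (1/100 : ℝ) := by linarith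
  -- X ≥ 0
  have hXnn : 0 ≤ X := by
    apply intervalIntegral.integral_nonneg hMM
    intro x _
    positivity
  -- combine
  have hYineq : Y ≤ (F M - F (-M)) + ((1/2) * Y + (K/2) * X) := by
    have hneg : (∫ ξ in (-M)..M, -P ξ) = -(∫ ξ in (-M)..M, P ξ) :=
      intervalIntegral.integral_neg
    rw [hneg] at hintP
    linarith
  have hexp : (0:ℝ) < Real.exp (-(1/8) * δ ^ (-(1/50) : ℝ)) := Real.exp_pos _
  calc Y ≤ 2 * (F M - F (-M)) + K * X := by linarith
    _ ≤ 2 * (2 * Real.exp (-(1/8) * δ ^ (-(1/50) : ℝ))) + (16 * δ ^ (1/100:ℝ)) * X := by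
        gcongr
    _ ≤ 16 * δ ^ (1/100 : ℝ) * X + 16 * Real.exp (-(1/8) * δ ^ (-(1/50) : ℝ)) := by
        linarith
end

section
/- There exists a universal constant C such that for every real ν ≥ 1, every L ≥ 8000, and every t ∈ [−1000, −1]: ∫_{−L/4}^{t} exp( −L²/(200·(t−s)) )·(−s)^{−(ν+2)/2} ds ≤ C·[ e^{−L/100}·(1 + ν^{−1/2})^{−ν/2} + exp( −L²·√ν/(200·(−t)) ) ]·(−t)^{−ν/2}. -/
set_option maxHeartbeats 1000000

open MeasureTheory Set intervalIntegral

private lemma measurable_rpow_const' (r : ℝ) : Measurable (fun x : ℝ => x ^ r) :=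
  measurable_of_measurable_on_compl_singleton 0 <| Continuous.measurable <|
    continuousOn_iff_continuous_restrict.1 fun x hx =>
      (Real.continuousAt_rpow_const x r (Or.inl hx)).continuousWithinAt

/-- The key integral estimate from the proof of Proposition 6.1: a bound for
the Duhamel-type integral arising from the one-dimensional heat kernel on a
rectangle of spatial size `L` applied to data decaying like `(−s)^{−(ν+2)/2}`. -/
theorem stmt_14 :
    ∃ C : ℝ, ∀ ν : ℝ, 1 ≤ ν → ∀ L : ℝ, 8000 ≤ L → ∀ t ∈ Set.Icc (-1000 : ℝ) (-1),
      (∫ s in (-L/4)..t, Real.exp (-L^2 / (200 * (t - s))) * (-s) ^ (-((ν + 2)/2)))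
        ≤ C * (Real.exp (-L/100) * (1 + ν ^ (-(1/2) : ℝ)) ^ (-(ν/2))
            + Real.exp (-L^2 * Real.sqrt ν / (200 * (-t)))) * (-t) ^ (-(ν/2)) := by
  use 1000
  intro ν hν L hL t ht
  obtain ⟨ht2, ht1⟩ := ht
  have hν0 : (0:ℝ) < ν := by linarith
  set ε : ℝ := ν ^ (-(1/2) : ℝ) with hεdef
  have hε0 : 0 < ε := Real.rpow_pos_of_pos hν0 _
  have hε1 : ε ≤ 1 := Real.rpow_le_one_of_one_le_of_nonpos hν (by norm_num)
  have hsν : 0 < Real.sqrt ν := Real.sqrt_pos.2 hν0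
  have hεs : Real.sqrt ν * ε = 1 := by
    rw [hεdef, Real.sqrt_eq_rpow, ← Real.rpow_add hν0]
    norm_num
  set r : ℝ := -((ν + 2)/2) with hrdef
  set p : ℝ := -(ν/2) with hpdef
  have hrp : r + 1 = p := by rw [hrdef, hpdef]; ring
  have hr1 : r ≤ -1 := by rw [hrdef]; linarith
  have hrplep : r ≤ p := by rw [hrdef, hpdef]; linarith
  have hp0 : p < 0 := by rw [hpdef]; linarith
  have hp1 : p ≤ -(1/2) := by rw [hpdef]; linarith
  set m : ℝ := t * (1 + ε) with hmdef
  have htneg : t < 0 := by linarith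
  have htε : t * ε < 0 := mul_neg_of_neg_of_pos htneg hε0
  have hmt : m < t := by nlinarith
  have hprod : (-t) * ε ≤ 1000 * 1 :=
    mul_le_mul (by linarith) hε1 hε0.le (by norm_num)
  have hm2 : -2000 ≤ m := by nlinarith
  have ham : -L/4 ≤ m := by linarith
  have htm : t - m = (-t) * ε := by rw [hmdef]; ring
  have hmone : (1:ℝ) * 1 ≤ (-t) * (1 + ε) :=
    mul_le_mul (by linarith) (by linarith) (by norm_num) (by linarith)
  have hmpos : 1 ≤ -m := by nlinarith
  have hmL : -m ≤ L/4 := by linarith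
  set f : ℝ → ℝ := fun s => Real.exp (-L^2 / (200 * (t - s))) * (-s) ^ r with hfdef
  set E : ℝ := Real.exp (-L^2 * Real.sqrt ν / (200 * (-t))) with hEdef
  -- measurability
  have hmeasf : Measurable f := by
    apply Measurable.mul
    · exact (measurable_const.div ((measurable_const.sub measurable_id).const_mul 200)).exp
    · exact (measurable_rpow_const' r).comp measurable_neg
  -- integrability on [m, t] via boundedness
  have II2 : IntervalIntegrable f volume m t := by
    rw [intervalIntegrable_iff_integrableOn_Ioc_of_le hmt.le]
    apply Measure.integrableOn_of_bounded (M := 1) measure_Ioc_lt_top.ne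
      hmeasf.aestronglyMeasurable
    filter_upwards [ae_restrict_mem measurableSet_Ioc] with s hs
    have hst : s ≤ t := hs.2
    have h1 : (1:ℝ) ≤ -s := by linarith
    have hexp1 : -L^2 / (200 * (t - s)) ≤ 0 :=
      div_nonpos_iff.2 (Or.inr ⟨by nlinarith [sq_nonneg L], by linarith⟩)
    have hexp1' : Real.exp (-L^2 / (200 * (t - s))) ≤ 1 := by
      rw [← Real.exp_zero]; exact Real.exp_le_exp.2 hexp1
    have hrp1 : (-s) ^ r ≤ 1 := Real.rpow_le_one_of_one_le_of_nonpos h1 (by linarith)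
    have hnn : 0 ≤ f s := mul_nonneg (Real.exp_pos _).le (Real.rpow_nonneg (by linarith) _)
    rw [Real.norm_eq_abs, abs_of_nonneg hnn]
    calc f s ≤ 1 * 1 := mul_le_mul hexp1' hrp1 (Real.rpow_nonneg (by linarith) _) (by norm_num)
    _ = 1 := by norm_num
  -- integrability on [-L/4, m] via continuity
  have hgcont : ContinuousOn (fun s : ℝ => (-s) ^ r) (Icc (-L/4) m) := by
    apply ContinuousOn.rpow_const continuous_neg.continuousOn
    intro s hs
    left
    have : s ≤ m := hs.2
    intro h; nlinarith [hmpos]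
  have IIg : IntervalIntegrable (fun s : ℝ => (-s) ^ r) volume (-L/4) m := by
    apply ContinuousOn.intervalIntegrable
    rwa [uIcc_of_le ham]
  have II1 : IntervalIntegrable f volume (-L/4) m := by
    apply ContinuousOn.intervalIntegrable
    rw [uIcc_of_le ham]
    apply ContinuousOn.mul _ hgcont
    apply ContinuousOn.rexp
    apply ContinuousOn.div continuousOn_const
    · exact (continuous_const.mul (continuous_const.sub continuous_id)).continuousOn
    · intro s hs
      have : s ≤ m := hs.2
      have : 0 < t - s := by linarith [hmt]
      positivity
  -- Part A : the integral over [m, t]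
  have hA : (∫ s in m..t, f s) ≤ 1000 * (E * (-t) ^ p) := by
    rw [integral_of_le hmt.le, integral_Ioc_eq_integral_Ioo]
    have hbound : ∀ s ∈ Ioo m t, ‖f s‖ ≤ E * (-t) ^ r := by
      intro s hs
      have hs1 : 0 < t - s := by linarith [hs.2]
      have hs2 : t - s ≤ (-t) * ε := by rw [← htm]; linarith [hs.1]
      have key : Real.sqrt ν * (t - s) ≤ -t := by
        have h4 := mul_le_mul_of_nonneg_left hs2 hsν.le
        have h3 : (-t) * (Real.sqrt ν * ε) = -t := by rw [hεs]; ring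
        nlinarith
      have hexp : -L^2 / (200 * (t - s)) ≤ -L^2 * Real.sqrt ν / (200 * (-t)) := by
        rw [div_le_div_iff₀ (by linarith : (0:ℝ) < 200 * (t - s)) (by linarith : (0:ℝ) < 200 * (-t))]
        nlinarith [mul_nonneg (sq_nonneg L) (sub_nonneg.2 key)]
      have hrpow : (-s) ^ r ≤ (-t) ^ r :=
        Real.rpow_le_rpow_of_nonpos (by linarith) (by linarith [hs.2]) (by linarith)
      have hnn : 0 ≤ f s := mul_nonneg (Real.exp_pos _).le
        (Real.rpow_nonneg (by linarith [hs.2]) _)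
      rw [Real.norm_eq_abs, abs_of_nonneg hnn]
      exact mul_le_mul (Real.exp_le_exp.2 hexp) hrpow
        (Real.rpow_nonneg (by linarith [hs.2]) _) (Real.exp_pos _).le
    calc (∫ s in Ioo m t, f s) ≤ |∫ s in Ioo m t, f s| := le_abs_self _
      _ = ‖∫ s in Ioo m t, f s‖ := (Real.norm_eq_abs _).symm
      _ ≤ (E * (-t) ^ r) * (volume (Ioo m t)).toReal :=
          norm_setIntegral_le_of_norm_le_const measure_Ioo_lt_top hbound
      _ ≤ 1000 * (E * (-t) ^ p) := by
          rw [Real.volume_Ioo, ENNReal.toReal_ofReal (by linarith)]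
          have h5 : (-t) ^ r ≤ (-t) ^ p :=
            Real.rpow_le_rpow_of_exponent_le (by linarith) hrplep
          have h6 : t - m ≤ 1000 := by rw [htm]; linarith
          have h7 : 0 ≤ t - m := by linarith
          have hE0 : 0 ≤ E := (Real.exp_pos _).le
          have hr0 : 0 ≤ (-t) ^ r := Real.rpow_nonneg (by linarith) _
          nlinarith [mul_le_mul (mul_le_mul_of_nonneg_left h5 hE0) h6 h7
            (mul_nonneg hE0 (Real.rpow_nonneg (by linarith) _))]
  -- Part B : the integral over [-L/4, m]
  have hB : (∫ s in (-L/4)..m, f s)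
      ≤ Real.exp (-L/100) * (2 * ((-t) ^ p * (1 + ε) ^ p)) := by
    have hmono : (∫ s in (-L/4)..m, f s)
        ≤ ∫ s in (-L/4)..m, Real.exp (-L/100) * (-s) ^ r := by
      apply integral_mono_on ham II1 (IIg.const_mul _)
      intro s hs
      have h7 : 0 < t - s := by linarith [hs.2, hmt]
      have h8 : t - s ≤ L/4 := by linarith [hs.1]
      have hexp2 : -L^2 / (200 * (t - s)) ≤ -L/100 := by
        rw [div_le_div_iff₀ (by positivity) (by norm_num : (0:ℝ) < 100)]
        nlinarith [mul_nonneg (by linarith : (0:ℝ) ≤ L)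
          (by linarith : (0:ℝ) ≤ L - 2*(t-s))]
      exact mul_le_mul_of_nonneg_right (Real.exp_le_exp.2 hexp2)
        (Real.rpow_nonneg (by linarith) _)
    have hval : (∫ s in (-L/4)..m, (-s) ^ r) = ((L/4) ^ p - (-m) ^ p) / p := by
      have hcn := integral_comp_neg (a := -L/4) (b := m) (fun u : ℝ => u ^ r)
      rw [show -(-L/4) = L/4 by ring] at hcn
      rw [hcn, integral_rpow, hrp]
      right
      constructor
      · intro h; rw [hrdef] at h; linarith [hν]
      · exact notMem_uIcc_of_lt (by linarith) (by linarith)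
    have hfinal : ((L/4) ^ p - (-m) ^ p) / p ≤ 2 * ((-t) ^ p * (1 + ε) ^ p) := by
      have hmm : (-m) = (-t) * (1 + ε) := by rw [hmdef]; ring
      have h9 : (-m) ^ p = (-t) ^ p * (1 + ε) ^ p := by
        rw [hmm, Real.mul_rpow (by linarith) (by linarith)]
      have h10 : (0:ℝ) ≤ (L/4) ^ p := Real.rpow_nonneg (by linarith) _
      have h11 : (0:ℝ) ≤ (-m) ^ p := Real.rpow_nonneg (by linarith) _
      rw [div_le_iff_of_neg hp0, ← h9]
      nlinarith [mul_nonneg h11 (show (0:ℝ) ≤ -(2*p+1) by rw [hpdef]; linarith)]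
    calc (∫ s in (-L/4)..m, f s) ≤ ∫ s in (-L/4)..m, Real.exp (-L/100) * (-s) ^ r := hmono
      _ = Real.exp (-L/100) * ∫ s in (-L/4)..m, (-s) ^ r := integral_const_mul _ _
      _ ≤ Real.exp (-L/100) * (2 * ((-t) ^ p * (1 + ε) ^ p)) := by
          rw [hval]
          exact mul_le_mul_of_nonneg_left hfinal (Real.exp_pos _).le
  -- combine
  have hsplit : (∫ s in (-L/4)..t, f s)
      = (∫ s in (-L/4)..m, f s) + ∫ s in m..t, f s :=
    (integral_add_adjacent_intervals II1 II2).symm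
  show (∫ s in (-L/4)..t, f s)
      ≤ 1000 * (Real.exp (-L/100) * (1 + ε) ^ p + E) * (-t) ^ p
  rw [hsplit]
  have hM : (0:ℝ) ≤ Real.exp (-L/100) * ((1 + ε) ^ p * (-t) ^ p) :=
    mul_nonneg (Real.exp_pos _).le (mul_nonneg (Real.rpow_nonneg (by linarith) _)
      (Real.rpow_nonneg (by linarith) _))
  nlinarith [hA, hB, hM]
end
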